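/- arXiv:2205.00982 — 12 statements merged into one kernel-verified Lean document; each statement's English description precedes it below -/
import Mathlib

section
/- In the power monoid P_fin(ℕ) of all finite nonempty subsets of ℕ under sumset addition, the singleton {1} is a cancellative prime element: (i) for all A, B ∈ P_fin(ℕ), if {1} divides A + B in P_fin(ℕ), then {1} divides A or {1} divides B; and (ii) for all A, B ∈ P_fin(ℕ), {1} + A = {1} + B implies A = B. -/
open Pointwise

/-- Divisibility in the power monoid `P_fin(ℕ)` of finite nonempty subsets of `ℕ`
under sumset addition: `B` divides `A` if `A = B + C` for some nonempty finite `C`. -/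
def DvdPF (B A : Finset ℕ) : Prop := ∃ C : Finset ℕ, C.Nonempty ∧ A = B + C

/-- In `P_fin(ℕ)`, the singleton `{1}` is a cancellative prime element. -/
theorem singleton_one_cancellative_prime :
    (∀ A B : Finset ℕ, A.Nonempty → B.Nonempty →
        DvdPF {1} (A + B) → DvdPF {1} A ∨ DvdPF {1} B) ∧
    (∀ A B : Finset ℕ, A.Nonempty → B.Nonempty →
        ({1} : Finset ℕ) + A = {1} + B → A = B) := by
  have key : ∀ A : Finset ℕ, A.Nonempty → (DvdPF {1} A ↔ 0 ∉ A) := by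
    intro A hA
    constructor
    · rintro ⟨C, hC, rfl⟩ h0
      rw [Finset.mem_add] at h0
      obtain ⟨a, ha, c, hc, hac⟩ := h0
      simp only [Finset.mem_singleton] at ha
      omega
    · intro h0
      refine ⟨A.image (· - 1), hA.image _, ?_⟩
      ext x
      simp only [Finset.mem_add, Finset.mem_image, Finset.mem_singleton]
      constructor
      · intro hx
        have : x ≠ 0 := fun h => h0 (h ▸ hx)
        exact ⟨1, rfl, x - 1, ⟨x, hx, rfl⟩, by omega⟩
      · rintro ⟨y, rfl, z, ⟨a, ha, rfl⟩, rfl⟩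
        have : a ≠ 0 := fun h => h0 (h ▸ ha)
        have : 1 + (a - 1) = a := by omega
        rwa [this]
  constructor
  · intro A B hA hB hdvd
    rw [key _ (hA.add hB)] at hdvd
    rw [key _ hA, key _ hB]
    by_contra h
    push_neg at h
    exact hdvd (Finset.add_mem_add h.1 h.2)
  · intro A B _ _ h
    ext x
    constructor
    · intro hx
      have : 1 + x ∈ ({1} : Finset ℕ) + B := h ▸ Finset.add_mem_add (Finset.mem_singleton_self 1) hx
      rw [Finset.mem_add] at this
      obtain ⟨a, ha, b, hb, hab⟩ := this
      simp only [Finset.mem_singleton] at ha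
      have : x = b := by omega
      exact this ▸ hb
    · intro hx
      have : 1 + x ∈ ({1} : Finset ℕ) + A := h ▸ Finset.add_mem_add (Finset.mem_singleton_self 1) hx
      rw [Finset.mem_add] at this
      obtain ⟨a, ha, b, hb, hab⟩ := this
      simp only [Finset.mem_singleton] at ha
      have : x = b := by omega
      exact this ▸ hb
end

section
/- In the power monoid P_fin(ℕ) of all finite nonempty subsets of ℕ under sumset addition, the only prime element is {1}: if P ∈ P_fin(ℕ), P ≠ {0}, and for all A, B ∈ P_fin(ℕ) the relation P divides A + B implies that P divides A or P divides B, then P = {1}. -/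
open Pointwise

lemma aux_range_add_range (a b : ℕ) :
    Finset.range (a + 1) + Finset.range (b + 1) = Finset.range (a + b + 1) := by
  ext x
  simp only [Finset.mem_add, Finset.mem_range]
  constructor
  · rintro ⟨p, hp, c, hc, rfl⟩; omega
  · intro h; exact ⟨min x a, by omega, x - min x a, by omega, by omega⟩

lemma aux_key (P : Finset ℕ) (M K : ℕ) (h0 : 0 ∈ P) (hMem : M ∈ P)
    (hle : ∀ p ∈ P, p ≤ M) (hK : M ≤ K + 1) :
    P + Finset.range (K + 1) = Finset.range (M + K + 1) := by
  ext x
  simp only [Finset.mem_add, Finset.mem_range]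
  constructor
  · rintro ⟨p, hp, c, hc, rfl⟩; have := hle p hp; omega
  · intro h
    by_cases hxK : x ≤ K
    · exact ⟨0, h0, x, by omega, by omega⟩
    · exact ⟨M, hMem, x - M, by omega, by omega⟩

/-- In `P_fin(ℕ)`, the only prime element is `{1}`. -/
theorem only_prime_is_singleton_one (P : Finset ℕ) (hP : P.Nonempty) (hP0 : P ≠ {0})
    (hprime : ∀ A B : Finset ℕ, A.Nonempty → B.Nonempty →
        DvdPF P (A + B) → DvdPF P A ∨ DvdPF P B) :
    P = {1} := by
  by_cases h0 : 0 ∈ P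
  · exfalso
    set M := P.max' hP with hM
    have hMem : M ∈ P := P.max'_mem hP
    have hle : ∀ p ∈ P, p ≤ M := fun p hp => P.le_max' p hp
    have hM1 : 1 ≤ M := by
      by_contra h
      apply hP0
      ext x
      simp only [Finset.mem_singleton]
      constructor
      · intro hx; have := hle x hx; omega
      · rintro rfl; exact h0
    by_cases hM2 : 2 ≤ M
    · -- use A = range M three times
      set A := Finset.range M with hA
      have hAne : A.Nonempty := by
        rw [hA]; exact Finset.nonempty_range_iff.mpr (by omega)
      have hAA : A + A = Finset.range (2 * M - 1) := by
        have e1 : M = (M - 1) + 1 := by omega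
        rw [hA, e1, aux_range_add_range]
        congr 1; omega
      have hAAA : A + A + A = Finset.range (3 * M - 2) := by
        have e1 : M = (M - 1) + 1 := by omega
        have e2 : 2 * M - 1 = (2 * M - 2) + 1 := by omega
        rw [hAA, e2, hA, e1, aux_range_add_range]
        congr 1; omega
      have hdvd : DvdPF P (A + A + A) := by
        refine ⟨Finset.range (2 * M - 2), Finset.nonempty_range_iff.mpr (by omega), ?_⟩
        have e2 : 2 * M - 2 = (2 * M - 3) + 1 := by omega
        rw [hAAA, e2, aux_key P M (2 * M - 3) h0 hMem hle (by omega)]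
        congr 1; omega
      have hnotA : ¬ DvdPF P A := by
        rintro ⟨C, ⟨c, hc⟩, hEq⟩
        have : M + c ∈ A := hEq ▸ Finset.add_mem_add hMem hc
        rw [hA, Finset.mem_range] at this
        omega
      rcases hprime (A + A) A (hAne.add hAne) hAne hdvd with h | h
      · rcases hprime A A hAne hAne h with h | h <;> exact hnotA h
      · exact hnotA h
    · -- M = 1, P = {0, 1}
      have hPeq : P = {0, 1} := by
        ext x
        simp only [Finset.mem_insert, Finset.mem_singleton]
        constructor
        · intro hx; have := hle x hx; omega
        · rintro (rfl | rfl)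
          · exact h0
          · have : M = 1 := by omega
            exact this ▸ hMem
      have hsum : ({0, 2, 3} : Finset ℕ) + {2, 3, 5} = P + {2, 3, 4, 5, 6, 7} := by
        rw [hPeq]; decide
      have hdvd : DvdPF P (({0, 2, 3} : Finset ℕ) + {2, 3, 5}) :=
        ⟨{2, 3, 4, 5, 6, 7}, ⟨2, by decide⟩, hsum⟩
      rcases hprime {0, 2, 3} {2, 3, 5} (by decide) (by decide) hdvd with h | h
      · obtain ⟨C, hC, hEq⟩ := h
        rw [hPeq] at hEq
        have h0m : (0 : ℕ) ∈ ({0, 1} : Finset ℕ) + C := by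
          rw [← hEq]; decide
        rw [Finset.mem_add] at h0m
        obtain ⟨p, hp, c, hc, hpc⟩ := h0m
        have hc0 : c = 0 := by omega
        subst hc0
        have : (1 : ℕ) ∈ ({0, 1} : Finset ℕ) + C :=
          Finset.add_mem_add (by decide) hc
        rw [← hEq] at this
        simp at this
      · obtain ⟨C, hC, hEq⟩ := h
        rw [hPeq] at hEq
        have h5m : (5 : ℕ) ∈ ({0, 1} : Finset ℕ) + C := by
          rw [← hEq]; decide
        rw [Finset.mem_add] at h5m
        obtain ⟨p, hp, c, hc, hpc⟩ := h5m
        simp only [Finset.mem_insert, Finset.mem_singleton] at hp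
        rcases hp with rfl | rfl
        · have : (1 : ℕ) + c ∈ ({0, 1} : Finset ℕ) + C :=
            Finset.add_mem_add (by decide) hc
          rw [← hEq] at this
          have hc5 : c = 5 := by omega
          subst hc5
          simp at this
        · have : (0 : ℕ) + c ∈ ({0, 1} : Finset ℕ) + C :=
            Finset.add_mem_add (by decide) hc
          rw [← hEq] at this
          have hc4 : c = 4 := by omega
          subst hc4
          simp at this
  · -- 0 ∉ P
    have h1 : ∀ p ∈ P, 1 ≤ p := by
      intro p hp
      rcases Nat.eq_zero_or_pos p with rfl | h
      · exact absurd hp h0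
      · exact h
    set B := P.image (· - 1) with hB
    have hBne : B.Nonempty := hP.image _
    have hAB : ({1} : Finset ℕ) + B = P := by
      ext x
      simp only [Finset.mem_add, Finset.mem_singleton, hB, Finset.mem_image]
      constructor
      · rintro ⟨a, rfl, c, ⟨p, hp, rfl⟩, rfl⟩
        have := h1 p hp
        have : 1 + (p - 1) = p := by omega
        rw [this]; exact hp
      · intro hx
        exact ⟨1, rfl, x - 1, ⟨x, hx, rfl⟩, by have := h1 x hx; omega⟩
    have hdvd : DvdPF P (({1} : Finset ℕ) + B) := by
      refine ⟨{0}, ⟨0, by decide⟩, ?_⟩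
      rw [hAB, Finset.add_singleton]
      simp
    rcases hprime {1} B (by decide) hBne hdvd with h | h
    · obtain ⟨C, ⟨c, hc⟩, hEq⟩ := h
      obtain ⟨p, hp⟩ := hP
      have hmem : p + c ∈ ({1} : Finset ℕ) := hEq ▸ Finset.add_mem_add hp hc
      simp only [Finset.mem_singleton] at hmem
      have hp1 : p = 1 := by have := h1 p hp; omega
      subst hp1
      apply Finset.Subset.antisymm
      · intro q hq
        have : q + c ∈ ({1} : Finset ℕ) := hEq ▸ Finset.add_mem_add hq hc
        simp only [Finset.mem_singleton] at this
        simp only [Finset.mem_singleton]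
        omega
      · intro q hq
        simp only [Finset.mem_singleton] at hq
        subst hq; exact hp
    · exfalso
      obtain ⟨C, ⟨c, hc⟩, hEq⟩ := h
      have hmax : P.max' hP + c ∈ B := hEq ▸ Finset.add_mem_add (P.max'_mem hP) hc
      rw [hB, Finset.mem_image] at hmax
      obtain ⟨p, hp, hpe⟩ := hmax
      have h1p := h1 p hp
      have h1m := h1 _ (P.max'_mem hP)
      have := P.le_max' p hp
      omega
end

section
/- The restricted power monoid P_fin,0(ℕ) is directly indecomposable: if H₁ and H₂ are submonoids of P_fin,0(ℕ) such that the addition map H₁ × H₂ → P_fin,0(ℕ), (B, C) ↦ B + C, is bijective, then H₁ = {{0}} or H₂ = {{0}}. -/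
open Pointwise

/-- The restricted power monoid `P_fin,0(ℕ)`: finite subsets of `ℕ` containing `0`
(such a set is automatically nonempty). -/
def PF0 : Set (Finset ℕ) := {A | 0 ∈ A}

/-- A submonoid of `P_fin,0(ℕ)`: a subset of `P_fin,0(ℕ)` containing the identity `{0}`
and closed under sumset addition. -/
def IsSubmonoid0 (H : Set (Finset ℕ)) : Prop :=
  H ⊆ PF0 ∧ ({0} : Finset ℕ) ∈ H ∧ ∀ A ∈ H, ∀ B ∈ H, A + B ∈ H

lemma add_singleton_zero (A : Finset ℕ) : A + {0} = A := by
  ext x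
  simp [Finset.mem_add]

lemma eq_zero_singleton {B : Finset ℕ} (h0 : 0 ∈ B) (h : ∀ b ∈ B, b = 0) :
    B = {0} := by
  ext x
  simp only [Finset.mem_singleton]
  exact ⟨fun hx => h x hx, fun hx => hx ▸ h0⟩

lemma atom_decomp {B C : Finset ℕ} (hB : 0 ∈ B) (hC : 0 ∈ C)
    (h : B + C = ({0, 1} : Finset ℕ)) : B = {0} ∨ C = {0} := by
  by_contra hcon
  push_neg at hcon
  obtain ⟨hB', hC'⟩ := hcon
  have hb : ∃ b ∈ B, b ≠ 0 := by
    by_contra hb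
    push_neg at hb
    exact hB' (eq_zero_singleton hB hb)
  have hc : ∃ c ∈ C, c ≠ 0 := by
    by_contra hc
    push_neg at hc
    exact hC' (eq_zero_singleton hC hc)
  obtain ⟨b, hbB, hb0⟩ := hb
  obtain ⟨c, hcC, hc0⟩ := hc
  have : b + c ∈ B + C := Finset.add_mem_add hbB hcC
  rw [h] at this
  simp only [Finset.mem_insert, Finset.mem_singleton] at this
  omega

lemma range_add_pair (n : ℕ) :
    Finset.range (n + 1) + ({0, 1} : Finset ℕ) = Finset.range (n + 2) := by
  ext x
  simp only [Finset.mem_add, Finset.mem_range, Finset.mem_insert, Finset.mem_singleton]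
  constructor
  · rintro ⟨a, ha, b, hb, rfl⟩
    omega
  · intro hx
    rcases Nat.lt_or_ge x (n + 1) with h | h
    · exact ⟨x, h, 0, Or.inl rfl, by omega⟩
    · exact ⟨x - 1, by omega, 1, Or.inr rfl, by omega⟩

lemma range_mem {H : Set (Finset ℕ)} (hH : IsSubmonoid0 H)
    (h01 : ({0, 1} : Finset ℕ) ∈ H) : ∀ n, Finset.range (n + 1) ∈ H := by
  intro n
  induction n with
  | zero => simpa using hH.2.1
  | succ k ih =>
    have := hH.2.2 _ ih _ h01
    rwa [range_add_pair] at this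

lemma range_add_set {C : Finset ℕ} {m : ℕ} (hC0 : 0 ∈ C) (hCm : m ∈ C)
    (hmax : ∀ c ∈ C, c ≤ m) :
    Finset.range (m + 1) + C = Finset.range (2 * m + 1) := by
  ext x
  simp only [Finset.mem_add, Finset.mem_range]
  constructor
  · rintro ⟨a, ha, c, hc, rfl⟩
    have := hmax c hc
    omega
  · intro hx
    rcases Nat.lt_or_ge x (m + 1) with h | h
    · exact ⟨x, h, 0, hC0, by omega⟩
    · exact ⟨x - m, by omega, m, hCm, by omega⟩

lemma key {H₁ H₂ : Set (Finset ℕ)}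
    (h₁ : IsSubmonoid0 H₁) (h₂ : IsSubmonoid0 H₂)
    (hinj : ∀ B ∈ H₁, ∀ C ∈ H₂, ∀ B' ∈ H₁, ∀ C' ∈ H₂,
        B + C = B' + C' → B = B' ∧ C = C')
    (h01 : ({0, 1} : Finset ℕ) ∈ H₁) : H₂ = {({0} : Finset ℕ)} := by
  ext C
  simp only [Set.mem_singleton_iff]
  constructor
  · intro hC
    have hC0 : 0 ∈ C := h₂.1 hC
    have hne : C.Nonempty := ⟨0, hC0⟩
    set m := C.max' hne with hm
    have hCm : m ∈ C := C.max'_mem hne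
    have hmax : ∀ c ∈ C, c ≤ m := fun c hc => C.le_max' c hc
    have heq : Finset.range (m + 1) + C = Finset.range (2 * m + 1) + {0} := by
      rw [add_singleton_zero, range_add_set hC0 hCm hmax]
    have h2m : Finset.range (2 * m + 1) ∈ H₁ := range_mem h₁ h01 (2 * m)
    have hm1 : Finset.range (m + 1) ∈ H₁ := range_mem h₁ h01 m
    exact (hinj _ hm1 _ hC _ h2m _ h₂.2.1 heq).2
  · rintro rfl
    exact h₂.2.1

/-- `P_fin,0(ℕ)` is directly indecomposable. -/
theorem PF0_directly_indecomposable (H₁ H₂ : Set (Finset ℕ))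
    (h₁ : IsSubmonoid0 H₁) (h₂ : IsSubmonoid0 H₂)
    (hsurj : ∀ A ∈ PF0, ∃ B ∈ H₁, ∃ C ∈ H₂, A = B + C)
    (hinj : ∀ B ∈ H₁, ∀ C ∈ H₂, ∀ B' ∈ H₁, ∀ C' ∈ H₂,
        B + C = B' + C' → B = B' ∧ C = C') :
    H₁ = {({0} : Finset ℕ)} ∨ H₂ = {({0} : Finset ℕ)} := by
  have h01pf : ({0, 1} : Finset ℕ) ∈ PF0 := by
    simp [PF0]
  obtain ⟨B, hB, C, hC, hBC⟩ := hsurj _ h01pf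
  have hB0 : 0 ∈ B := h₁.1 hB
  have hC0 : 0 ∈ C := h₂.1 hC
  rcases atom_decomp hB0 hC0 hBC.symm with h | h
  · -- B = {0}, so {0,1} = C ∈ H₂
    left
    subst h
    rw [add_comm, add_singleton_zero] at hBC
    have h01 : ({0, 1} : Finset ℕ) ∈ H₂ := hBC ▸ hC
    have hinj' : ∀ B ∈ H₂, ∀ C ∈ H₁, ∀ B' ∈ H₂, ∀ C' ∈ H₁,
        B + C = B' + C' → B = B' ∧ C = C' := by
      intro B hB C hC B' hB' C' hC' h
      have := hinj C hC B hB C' hC' B' hB'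
        (by rw [add_comm C B, add_comm C' B']; exact h)
      exact ⟨this.2, this.1⟩
    exact key h₂ h₁ hinj' h01
  · right
    subst h
    rw [add_singleton_zero] at hBC
    have h01 : ({0, 1} : Finset ℕ) ∈ H₁ := hBC ▸ hB
    exact key h₁ h₂ hinj h01
end

section
/- Let S be a numerical monoid with S ≠ ℕ. Then the power monoid P_fin(S) has no prime elements: for every P ∈ P_fin(S) with P ≠ {0}, there exist A, B ∈ P_fin(S) such that P divides A + B in P_fin(S) but P divides neither A nor B. -/
open Pointwise

/-- The power monoid `P_fin(S)`: finite nonempty subsets of `S`. -/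
def Pfin (S : AddSubmonoid ℕ) : Set (Finset ℕ) :=
  {A | A.Nonempty ∧ (A : Set ℕ) ⊆ (S : Set ℕ)}

/-- Divisibility in `P_fin(S)`: `B` divides `A` if `A = B + C` for some `C ∈ P_fin(S)`. -/
def DvdP (S : AddSubmonoid ℕ) (B A : Finset ℕ) : Prop := ∃ C ∈ Pfin S, A = B + C

open Finset

private lemma npe_min'_add {A B : Finset ℕ} (hA : A.Nonempty) (hB : B.Nonempty) :
    (A + B).min' (hA.add hB) = A.min' hA + B.min' hB := by
  apply le_antisymm
  · exact min'_le _ _ (add_mem_add (min'_mem _ hA) (min'_mem _ hB))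
  · apply le_min'
    intro y hy
    rcases mem_add.1 hy with ⟨a, ha, b, hb, rfl⟩
    exact add_le_add (min'_le _ _ ha) (min'_le _ _ hb)

private lemma npe_max'_add {A B : Finset ℕ} (hA : A.Nonempty) (hB : B.Nonempty) :
    (A + B).max' (hA.add hB) = A.max' hA + B.max' hB := by
  apply le_antisymm
  · apply max'_le
    intro y hy
    rcases mem_add.1 hy with ⟨a, ha, b, hb, rfl⟩
    exact add_le_add (le_max' _ _ ha) (le_max' _ _ hb)
  · exact le_max' _ _ (add_mem_add (max'_mem _ hA) (max'_mem _ hB))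

private lemma min_of_eq_add {A P C : Finset ℕ} (hP : P.Nonempty) (hC : C.Nonempty)
    (hA : A.Nonempty) (h : A = P + C) :
    A.min' hA = P.min' hP + C.min' hC := by
  subst h; exact npe_min'_add hP hC

private lemma max_of_eq_add {A P C : Finset ℕ} (hP : P.Nonempty) (hC : C.Nonempty)
    (hA : A.Nonempty) (h : A = P + C) :
    A.max' hA = P.max' hP + C.max' hC := by
  subst h; exact npe_max'_add hP hC

private lemma Icc_min'' {a b : ℕ} (h : a ≤ b) (hne : (Finset.Icc a b).Nonempty) :
    (Finset.Icc a b).min' hne = a :=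
  le_antisymm (min'_le _ _ (mem_Icc.2 ⟨le_rfl, h⟩)) (le_min' _ _ _ fun _ hy => (mem_Icc.1 hy).1)

private lemma Icc_add_Icc' (a b c d : ℕ) (hab : a ≤ b) (hcd : c ≤ d) :
    Finset.Icc a b + Finset.Icc c d = Finset.Icc (a + c) (b + d) := by
  ext x
  simp only [mem_add, mem_Icc]
  constructor
  · rintro ⟨p, hp, q, hq, rfl⟩; omega
  · intro hx
    rcases le_or_gt x (b + c) with h1 | h1
    · exact ⟨x - c, by omega, c, by omega, by omega⟩
    · exact ⟨b, by omega, x - b, by omega, by omega⟩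

private lemma add_Icc_eq (P : Finset ℕ) (hP : P.Nonempty) (c d : ℕ)
    (h : c + P.max' hP ≤ d + P.min' hP) :
    P + Finset.Icc c d = Finset.Icc (P.min' hP + c) (P.max' hP + d) := by
  have hud : P.min' hP ≤ P.max' hP := P.min'_le _ (P.max'_mem hP)
  ext x
  simp only [mem_add, mem_Icc]
  constructor
  · rintro ⟨p, hp, q, hq, rfl⟩
    have h1 := P.min'_le p hp
    have h2 := P.le_max' p hp
    omega
  · intro hx
    rcases le_or_gt x (P.min' hP + d) with h1 | h1
    · exact ⟨P.min' hP, P.min'_mem hP, x - P.min' hP, by omega, by omega⟩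
    · exact ⟨P.max' hP, P.max'_mem hP, x - P.max' hP, by omega, by omega⟩

private lemma sdiff_sum_eq (T v : ℕ) (hv : 2 ≤ v) :
    (Finset.Icc T (T + v + 2) \ {T + 2}) + (Finset.Icc T (T + v + 2) \ {T + 2})
      = Finset.Icc (2 * T) (2 * T + 2 * v + 4) := by
  ext x
  simp only [mem_add, mem_sdiff, mem_Icc, mem_singleton]
  constructor
  · rintro ⟨p, ⟨⟨h1, h2⟩, h3⟩, q, ⟨⟨h4, h5⟩, h6⟩, rfl⟩; omega
  · intro hx
    by_cases h2 : x = 2 * T + 2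
    · exact ⟨T + 1, by omega, T + 1, by omega, by omega⟩
    rcases le_or_gt x (2 * T + v + 2) with h1 | h1
    · exact ⟨T, by omega, x - T, by omega, by omega⟩
    by_cases h3 : x = 2 * T + v + 4
    · exact ⟨T + 3, by omega, T + v + 1, by omega, by omega⟩
    · exact ⟨x - (T + v + 2), by omega, T + v + 2, by omega, by omega⟩

/-- For a numerical monoid `S ≠ ℕ`, the power monoid `P_fin(S)` has no prime elements. -/
theorem no_primes_in_Pfin (S : AddSubmonoid ℕ) (hfin : ((S : Set ℕ)ᶜ).Finite)
    (hne : S ≠ ⊤) (P : Finset ℕ) (hP : P ∈ Pfin S) (hP0 : P ≠ {0}) :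
    ∃ A ∈ Pfin S, ∃ B ∈ Pfin S,
      DvdP S P (A + B) ∧ ¬ DvdP S P A ∧ ¬ DvdP S P B := by
  obtain ⟨hPne, hPS⟩ := hP
  have hmemPfin : ∀ X : Finset ℕ, X.Nonempty → (∀ x ∈ X, x ∈ S) → X ∈ Pfin S :=
    fun X h1 h2 => ⟨h1, fun x hx => h2 x (Finset.mem_coe.1 hx)⟩
  -- a maximal gap F
  have hex : ∃ n : ℕ, n ∉ S := by
    by_contra h
    push_neg at h
    exact hne (AddSubmonoid.ext fun n => ⟨fun _ => trivial, fun _ => h n⟩)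
  obtain ⟨n0, hn0⟩ := hex
  have hn0' : n0 ∈ hfin.toFinset := hfin.mem_toFinset.2 hn0
  have hFne : hfin.toFinset.Nonempty := ⟨n0, hn0'⟩
  set F := hfin.toFinset.max' hFne with hFdef
  have hF : F ∉ S := hfin.mem_toFinset.1 (hfin.toFinset.max'_mem hFne)
  have hFS : ∀ m : ℕ, F < m → m ∈ S := by
    intro m hm
    by_contra hmS
    exact absurd (hfin.toFinset.le_max' m (hfin.mem_toFinset.2 hmS)) (by omega)
  have hF1 : 1 ≤ F := by
    rcases Nat.eq_zero_or_pos F with h | h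
    · exact absurd (show F ∈ S by rw [h]; exact S.zero_mem) hF
    · exact h
  have huv : P.min' hPne ≤ P.max' hPne := P.min'_le _ (P.max'_mem hPne)
  rcases Nat.eq_zero_or_pos (P.min' hPne) with hu0 | hu1
  · -- `0 ∈ P`
    have h0P : (0 : ℕ) ∈ P := by
      have := P.min'_mem hPne
      rwa [hu0] at this
    by_cases hv0 : P.max' hPne = 0
    · -- then `P = {0}`, contradiction
      exfalso
      apply hP0
      apply Finset.Subset.antisymm
      · intro x hx
        have := P.le_max' x hx
        simp only [Finset.mem_singleton]
        omega
      · intro x hx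
        simp only [Finset.mem_singleton] at hx
        subst hx
        exact h0P
    by_cases hv1 : P.max' hPne = 1
    · -- `P = {0, 1}`
      have hP01 : P = {0, 1} := by
        apply Finset.Subset.antisymm
        · intro x hx
          have h1 := P.min'_le x hx
          have h2 := P.le_max' x hx
          simp only [Finset.mem_insert, Finset.mem_singleton]
          omega
        · intro x hx
          simp only [Finset.mem_insert, Finset.mem_singleton] at hx
          rcases hx with rfl | rfl
          · exact h0P
          · rw [← hv1]; exact P.max'_mem hPne
      have hQne : ({F + 1} + ({0, 1, 5, 9, 10} : Finset ℕ)).Nonempty :=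
        (Finset.singleton_nonempty _).add ⟨0, by simp⟩
      have hQS : ∀ x ∈ {F + 1} + ({0, 1, 5, 9, 10} : Finset ℕ), x ∈ S := by
        intro x hx
        rcases Finset.mem_add.1 hx with ⟨a, ha, b, hb, rfl⟩
        simp only [Finset.mem_singleton] at ha
        subst ha
        exact hFS _ (by omega)
      have hCne : ({2 * (F + 1)} + ({0, 1, 5, 9, 10, 14, 18, 19} : Finset ℕ)).Nonempty :=
        (Finset.singleton_nonempty _).add ⟨0, by simp⟩
      have hCS : ∀ x ∈ {2 * (F + 1)} + ({0, 1, 5, 9, 10, 14, 18, 19} : Finset ℕ), x ∈ S := by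
        intro x hx
        rcases Finset.mem_add.1 hx with ⟨a, ha, b, hb, rfl⟩
        simp only [Finset.mem_singleton] at ha
        subst ha
        exact hFS _ (by omega)
      have hsum : {F + 1} + ({0, 1, 5, 9, 10} : Finset ℕ)
          + ({F + 1} + ({0, 1, 5, 9, 10} : Finset ℕ))
          = P + ({2 * (F + 1)} + ({0, 1, 5, 9, 10, 14, 18, 19} : Finset ℕ)) := by
        rw [hP01, add_add_add_comm, Finset.singleton_add_singleton,
          show ({0, 1, 5, 9, 10} : Finset ℕ) + {0, 1, 5, 9, 10}
            = ({0, 1} : Finset ℕ) + {0, 1, 5, 9, 10, 14, 18, 19} from by decide,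
          show F + 1 + (F + 1) = 2 * (F + 1) from by ring, add_left_comm]
      have hnd : ¬ DvdP S P ({F + 1} + ({0, 1, 5, 9, 10} : Finset ℕ)) := by
        rintro ⟨C', ⟨hC'ne, hC'S⟩, hEq⟩
        have h5 : F + 1 + 5 ∈ {F + 1} + ({0, 1, 5, 9, 10} : Finset ℕ) :=
          Finset.add_mem_add (Finset.mem_singleton_self _) (by decide)
        rw [hEq] at h5
        rcases Finset.mem_add.1 h5 with ⟨p, hp, c, hc, hpc⟩
        have hmem : ∀ q ∈ P, q + c ∈ {F + 1} + ({0, 1, 5, 9, 10} : Finset ℕ) := by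
          intro q hq
          rw [hEq]; exact Finset.add_mem_add hq hc
        rw [hP01] at hp
        simp only [Finset.mem_insert, Finset.mem_singleton] at hp
        rcases hp with rfl | rfl
        · have h6 := hmem 1 (by rw [hP01]; simp)
          rcases Finset.mem_add.1 h6 with ⟨a, ha, b, hb, hab⟩
          simp only [Finset.mem_singleton] at ha
          simp only [Finset.mem_insert, Finset.mem_singleton] at hb
          omega
        · have h6 := hmem 0 h0P
          rcases Finset.mem_add.1 h6 with ⟨a, ha, b, hb, hab⟩
          simp only [Finset.mem_singleton] at ha
          simp only [Finset.mem_insert, Finset.mem_singleton] at hb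
          omega
      exact ⟨_, hmemPfin _ hQne hQS, _, hmemPfin _ hQne hQS,
        ⟨_, hmemPfin _ hCne hCS, hsum⟩, hnd, hnd⟩
    · -- `0 ∈ P`, `v = P.max' ≥ 2`
      have hv2 : 2 ≤ P.max' hPne := by omega
      set v := P.max' hPne with hvdef
      set T := F + 1 with hTdef
      have hAmem : ∀ x, x ∈ Finset.Icc T (T + v + 2) \ {T + 2} ↔
          (T ≤ x ∧ x ≤ T + v + 2) ∧ ¬ x = T + 2 := by
        intro x
        simp only [mem_sdiff, mem_Icc, mem_singleton]
      have hAne : (Finset.Icc T (T + v + 2) \ {T + 2}).Nonempty :=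
        ⟨T, (hAmem T).2 (by omega)⟩
      have hAS : ∀ x ∈ Finset.Icc T (T + v + 2) \ {T + 2}, x ∈ S := by
        intro x hx
        have := (hAmem x).1 hx
        exact hFS x (by omega)
      have hCne : (Finset.Icc (2 * T) (2 * T + v + 4)).Nonempty :=
        Finset.nonempty_Icc.2 (by omega)
      have hCS : ∀ x ∈ Finset.Icc (2 * T) (2 * T + v + 4), x ∈ S := by
        intro x hx
        have := (Finset.mem_Icc.1 hx).1
        exact hFS x (by omega)
      have hAmax : (Finset.Icc T (T + v + 2) \ {T + 2}).max' hAne = T + v + 2 := by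
        apply le_antisymm
        · apply max'_le
          intro y hy
          exact ((hAmem y).1 hy).1.2
        · exact le_max' _ _ ((hAmem _).2 (by omega))
      have hsum : (Finset.Icc T (T + v + 2) \ {T + 2}) + (Finset.Icc T (T + v + 2) \ {T + 2})
          = P + Finset.Icc (2 * T) (2 * T + v + 4) := by
        rw [sdiff_sum_eq T v hv2, add_Icc_eq P hPne (2 * T) (2 * T + v + 4) (by omega)]
        rw [hu0, ← hvdef]
        congr 1 <;> omega
      have hnd : ¬ DvdP S P (Finset.Icc T (T + v + 2) \ {T + 2}) := by
        rintro ⟨C', ⟨hC'ne, hC'S⟩, hEq⟩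
        have h1 := max_of_eq_add hPne hC'ne hAne hEq
        rw [hAmax, ← hvdef] at h1
        have h2 : C'.max' hC'ne = T + 2 := by omega
        have h3 : (0 : ℕ) + C'.max' hC'ne ∈ P + C' :=
          Finset.add_mem_add h0P (C'.max'_mem hC'ne)
        rw [← hEq] at h3
        have h4 := (hAmem _).1 h3
        omega
      exact ⟨_, hmemPfin _ hAne hAS, _, hmemPfin _ hAne hAS,
        ⟨_, hmemPfin _ hCne hCS, hsum⟩, hnd, hnd⟩
  · -- `min P ≥ 1`
    set u := P.min' hPne with hudef
    set v := P.max' hPne with hvdef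
    have hAne : (Finset.Icc (u + F) (v + F + 1)).Nonempty :=
      Finset.nonempty_Icc.2 (by omega)
    have hAS : ∀ x ∈ Finset.Icc (u + F) (v + F + 1), x ∈ S := by
      intro x hx
      have := (Finset.mem_Icc.1 hx).1
      exact hFS x (by omega)
    have hCne : (Finset.Icc (u + 2 * F) (v + 2 * F + 2)).Nonempty :=
      Finset.nonempty_Icc.2 (by omega)
    have hCS : ∀ x ∈ Finset.Icc (u + 2 * F) (v + 2 * F + 2), x ∈ S := by
      intro x hx
      have := (Finset.mem_Icc.1 hx).1
      exact hFS x (by omega)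
    have hsum : Finset.Icc (u + F) (v + F + 1) + Finset.Icc (u + F) (v + F + 1)
        = P + Finset.Icc (u + 2 * F) (v + 2 * F + 2) := by
      rw [Icc_add_Icc' _ _ _ _ (by omega) (by omega),
        add_Icc_eq P hPne (u + 2 * F) (v + 2 * F + 2) (by omega)]
      rw [← hudef, ← hvdef]
      congr 1 <;> omega
    have hnd : ¬ DvdP S P (Finset.Icc (u + F) (v + F + 1)) := by
      rintro ⟨C', ⟨hC'ne, hC'S⟩, hEq⟩
      have h1 := min_of_eq_add hPne hC'ne hAne hEq
      rw [Icc_min'' (by omega : u + F ≤ v + F + 1), ← hudef] at h1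
      have h2 : C'.min' hC'ne = F := by omega
      exact hF (hC'S (Finset.mem_coe.2 (h2 ▸ C'.min'_mem hC'ne)))
    exact ⟨_, hmemPfin _ hAne hAS, _, hmemPfin _ hAne hAS,
      ⟨_, hmemPfin _ hCne hCS, hsum⟩, hnd, hnd⟩
end

section
/- Let S be a numerical monoid with S ≠ ℕ. Then P_fin(S) is directly indecomposable: if H₁ and H₂ are submonoids of P_fin(S) such that the addition map H₁ × H₂ → P_fin(S), (B, C) ↦ B + C, is bijective, then H₁ = {{0}} or H₂ = {{0}}. -/
open Pointwise

/-- A submonoid of `P_fin(S)`: a subset of `P_fin(S)` containing the identity `{0}`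
and closed under sumset addition. -/
def IsSubmonoidP (S : AddSubmonoid ℕ) (H : Set (Finset ℕ)) : Prop :=
  H ⊆ Pfin S ∧ ({0} : Finset ℕ) ∈ H ∧ ∀ A ∈ H, ∀ B ∈ H, A + B ∈ H

namespace PfinAuxiliary

lemma icc_add_icc (a b c d : ℕ) (hab : a ≤ b) (hcd : c ≤ d) :
    Finset.Icc a b + Finset.Icc c d = Finset.Icc (a + c) (b + d) := by
  ext x
  simp only [Finset.mem_add, Finset.mem_Icc]
  constructor
  · rintro ⟨y, ⟨hy1, hy2⟩, z, ⟨hz1, hz2⟩, rfl⟩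
    omega
  · rintro ⟨h3, h4⟩
    by_cases hxd : x ≤ a + d
    · exact ⟨a, ⟨le_rfl, hab⟩, x - a, ⟨by omega, by omega⟩, by omega⟩
    · exact ⟨x - d, ⟨by omega, by omega⟩, d, ⟨hcd, le_rfl⟩, by omega⟩

lemma sum_eq_singleton {X Y : Finset ℕ} (hX : X.Nonempty) (hY : Y.Nonempty) {n : ℕ}
    (h : X + Y = {n}) : ∃ x y, X = {x} ∧ Y = {y} ∧ x + y = n := by
  obtain ⟨x₀, hx₀⟩ := hX
  obtain ⟨y₀, hy₀⟩ := hY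
  have hmem : ∀ x ∈ X, ∀ y ∈ Y, x + y = n := fun x hx y hy =>
    Finset.mem_singleton.1 (h ▸ Finset.add_mem_add hx hy)
  refine ⟨x₀, y₀, ?_, ?_, hmem _ hx₀ _ hy₀⟩
  · refine Finset.eq_singleton_iff_unique_mem.2 ⟨hx₀, fun z hz => ?_⟩
    have h1 := hmem z hz y₀ hy₀
    have h2 := hmem x₀ hx₀ y₀ hy₀
    omega
  · refine Finset.eq_singleton_iff_unique_mem.2 ⟨hy₀, fun z hz => ?_⟩
    have h1 := hmem x₀ hx₀ z hz
    have h2 := hmem x₀ hx₀ y₀ hy₀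
    omega

lemma singleton_add_eq_Icc {t p m : ℕ} {C : Finset ℕ} (h : ({t} : Finset ℕ) + C = Finset.Icc p m)
    (hpm : p ≤ m) : t ≤ p ∧ C = Finset.Icc (p - t) (m - t) := by
  have hp : p ∈ ({t} : Finset ℕ) + C := by
    rw [h]; exact Finset.mem_Icc.2 ⟨le_rfl, hpm⟩
  obtain ⟨y, hy, z, hz, hyz⟩ := Finset.mem_add.1 hp
  have hyt : y = t := Finset.mem_singleton.1 hy
  have htp : t ≤ p := by omega
  refine ⟨htp, ?_⟩
  ext x
  simp only [Finset.mem_Icc]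
  constructor
  · intro hx
    have : t + x ∈ ({t} : Finset ℕ) + C := Finset.add_mem_add (Finset.mem_singleton_self t) hx
    rw [h] at this
    have := Finset.mem_Icc.1 this
    omega
  · intro hx
    have : t + x ∈ Finset.Icc p m := Finset.mem_Icc.2 ⟨by omega, by omega⟩
    rw [← h] at this
    obtain ⟨y', hy', z', hz', hyz'⟩ := Finset.mem_add.1 this
    have : y' = t := Finset.mem_singleton.1 hy'
    have : z' = x := by omega
    rwa [← this]

lemma add_icc_of_diam {B : Finset ℕ} (hB : B.Nonempty) (q l : ℕ)
    (hl : B.max' hB ≤ B.min' hB + l) :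
    B + Finset.Icc q (q + l) = Finset.Icc (B.min' hB + q) (B.max' hB + q + l) := by
  ext x
  simp only [Finset.mem_add, Finset.mem_Icc]
  constructor
  · rintro ⟨b, hb, z, ⟨hz1, hz2⟩, rfl⟩
    have h1 := Finset.min'_le B b hb
    have h2 := Finset.le_max' B b hb
    omega
  · rintro ⟨h1, h2⟩
    have hminmem := Finset.min'_mem B hB
    have hmaxmem := Finset.max'_mem B hB
    set T := B.filter (fun b => b + q ≤ x) with hTdef
    have hT : T.Nonempty := ⟨B.min' hB, Finset.mem_filter.2 ⟨hminmem, by omega⟩⟩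
    set b := T.max' hT with hbdef
    have hbT : b ∈ T := Finset.max'_mem T hT
    have hbB : b ∈ B := (Finset.mem_filter.1 hbT).1
    have hbq : b + q ≤ x := (Finset.mem_filter.1 hbT).2
    have hub : x ≤ b + q + l := by
      by_contra hcon
      push_neg at hcon
      have hmaxT : B.max' hB ∈ T := by
        refine Finset.mem_filter.2 ⟨hmaxmem, ?_⟩
        have := Finset.min'_le B b hbB
        omega
      have h3 : B.max' hB ≤ b := Finset.le_max' T _ hmaxT
      have h4 : b ≤ B.max' hB := Finset.le_max' B b hbB
      omega
    exact ⟨b, hbB, x - b, ⟨by omega, by omega⟩, by omega⟩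

lemma aux (S : AddSubmonoid ℕ) (F : ℕ) (hF1 : ∀ x : ℕ, F < x → x ∈ S) (hF2 : F ∉ S)
    (hF3 : 1 ≤ F)
    (H₁ H₂ : Set (Finset ℕ)) (h₁ : IsSubmonoidP S H₁) (h₂ : IsSubmonoidP S H₂)
    (hsurj : ∀ A ∈ Pfin S, ∃ B ∈ H₁, ∃ C ∈ H₂, A = B + C)
    (hinj : ∀ B ∈ H₁, ∀ C ∈ H₂, ∀ B' ∈ H₁, ∀ C' ∈ H₂,
        B + C = B' + C' → B = B' ∧ C = C')
    (t₀ u₀ : ℕ) (ht₀ : ({t₀} : Finset ℕ) ∈ H₁) (hu₀ : Finset.Icc u₀ (u₀ + 1) ∈ H₂)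
    (htu : t₀ + u₀ = F + 1) : H₁ = {({0} : Finset ℕ)} := by
  have hne₁ : ∀ B ∈ H₁, (B : Finset ℕ).Nonempty := fun B hB => (h₁.1 hB).1
  have hne₂ : ∀ C ∈ H₂, (C : Finset ℕ).Nonempty := fun C hC => (h₂.1 hC).1
  have hsub₁ : ∀ B ∈ H₁, ∀ x ∈ B, x ∈ S := fun B hB x hx =>
    SetLike.mem_coe.1 ((h₁.1 hB).2 (Finset.mem_coe.2 hx))
  have hsub₂ : ∀ C ∈ H₂, ∀ x ∈ C, x ∈ S := fun C hC x hx =>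
    SetLike.mem_coe.1 ((h₂.1 hC).2 (Finset.mem_coe.2 hx))
  have hPfinIcc : ∀ p l : ℕ, F < p → Finset.Icc p (p + l) ∈ Pfin S := by
    intro p l hp
    refine ⟨⟨p, Finset.mem_Icc.2 ⟨le_rfl, Nat.le_add_right _ _⟩⟩, ?_⟩
    intro x hx
    rw [Finset.coe_Icc, Set.mem_Icc] at hx
    exact SetLike.mem_coe.2 (hF1 x (by omega))
  have hPfinSing : ∀ n : ℕ, F < n → ({n} : Finset ℕ) ∈ Pfin S := by
    intro n hn
    refine ⟨⟨n, Finset.mem_singleton_self n⟩, ?_⟩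
    intro x hx
    rw [Finset.coe_singleton, Set.mem_singleton_iff] at hx
    subst hx
    exact SetLike.mem_coe.2 (hF1 x hn)
  -- iterated sums of the basic pair decomposition
  have hiter : ∀ l : ℕ, ({l * t₀} : Finset ℕ) ∈ H₁ ∧
      Finset.Icc (l * u₀) (l * u₀ + l) ∈ H₂ := by
    intro l
    induction l with
    | zero => simpa using ⟨h₁.2.1, h₂.2.1⟩
    | succ n ih =>
      constructor
      · have h := h₁.2.2 _ ih.1 _ ht₀
        rw [Finset.singleton_add_singleton] at h
        have he : (n + 1) * t₀ = n * t₀ + t₀ := by ring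
        rw [he]
        exact h
      · have h := h₂.2.2 _ ih.2 _ hu₀
        rw [icc_add_icc _ _ _ _ (by omega) (by omega)] at h
        have he : Finset.Icc (n * u₀ + u₀) (n * u₀ + n + (u₀ + 1)) =
            Finset.Icc ((n + 1) * u₀) ((n + 1) * u₀ + (n + 1)) := by
          congr 1 <;> ring
        rw [he] at h
        exact h
  -- Step 2: every far interval decomposes as (singleton in H₁) + (interval in H₂)
  have step2 : ∀ p l : ℕ, F < p → ∃ t q : ℕ, ({t} : Finset ℕ) ∈ H₁ ∧
      Finset.Icc q (q + l) ∈ H₂ ∧ t + q = p := by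
    intro p l hp
    obtain ⟨B, hB, C, hC, hrepA⟩ := hsurj _ (hPfinIcc p l hp)
    set N := (l + 1) * (F + 1) with hNdef
    have hN2 : N = l * (F + 1) + (F + 1) := by rw [hNdef]; ring
    have hNF : F < N := by omega
    obtain ⟨B₁, hB₁, C₁, hC₁, hrepN⟩ := hsurj _ (hPfinSing N hNF)
    obtain ⟨b₁, c₁, hB₁e, hC₁e, hbc₁⟩ :=
      sum_eq_singleton (hne₁ _ hB₁) (hne₂ _ hC₁) hrepN.symm
    obtain ⟨B₂, hB₂, C₂, hC₂, hreps⟩ := hsurj _ (hPfinSing (p + F + 1) (by omega))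
    obtain ⟨b₂, c₂, hB₂e, hC₂e, hbc₂⟩ :=
      sum_eq_singleton (hne₁ _ hB₂) (hne₂ _ hC₂) hreps.symm
    obtain ⟨hT, hD⟩ := hiter l
    have hmul : l * t₀ + l * u₀ = l * (F + 1) := by rw [← Nat.mul_add, htu]
    have hX₂ : ({l * t₀ + b₂} : Finset ℕ) ∈ H₁ := by
      have h := h₁.2.2 _ hT _ (hB₂e ▸ hB₂)
      rwa [Finset.singleton_add_singleton] at h
    have hY₂ : Finset.Icc (l * u₀ + c₂) (l * u₀ + l + c₂) ∈ H₂ := by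
      have h := h₂.2.2 _ hD _ (hC₂e ▸ hC₂)
      rw [show ({c₂} : Finset ℕ) = Finset.Icc c₂ c₂ from (Finset.Icc_self c₂).symm,
        icc_add_icc _ _ _ _ (by omega) le_rfl] at h
      exact h
    have hkey : (B + B₁) + (C + C₁) =
        ({l * t₀ + b₂} : Finset ℕ) + Finset.Icc (l * u₀ + c₂) (l * u₀ + l + c₂) := by
      rw [add_add_add_comm, ← hrepA, ← hrepN]
      rw [show ({N} : Finset ℕ) = Finset.Icc N N from (Finset.Icc_self N).symm,
        show ({l * t₀ + b₂} : Finset ℕ) = Finset.Icc (l * t₀ + b₂) (l * t₀ + b₂) from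
          (Finset.Icc_self _).symm,
        icc_add_icc _ _ _ _ (by omega) le_rfl,
        icc_add_icc _ _ _ _ le_rfl (by omega)]
      congr 1 <;> omega
    obtain ⟨hBB₁, -⟩ := hinj _ (h₁.2.2 _ hB _ hB₁) _ (h₂.2.2 _ hC _ hC₁) _ hX₂ _ hY₂ hkey
    obtain ⟨t, y, hBt, hB₁y, hty⟩ := sum_eq_singleton (hne₁ _ hB) (hne₁ _ hB₁) hBB₁
    have hrep' : ({t} : Finset ℕ) + C = Finset.Icc p (p + l) := by
      rw [← hBt]; exact hrepA.symm
    obtain ⟨htp, hCeq⟩ := singleton_add_eq_Icc hrep' (by omega)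
    refine ⟨t, p - t, hBt ▸ hB, ?_, by omega⟩
    rw [show (p - t) + l = (p + l) - t from by omega]
    exact hCeq ▸ hC
  -- Step 3: every member of H₁ is a singleton
  have step3 : ∀ B' ∈ H₁, ∃ b : ℕ, B' = ({b} : Finset ℕ) := by
    intro B' hB'
    have hne := hne₁ _ hB'
    have hmM : B'.min' hne ≤ B'.max' hne := Finset.min'_le _ _ (Finset.max'_mem _ _)
    set m := B'.min' hne with hmdef
    set M := B'.max' hne with hMdef
    set l := F + (M - m) with hldef
    obtain ⟨t, q, htH, hqH, htq⟩ := step2 (F + 1) l (by omega)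
    have hq : F < q := by
      by_contra hqc
      push_neg at hqc
      have hFm : F ∈ Finset.Icc q (q + l) := Finset.mem_Icc.2 ⟨hqc, by omega⟩
      exact hF2 (hsub₂ _ hqH F hFm)
    have hsum : B' + Finset.Icc q (q + l) = Finset.Icc (m + q) (M + q + l) :=
      add_icc_of_diam hne q l (by omega)
    obtain ⟨t', q', ht'H, hq'H, ht'q'⟩ := step2 (m + q) (l + (M - m)) (by omega)
    have hkey : B' + Finset.Icc q (q + l) =
        ({t'} : Finset ℕ) + Finset.Icc q' (q' + (l + (M - m))) := by
      rw [hsum, show ({t'} : Finset ℕ) = Finset.Icc t' t' from (Finset.Icc_self _).symm,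
        icc_add_icc _ _ _ _ le_rfl (by omega)]
      congr 1 <;> omega
    obtain ⟨hBeq, -⟩ := hinj _ hB' _ hqH _ ht'H _ hq'H hkey
    exact ⟨t', hBeq⟩
  -- multiples of singletons stay inside a submonoid
  have hmulmem : ∀ (H : Set (Finset ℕ)), ({0} : Finset ℕ) ∈ H →
      (∀ A ∈ H, ∀ B ∈ H, A + B ∈ H) →
      ∀ (n x : ℕ), ({x} : Finset ℕ) ∈ H → ({n * x} : Finset ℕ) ∈ H := by
    intro H h0 hcl n x hx
    induction n with
    | zero => simpa using h0
    | succ k ih =>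
      have h := hcl _ ih _ hx
      rw [Finset.singleton_add_singleton] at h
      rw [show (k + 1) * x = k * x + x from by ring]
      exact h
  -- Step 4: singletons in H₁ are trivial
  have step4 : ∀ b : ℕ, ({b} : Finset ℕ) ∈ H₁ → b = 0 := by
    intro b hb
    by_cases hex : ∃ u : ℕ, 0 < u ∧ ({u} : Finset ℕ) ∈ H₂
    · obtain ⟨u, hu, huH⟩ := hex
      by_contra hb0
      have hA1 : ({u * b} : Finset ℕ) ∈ H₁ := hmulmem H₁ h₁.2.1 h₁.2.2 u b hb
      have hA2 : ({u * b} : Finset ℕ) ∈ H₂ := by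
        have h := hmulmem H₂ h₂.2.1 h₂.2.2 b u huH
        rwa [Nat.mul_comm] at h
      have h11 : ({u * b + u * b} : Finset ℕ) ∈ H₁ := by
        have h := h₁.2.2 _ hA1 _ hA1
        rwa [Finset.singleton_add_singleton] at h
      have hkey : ({u * b} : Finset ℕ) + ({u * b} : Finset ℕ) =
          ({u * b + u * b} : Finset ℕ) + ({0} : Finset ℕ) := by
        rw [Finset.singleton_add_singleton, Finset.singleton_add_singleton, Nat.add_zero]
      obtain ⟨hEq, -⟩ := hinj _ hA1 _ hA2 _ h11 _ h₂.2.1 hkey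
      have h2 : u * b = u * b + u * b := Finset.singleton_injective hEq
      have h3 : u * b = 0 := by omega
      rcases Nat.mul_eq_zero.1 h3 with h | h <;> omega
    · push_neg at hex
      exfalso
      have hsing : ∀ s : ℕ, s ∈ S → ({s} : Finset ℕ) ∈ H₁ := by
        intro s hs
        have hsP : ({s} : Finset ℕ) ∈ Pfin S := by
          refine ⟨⟨s, Finset.mem_singleton_self s⟩, ?_⟩
          intro x hx
          rw [Finset.coe_singleton, Set.mem_singleton_iff] at hx
          subst hx
          exact SetLike.mem_coe.2 hs
        obtain ⟨B, hB, C, hC, hrep⟩ := hsurj _ hsP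
        obtain ⟨x, y, hBx, hCy, hxy⟩ := sum_eq_singleton (hne₁ _ hB) (hne₂ _ hC) hrep.symm
        have hy0 : y = 0 := by
          by_contra hy
          exact hex y (Nat.pos_of_ne_zero hy) (hCy ▸ hC)
        have hx' : x = s := by omega
        rw [← hx', ← hBx]
        exact hB
      obtain ⟨t, q, htH, hqH, htq⟩ := step2 (F + 1) F (by omega)
      have hq : F < q := by
        by_contra hqc
        push_neg at hqc
        have hFm : F ∈ Finset.Icc q (q + F) := Finset.mem_Icc.2 ⟨hqc, by omega⟩
        exact hF2 (hsub₂ _ hqH F hFm)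
      obtain ⟨BA, hBA, CA, hCA, hrepA⟩ := hsurj _ (hPfinIcc (F + q) F (by omega))
      obtain ⟨a, hBAa⟩ := step3 _ hBA
      have haS : a ∈ S := hsub₁ _ hBA a (by rw [hBAa]; exact Finset.mem_singleton_self a)
      have h2F : ({2 * F} : Finset ℕ) ∈ H₁ := hsing _ (hF1 _ (by omega))
      have hCC : Finset.Icc (2 * q) (2 * q + 2 * F) ∈ H₂ := by
        have h := h₂.2.2 _ hqH _ hqH
        rw [icc_add_icc _ _ _ _ (by omega) (by omega)] at h
        rw [show Finset.Icc (q + q) (q + F + (q + F)) =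
            Finset.Icc (2 * q) (2 * q + 2 * F) from by congr 1 <;> ring] at h
        exact h
      have hkey : (BA + BA) + (CA + CA) =
          ({2 * F} : Finset ℕ) + Finset.Icc (2 * q) (2 * q + 2 * F) := by
        rw [add_add_add_comm, ← hrepA]
        rw [show ({2 * F} : Finset ℕ) = Finset.Icc (2 * F) (2 * F) from
            (Finset.Icc_self _).symm,
          icc_add_icc _ _ _ _ (by omega) (by omega),
          icc_add_icc _ _ _ _ le_rfl (by omega)]
        congr 1 <;> omega
      obtain ⟨hEq, -⟩ := hinj _ (h₁.2.2 _ hBA _ hBA) _ (h₂.2.2 _ hCA _ hCA) _ h2F _ hCC hkey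
      rw [hBAa, Finset.singleton_add_singleton] at hEq
      have h2 : a + a = 2 * F := Finset.singleton_injective hEq
      have haF : a = F := by omega
      exact hF2 (haF ▸ haS)
  refine Set.eq_singleton_iff_unique_mem.2 ⟨h₁.2.1, fun B hB => ?_⟩
  obtain ⟨b, hb⟩ := step3 B hB
  subst hb
  rw [step4 b hB]

end PfinAuxiliary

/-- For a numerical monoid `S ≠ ℕ`, the power monoid `P_fin(S)` is
directly indecomposable. -/
theorem Pfin_directly_indecomposable (S : AddSubmonoid ℕ)
    (hfin : ((S : Set ℕ)ᶜ).Finite) (hne : S ≠ ⊤)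
    (H₁ H₂ : Set (Finset ℕ)) (h₁ : IsSubmonoidP S H₁) (h₂ : IsSubmonoidP S H₂)
    (hsurj : ∀ A ∈ Pfin S, ∃ B ∈ H₁, ∃ C ∈ H₂, A = B + C)
    (hinj : ∀ B ∈ H₁, ∀ C ∈ H₂, ∀ B' ∈ H₁, ∀ C' ∈ H₂,
        B + C = B' + C' → B = B' ∧ C = C') :
    H₁ = {({0} : Finset ℕ)} ∨ H₂ = {({0} : Finset ℕ)} := by
  classical
  -- the complement is nonempty
  have hex : ∃ x : ℕ, x ∉ S := by
    by_contra h
    push_neg at h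
    exact hne (by ext x; simp [h x])
  obtain ⟨x₀, hx₀⟩ := hex
  have hx₀' : x₀ ∈ hfin.toFinset := hfin.mem_toFinset.2 (by simpa using hx₀)
  have hTne : hfin.toFinset.Nonempty := ⟨x₀, hx₀'⟩
  set F := hfin.toFinset.max' hTne with hFdef
  have hF2 : F ∉ S := by
    have h := Finset.max'_mem hfin.toFinset hTne
    rw [Set.Finite.mem_toFinset] at h
    simpa using h
  have hF1 : ∀ y : ℕ, F < y → y ∈ S := by
    intro y hy
    by_contra hyS
    have hmem : y ∈ hfin.toFinset := hfin.mem_toFinset.2 (by simpa using hyS)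
    have := Finset.le_max' hfin.toFinset y hmem
    omega
  have hF3 : 1 ≤ F := by
    rcases Nat.eq_zero_or_pos F with h | h
    · exact absurd (h ▸ S.zero_mem) hF2
    · exact h
  have hPmem : Finset.Icc (F + 1) (F + 1 + 1) ∈ Pfin S := by
    refine ⟨⟨F + 1, Finset.mem_Icc.2 ⟨le_rfl, by omega⟩⟩, ?_⟩
    intro x hx
    rw [Finset.coe_Icc, Set.mem_Icc] at hx
    exact SetLike.mem_coe.2 (hF1 x (by omega))
  obtain ⟨B, hB, C, hC, hrep⟩ := hsurj _ hPmem
  have hBne : B.Nonempty := (h₁.1 hB).1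
  have hCne : C.Nonempty := (h₂.1 hC).1
  -- one of the two parts is a singleton
  have hsingleton_of_eq : ∀ (X : Finset ℕ) (hX : X.Nonempty),
      X.min' hX = X.max' hX → X = {X.min' hX} := by
    intro X hX h
    refine Finset.eq_singleton_iff_unique_mem.2 ⟨Finset.min'_mem X hX, fun y hy => ?_⟩
    have h1 := Finset.min'_le X y hy
    have h2 := Finset.le_max' X y hy
    omega
  have hBC : (∃ t, B = ({t} : Finset ℕ)) ∨ (∃ t, C = ({t} : Finset ℕ)) := by
    by_contra hcon
    push_neg at hcon
    obtain ⟨hB2, hC2⟩ := hcon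
    have h1 : B.min' hBne < B.max' hBne :=
      lt_of_le_of_ne (Finset.min'_le _ _ (Finset.max'_mem _ _))
        (fun h => hB2 _ (hsingleton_of_eq B hBne h))
    have h2 : C.min' hCne < C.max' hCne :=
      lt_of_le_of_ne (Finset.min'_le _ _ (Finset.max'_mem _ _))
        (fun h => hC2 _ (hsingleton_of_eq C hCne h))
    have m1 : B.min' hBne + C.min' hCne ∈ B + C :=
      Finset.add_mem_add (Finset.min'_mem _ _) (Finset.min'_mem _ _)
    have m2 : B.max' hBne + C.max' hCne ∈ B + C :=
      Finset.add_mem_add (Finset.max'_mem _ _) (Finset.max'_mem _ _)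
    rw [← hrep] at m1 m2
    have b1 := Finset.mem_Icc.1 m1
    have b2 := Finset.mem_Icc.1 m2
    omega
  rcases hBC with ⟨t, hBt⟩ | ⟨t, hCt⟩
  · -- the H₁ part of the pair is a singleton: H₁ = {{0}}
    left
    have hrep' : ({t} : Finset ℕ) + C = Finset.Icc (F + 1) (F + 1 + 1) := by
      rw [← hBt]; exact hrep.symm
    obtain ⟨htF, hCeq⟩ := PfinAuxiliary.singleton_add_eq_Icc hrep' (by omega)
    refine PfinAuxiliary.aux S F hF1 hF2 hF3 H₁ H₂ h₁ h₂ hsurj hinj t (F + 1 - t)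
      (hBt ▸ hB) ?_ (by omega)
    rw [show (F + 1 - t) + 1 = (F + 1 + 1) - t from by omega]
    exact hCeq ▸ hC
  · -- the H₂ part of the pair is a singleton: H₂ = {{0}}
    right
    have hsurj' : ∀ A ∈ Pfin S, ∃ B ∈ H₂, ∃ C ∈ H₁, A = B + C := by
      intro A hA
      obtain ⟨B', hB', C', hC', h⟩ := hsurj A hA
      exact ⟨C', hC', B', hB', by rw [h, add_comm]⟩
    have hinj' : ∀ B ∈ H₂, ∀ C ∈ H₁, ∀ B' ∈ H₂, ∀ C' ∈ H₁,
        B + C = B' + C' → B = B' ∧ C = C' := by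
      intro Bb hBb Cc hCc Bb' hBb' Cc' hCc' h
      have h' : Cc + Bb = Cc' + Bb' := by rw [add_comm, h, add_comm]
      obtain ⟨e1, e2⟩ := hinj _ hCc _ hBb _ hCc' _ hBb' h'
      exact ⟨e2, e1⟩
    have hrep' : ({t} : Finset ℕ) + B = Finset.Icc (F + 1) (F + 1 + 1) := by
      rw [← hCt, add_comm]; exact hrep.symm
    obtain ⟨htF, hBeq⟩ := PfinAuxiliary.singleton_add_eq_Icc hrep' (by omega)
    refine PfinAuxiliary.aux S F hF1 hF2 hF3 H₂ H₁ h₂ h₁ hsurj' hinj' t (F + 1 - t)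
      (hCt ▸ hC) ?_ (by omega)
    rw [show (F + 1 - t) + 1 = (F + 1 + 1) - t from by omega]
    exact hBeq ▸ hB
end

section
/- Let S and S' be numerical monoids with S ≠ ℕ. If there is an additive monoid isomorphism between the power monoids P_fin(S) and P_fin(S'), then S = S'. -/
open Pointwise

namespace PfinAux

open Finset

lemma singleton_mem_Pfin {S : AddSubmonoid ℕ} {s : ℕ} (hs : s ∈ S) :
    ({s} : Finset ℕ) ∈ Pfin S := by
  refine ⟨⟨s, mem_singleton_self s⟩, ?_⟩
  intro x hx
  simp only [coe_singleton, Set.mem_singleton_iff] at hx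
  subst hx
  exact hs

lemma add_mem_Pfin {S : AddSubmonoid ℕ} {A B : Finset ℕ}
    (hA : A ∈ Pfin S) (hB : B ∈ Pfin S) : A + B ∈ Pfin S := by
  refine ⟨hA.1.add hB.1, ?_⟩
  intro x hx
  simp only [coe_add, Set.mem_add] at hx
  obtain ⟨a, ha, b, hb, rfl⟩ := hx
  exact S.add_mem (hA.2 ha) (hB.2 hb)

lemma singleton_cancel {x : ℕ} {B C : Finset ℕ}
    (h : ({x} : Finset ℕ) + B = ({x} : Finset ℕ) + C) : B = C := by
  ext b
  constructor
  · intro hb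
    have : x + b ∈ ({x} : Finset ℕ) + C := h ▸ add_mem_add (mem_singleton_self x) hb
    rw [mem_add] at this
    obtain ⟨y, hy, c, hc, hyc⟩ := this
    rw [mem_singleton] at hy
    subst hy
    have : c = b := by omega
    subst this; exact hc
  · intro hb
    have : x + b ∈ ({x} : Finset ℕ) + B := h ▸ add_mem_add (mem_singleton_self x) hb
    rw [mem_add] at this
    obtain ⟨y, hy, c, hc, hyc⟩ := this
    rw [mem_singleton] at hy
    subst hy
    have : c = b := by omega
    subst this; exact hc

/-- If `E + E = E` for a nonempty finset of naturals, then `E = {0}`. -/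
lemma idem_eq_zero {E : Finset ℕ} (hE : E.Nonempty) (h : E + E = E) :
    E = ({0} : Finset ℕ) := by
  set M := E.max' hE with hM
  have hMM : M + M ∈ E := by
    rw [← h]
    exact add_mem_add (E.max'_mem hE) (E.max'_mem hE)
  have h1 : M + M ≤ M := E.le_max' _ hMM
  have hM0 : M = 0 := by omega
  rw [eq_singleton_iff_unique_mem]
  obtain ⟨e, he⟩ := hE
  have he0 : e = 0 := by
    have := E.le_max' e he
    omega
  subst he0
  refine ⟨he, fun x hx => ?_⟩
  have := E.le_max' x hx
  omega

/-- A threshold for a cofinite submonoid. -/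
lemma exists_threshold (S : AddSubmonoid ℕ) (hfin : ((S : Set ℕ)ᶜ).Finite) :
    ∃ N : ℕ, ∀ n, N ≤ n → n ∈ S := by
  obtain ⟨N, hN⟩ := hfin.bddAbove
  refine ⟨N + 1, fun n hn => ?_⟩
  by_contra hcon
  have : n ∈ ((S : Set ℕ)ᶜ) := hcon
  have := hN this
  omega

/-- A cancellable element of `Pfin S` is a singleton (for cofinite `S`). -/
lemma cancel_singleton (S : AddSubmonoid ℕ) (N : ℕ) (hN : ∀ n, N ≤ n → n ∈ S)
    {A : Finset ℕ} (hA : A ∈ Pfin S)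
    (hc : ∀ B ∈ Pfin S, ∀ C ∈ Pfin S, A + B = A + C → B = C) :
    ∃ a, A = {a} := by
  obtain ⟨hne, hsub⟩ := hA
  by_contra hcon
  push_neg at hcon
  set a1 := A.min' hne with ha1
  have ha1A : a1 ∈ A := A.min'_mem hne
  have : ∃ a2 ∈ A, a2 ≠ a1 := by
    by_contra h
    push_neg at h
    exact hcon a1 (Finset.eq_singleton_iff_unique_mem.2 ⟨ha1A, h⟩)
  obtain ⟨a2, ha2A, ha2ne⟩ := this
  have ha2gt : a1 < a2 := lt_of_le_of_ne (A.min'_le a2 ha2A) (Ne.symm ha2ne)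
  set d := a2 - a1 with hd_def
  have hd : 0 < d := by omega
  set L := A.max' hne - a1 with hL
  have hmax : ∀ a ∈ A, a ≤ A.max' hne := fun a ha => A.le_max' a ha
  set K := L + d with hK
  set C : Finset ℕ := Finset.Icc N (N + K) with hC
  set B : Finset ℕ := C.erase (N + d) with hB
  have hNC : N ∈ C := by simp [hC, Finset.mem_Icc]
  have hNB : N ∈ B := by
    rw [hB, Finset.mem_erase]
    exact ⟨by omega, hNC⟩
  have hNdC : N + d ∈ C := by
    simp only [hC, Finset.mem_Icc]
    omega
  have hCS : C ∈ Pfin S := by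
    refine ⟨⟨N, hNC⟩, ?_⟩
    intro x hx
    simp only [hC, Finset.coe_Icc, Set.mem_Icc] at hx
    exact hN x hx.1
  have hBS : B ∈ Pfin S := by
    refine ⟨⟨N, hNB⟩, ?_⟩
    intro x hx
    have : x ∈ (C : Set ℕ) := by
      rw [hB] at hx
      simp only [Finset.coe_erase, Set.mem_diff] at hx
      exact hx.1
    exact hCS.2 this
  have hBneC : B ≠ C := by
    intro h
    have : N + d ∈ B := h ▸ hNdC
    rw [hB, Finset.mem_erase] at this
    exact this.1 rfl
  apply hBneC
  apply hc B hBS C hCS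
  apply Finset.Subset.antisymm
  · exact Finset.add_subset_add_left (Finset.erase_subset _ _)
  · intro x hx
    rw [Finset.mem_add] at hx
    obtain ⟨a, haA, c, hcC, rfl⟩ := hx
    by_cases hcd : c = N + d
    · subst hcd
      by_cases ha : a = a1
      · subst ha
        have hx2 : a1 + (N + d) = a2 + N := by omega
        rw [hx2]
        exact add_mem_add ha2A hNB
      · have haa1 : a1 < a := lt_of_le_of_ne (A.min'_le a haA) (Ne.symm ha)
        have haL : a ≤ A.max' hne := hmax a haA
        set c' := N + d + (a - a1) with hc'
        have hc'B : c' ∈ B := by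
          rw [hB, Finset.mem_erase, hC, Finset.mem_Icc]
          constructor
          · omega
          · constructor
            · omega
            · omega
        have hx2 : a + (N + d) = a1 + c' := by omega
        rw [hx2]
        exact add_mem_add ha1A hc'B
    · have hcB : c ∈ B := by
        rw [hB, Finset.mem_erase]
        exact ⟨hcd, hcC⟩
      exact add_mem_add haA hcB

end PfinAux

/-- If `S` and `S'` are numerical monoids with `S ≠ ℕ`, and the power monoids
`P_fin(S)` and `P_fin(S')` are isomorphic as additive monoids (via a bijective
addition-preserving map `φ`), then `S = S'`. -/
theorem Pfin_iso_implies_eq (S S' : AddSubmonoid ℕ)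
    (hfin : ((S : Set ℕ)ᶜ).Finite) (hfin' : ((S' : Set ℕ)ᶜ).Finite)
    (hne : S ≠ ⊤)
    (φ : Finset ℕ → Finset ℕ)
    (hmap : ∀ A ∈ Pfin S, φ A ∈ Pfin S')
    (hinj : ∀ A ∈ Pfin S, ∀ B ∈ Pfin S, φ A = φ B → A = B)
    (hsurj : ∀ A' ∈ Pfin S', ∃ A ∈ Pfin S, φ A = A')
    (hadd : ∀ A ∈ Pfin S, ∀ B ∈ Pfin S, φ (A + B) = φ A + φ B) :
    S = S' := by
  classical
  open PfinAux Finset in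
  obtain ⟨N, hN⟩ := PfinAux.exists_threshold S hfin
  obtain ⟨N', hN'⟩ := PfinAux.exists_threshold S' hfin'
  -- φ of a singleton is a singleton
  have hsing : ∀ s : ℕ, ∃ y : ℕ, s ∈ S → φ {s} = {y} := by
    intro s
    by_cases hs : s ∈ S
    · have hmem : ({s} : Finset ℕ) ∈ Pfin S := PfinAux.singleton_mem_Pfin hs
      have : ∃ y, φ {s} = {y} := by
        apply PfinAux.cancel_singleton S' N' hN' (hmap _ hmem)
        intro B' hB' C' hC' hBC
        obtain ⟨B, hB, rfl⟩ := hsurj B' hB'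
        obtain ⟨C, hC, rfl⟩ := hsurj C' hC'
        rw [← hadd _ hmem _ hB, ← hadd _ hmem _ hC] at hBC
        have := hinj _ (PfinAux.add_mem_Pfin hmem hB) _ (PfinAux.add_mem_Pfin hmem hC) hBC
        have hBeqC := PfinAux.singleton_cancel this
        rw [hBeqC]
      obtain ⟨y, hy⟩ := this
      exact ⟨y, fun _ => hy⟩
    · exact ⟨0, fun h => absurd h hs⟩
  choose g hg using hsing
  -- g maps into S'
  have hgS' : ∀ s ∈ S, g s ∈ S' := by
    intro s hs
    have := (hmap _ (PfinAux.singleton_mem_Pfin hs)).2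
    rw [hg s hs] at this
    exact this (Finset.mem_singleton_self (g s))
  -- φ {0} = {0}, hence g 0 = 0
  have h00 : φ {0} = ({0} : Finset ℕ) := by
    have h0mem : ({0} : Finset ℕ) ∈ Pfin S := PfinAux.singleton_mem_Pfin S.zero_mem
    have hidem : φ {0} + φ {0} = φ {0} := by
      rw [← hadd _ h0mem _ h0mem]
      norm_num
    exact PfinAux.idem_eq_zero (hmap _ h0mem).1 hidem
  have hg0 : g 0 = 0 := by
    have := hg 0 S.zero_mem
    rw [h00] at this
    exact (Finset.singleton_inj.mp this.symm)
  -- additivity of g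
  have hgadd : ∀ s ∈ S, ∀ t ∈ S, g (s + t) = g s + g t := by
    intro s hs t ht
    have h2 : φ ({s} + {t} : Finset ℕ) = φ {s} + φ {t} :=
      hadd _ (PfinAux.singleton_mem_Pfin hs) _ (PfinAux.singleton_mem_Pfin ht)
    rw [Finset.singleton_add_singleton, hg _ (S.add_mem hs ht), hg s hs, hg t ht,
      Finset.singleton_add_singleton] at h2
    exact Finset.singleton_inj.mp h2
  -- injectivity of g
  have hginj : ∀ s ∈ S, ∀ t ∈ S, g s = g t → s = t := by
    intro s hs t ht h
    have : φ {s} = φ {t} := by rw [hg s hs, hg t ht, h]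
    have := hinj _ (PfinAux.singleton_mem_Pfin hs) _ (PfinAux.singleton_mem_Pfin ht) this
    exact Finset.singleton_inj.mp this
  -- surjectivity of g onto S'
  have hgsurj : ∀ y ∈ S', ∃ s ∈ S, g s = y := by
    intro y hy
    obtain ⟨A, hA, hφA⟩ := hsurj {y} (PfinAux.singleton_mem_Pfin hy)
    have : ∃ a, A = {a} := by
      apply PfinAux.cancel_singleton S N hN hA
      intro B hB C hC hBC
      have h1 : φ (A + B) = φ (A + C) := by rw [hBC]
      rw [hadd _ hA _ hB, hadd _ hA _ hC, hφA] at h1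
      have := PfinAux.singleton_cancel h1
      exact hinj _ hB _ hC this
    obtain ⟨a, rfl⟩ := this
    have haS : a ∈ S := hA.2 (Finset.mem_singleton_self a)
    refine ⟨a, haS, ?_⟩
    have := hg a haS
    rw [hφA] at this
    exact (Finset.singleton_inj.mp this).symm
  -- multiples stay in S
  have hmulS : ∀ s ∈ S, ∀ n : ℕ, n * s ∈ S := by
    intro s hs n
    simpa [smul_eq_mul] using S.nsmul_mem hs n
  -- g (n * s) = n * g s
  have hgmul : ∀ s ∈ S, ∀ n : ℕ, g (n * s) = n * g s := by
    intro s hs n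
    induction n with
    | zero => simpa using hg0
    | succ n ih =>
      have h1 : (n + 1) * s = n * s + s := by ring
      rw [h1, hgadd _ (hmulS s hs n) _ hs, ih]
      ring
  -- cross relation
  have hcross : ∀ s ∈ S, ∀ t ∈ S, t * g s = s * g t := by
    intro s hs t ht
    have h1 : g (t * s) = t * g s := hgmul s hs t
    have h2 : g (s * t) = s * g t := hgmul t ht s
    rw [mul_comm s t] at h2
    rw [← h1, h2]
  set M := N + 1 with hM
  have hMS : M ∈ S := hN M (by omega)
  have hM1S : M + 1 ∈ S := hN (M + 1) (by omega)
  have hrel : (M + 1) * g M = M * g (M + 1) := hcross M hMS (M + 1) hM1S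
  have hdvd : M ∣ g M := by
    have h1 : M ∣ (M + 1) * g M := ⟨g (M + 1), hrel⟩
    rw [add_one_mul] at h1
    exact (Nat.dvd_add_right (Dvd.intro _ rfl)).mp h1
  obtain ⟨q, hq⟩ := hdvd
  -- g s = s * q for all s in S
  have hlin : ∀ s ∈ S, g s = s * q := by
    intro s hs
    have h1 : M * g s = s * g M := hcross s hs M hMS
    rw [hq] at h1
    have : M * g s = M * (s * q) := by ring_nf; ring_nf at h1; omega
    exact Nat.eq_of_mul_eq_mul_left (by omega) this
  -- q = 1
  have hq1 : q = 1 := by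
    obtain ⟨s1, hs1, hgs1⟩ := hgsurj N' (hN' N' le_rfl)
    obtain ⟨s2, hs2, hgs2⟩ := hgsurj (N' + 1) (hN' (N' + 1) (by omega))
    rw [hlin s1 hs1] at hgs1
    rw [hlin s2 hs2] at hgs2
    have hd1 : q ∣ N' := hgs1 ▸ dvd_mul_left q s1
    have hd2 : q ∣ N' + 1 := hgs2 ▸ dvd_mul_left q s2
    have : q ∣ 1 := by
      have := Nat.dvd_sub hd2 hd1
      simpa using this
    exact Nat.dvd_one.mp this
  -- conclude
  have hgid : ∀ s ∈ S, g s = s := by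
    intro s hs
    rw [hlin s hs, hq1, mul_one]
  ext n
  constructor
  · intro hnS
    have := hgS' n hnS
    rwa [hgid n hnS] at this
  · intro hnS'
    obtain ⟨s, hs, hgs⟩ := hgsurj n hnS'
    rw [hgid s hs] at hgs
    rwa [← hgs]
end

section
/- An element A of the power monoid P_fin(ℕ) is cancellative (i.e., A + B = A + C implies B = C for all B, C ∈ P_fin(ℕ)) if and only if A is a singleton. Moreover, every A ∈ P_fin(ℕ) of cardinality at least 2 fails to be cancellative even inside ⟦A⟧: there exist B, C ∈ ⟦A⟧ with B ≠ C and A + B = A + C. -/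
/-!
If `a ≠ b` lie in `A`, then deleting `a + b` from `A + A` does not change `A + (A + A)`: an element
`x + (a + b)` with `x ∈ A` is rewritten as `b + (a + a)` if `x = a` and as `a + (x + b)` otherwise,
and `a + a ≠ a + b ≠ x + b` by cancellativity. So `A + A` and `(A + A).erase (a + b)` are distinct
divisors of `3A` with the same sum with `A`. A singleton `{a}` is cancellative because `{a} + B` is
the translate `a +ᵥ B`.
-/

open Pointwise

/-- The `n`-fold sumset `nA` of a finite set `A ⊆ ℕ` (with `0A = {0}`). -/
def nfold (A : Finset ℕ) : ℕ → Finset ℕ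
  | 0 => {0}
  | n + 1 => nfold A n + A

/-- `⟦A⟧`: the smallest divisor-closed submonoid of `P_fin(ℕ)` containing `A`,
i.e. the set of nonempty `B` dividing some `n`-fold sumset `nA` in `P_fin(ℕ)`. -/
def ddSub (A : Finset ℕ) : Set (Finset ℕ) :=
  {B | B.Nonempty ∧ ∃ n : ℕ, ∃ C : Finset ℕ, C.Nonempty ∧ nfold A n = B + C}

namespace Finset

variable {α : Type*} [AddCancelCommMonoid α] [DecidableEq α]

lemma singleton_add_left_cancel {a : α} {B C : Finset α} (h : {a} + B = {a} + C) : B = C := by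
  rw [singleton_add, singleton_add] at h
  exact image_injective (add_right_injective a) h

lemma add_erase_add_add_self_eq {A : Finset α} {a b : α} (ha : a ∈ A) (hb : b ∈ A)
    (hab : a ≠ b) : A + (A + A).erase (a + b) = A + (A + A) := by
  refine (add_subset_add_left (erase_subset _ _)).antisymm ?_
  intro s hs
  obtain ⟨x, hx, t, ht, rfl⟩ := mem_add.1 hs
  by_cases htab : t = a + b
  · subst htab
    by_cases hxa : x = a
    · subst hxa
      have hne : x + x ≠ x + b := fun h => hab (add_left_cancel h)
      rw [show x + (x + b) = b + (x + x) by abel]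
      exact add_mem_add hb (mem_erase.2 ⟨hne, add_mem_add ha ha⟩)
    · have hne : x + b ≠ a + b := fun h => hxa (add_right_cancel h)
      rw [show x + (a + b) = a + (x + b) by abel]
      exact add_mem_add ha (mem_erase.2 ⟨hne, add_mem_add hx hb⟩)
  · exact add_mem_add hx (mem_erase.2 ⟨htab, ht⟩)

lemma exists_add_eq_add_add_self_of_one_lt_card {A : Finset α} (hA : 1 < #A) :
    ∃ C : Finset α, C.Nonempty ∧ C ≠ A + A ∧ A + C = A + (A + A) := by
  obtain ⟨a, ha, b, hb, hab⟩ := one_lt_card.1 hA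
  have habC : a + b ∉ (A + A).erase (a + b) := notMem_erase _ _
  have hbb : b + b ∈ (A + A).erase (a + b) :=
    mem_erase.2 ⟨fun h => hab (add_right_cancel h).symm, add_mem_add hb hb⟩
  refine ⟨_, ⟨_, hbb⟩, fun h => habC ?_, add_erase_add_add_self_eq ha hb hab⟩
  rw [h]
  exact add_mem_add ha hb

end Finset

lemma nfold_eq_nsmul (A : Finset ℕ) (n : ℕ) : nfold A n = n • A := by
  induction n with
  | zero => rfl
  | succ n ih => rw [nfold, ih, succ_nsmul]

lemma mem_ddSub_of_add_eq_add_add_self {A B : Finset ℕ} (hA : A.Nonempty) (hB : B.Nonempty)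
    (h : A + B = A + (A + A)) : B ∈ ddSub A :=
  ⟨hB, 3, A, hA, by rw [nfold_eq_nsmul, add_comm B, h, three'_nsmul, add_assoc]⟩

/-- An element `A` of `P_fin(ℕ)` is cancellative iff it is a singleton; moreover,
every `A` of cardinality at least `2` fails to be cancellative already in `⟦A⟧`. -/
theorem cancellative_iff_singleton :
    (∀ A : Finset ℕ, A.Nonempty →
      ((∀ B C : Finset ℕ, B.Nonempty → C.Nonempty → A + B = A + C → B = C) ↔
        ∃ a : ℕ, A = {a})) ∧
    (∀ A : Finset ℕ, 2 ≤ A.card →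
      ∃ B ∈ ddSub A, ∃ C ∈ ddSub A, B ≠ C ∧ A + B = A + C) := by
  refine ⟨fun A hA => ⟨fun hcancel => ?_, ?_⟩, fun A hA => ?_⟩
  · rw [← Finset.card_eq_one]
    by_contra hne
    obtain ⟨C, hC, hCne, hAC⟩ :=
      Finset.exists_add_eq_add_add_self_of_one_lt_card (A := A) (by have := hA.card_pos; omega)
    exact hCne (hcancel C _ hC (hA.add hA) hAC)
  · rintro ⟨a, rfl⟩ B C - - h
    exact Finset.singleton_add_left_cancel h
  · have hA' : A.Nonempty := Finset.card_pos.1 (by omega)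
    obtain ⟨C, hC, hCne, hAC⟩ := Finset.exists_add_eq_add_add_self_of_one_lt_card hA
    exact ⟨A + A, mem_ddSub_of_add_eq_add_add_self hA' (hA'.add hA') rfl,
      C, mem_ddSub_of_add_eq_add_add_self hA' hC hAC, hCne.symm, hAC.symm⟩
end

section
/- The only maximal divisor-closed submonoids of P_fin,0(ℕ) are H₁ = {B ∈ P_fin,0(ℕ) : 1 ∉ B} and H₂ = {B ∈ P_fin,0(ℕ) : max(B) − 1 ∉ B}. That is, a proper divisor-closed submonoid H ⊊ P_fin,0(ℕ) is contained in no divisor-closed submonoid other than H itself and P_fin,0(ℕ) if and only if H = H₁ or H = H₂. -/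
open Pointwise

/-- The reversal `rev(B) = {max(B) - b : b ∈ B}` of a finite set `B ⊆ ℕ`. -/
def rev (B : Finset ℕ) : Finset ℕ := B.image (fun b => B.sup id - b)

/-- Divisibility in the restricted power monoid `P_fin,0(ℕ)`:
`B` divides `A` if `A = B + C` for some finite `C` containing `0`. -/
def Dvd0 (B A : Finset ℕ) : Prop := ∃ C : Finset ℕ, 0 ∈ C ∧ A = B + C

/-- Divisor-closed submonoids of `P_fin,0(ℕ)`. -/
def IsDCS (H : Set (Finset ℕ)) : Prop :=
  (∀ A ∈ H, 0 ∈ A) ∧ ({0} : Finset ℕ) ∈ H ∧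
    (∀ A ∈ H, ∀ B ∈ H, A + B ∈ H) ∧
    (∀ A ∈ H, ∀ B : Finset ℕ, 0 ∈ B → Dvd0 B A → B ∈ H)

open Finset

lemma sup_mem' (B : Finset ℕ) (hB : B.Nonempty) : B.sup id ∈ B := by
  obtain ⟨b, hb, he⟩ := Finset.exists_mem_eq_sup B hB id
  rwa [he]

lemma sup_add' (A B : Finset ℕ) (hA : 0 ∈ A) (hB : 0 ∈ B) :
    (A + B).sup id = A.sup id + B.sup id := by
  apply le_antisymm
  · apply Finset.sup_le
    intro x hx
    rw [Finset.mem_add] at hx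
    obtain ⟨a, ha, b, hb, rfl⟩ := hx
    exact Nat.add_le_add (Finset.le_sup (f := id) ha) (Finset.le_sup (f := id) hb)
  · exact Finset.le_sup (f := id)
      (Finset.add_mem_add (sup_mem' A ⟨0, hA⟩) (sup_mem' B ⟨0, hB⟩))

lemma one_mem_rev (B : Finset ℕ) : 1 ∈ rev B ↔ ∃ b ∈ B, b + 1 = B.sup id := by
  unfold rev
  simp only [Finset.mem_image]
  constructor
  · rintro ⟨b, hb, he⟩
    have hle : b ≤ B.sup id := Finset.le_sup (f := id) hb
    exact ⟨b, hb, by omega⟩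
  · rintro ⟨b, hb, he⟩
    exact ⟨b, hb, by omega⟩

lemma dvd0_Iic (B : Finset ℕ) (h0 : 0 ∈ B) (M : ℕ) (hM : 2 * B.sup id ≤ M) :
    Dvd0 B (Finset.Iic M) := by
  refine ⟨Finset.Iic (M - B.sup id), by simp, ?_⟩
  ext t
  simp only [Finset.mem_Iic, Finset.mem_add]
  constructor
  · intro ht
    by_cases h : t ≤ M - B.sup id
    · exact ⟨0, h0, t, h, by omega⟩
    · refine ⟨B.sup id, sup_mem' B ⟨0, h0⟩, t - B.sup id, by omega, by omega⟩
  · rintro ⟨b, hb, c, hc, rfl⟩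
    have hble : b ≤ B.sup id := Finset.le_sup (f := id) hb
    omega

lemma smul_mem_L (C : Finset ℕ) (m : ℕ) (hm : 1 ≤ m) (h0 : 0 ∈ C) (h1 : 1 ∈ C)
    (hm1 : m - 1 ∈ C) (hmm : m ∈ C) :
    ∀ k j d : ℕ, j ≤ k → d ≤ k → j * (m - 1) + d ∈ k • C := by
  intro k
  induction k with
  | zero =>
    intro j d hj hd
    have hj0 : j = 0 := by omega
    have hd0 : d = 0 := by omega
    subst hj0; subst hd0
    simp [zero_nsmul]
  | succ k ih =>
    intro j d hj hd
    rw [succ_nsmul]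
    match j, hj with
    | 0, _ =>
      rcases le_or_gt d k with h | h
      · have := Finset.add_mem_add (ih 0 d (by omega) h) h0
        simpa using this
      · have hd' : d = k + 1 := by omega
        have := Finset.add_mem_add (ih 0 k (by omega) le_rfl) h1
        have he : 0 * (m - 1) + d = 0 * (m - 1) + k + 1 := by omega
        rw [he]
        exact this
    | (j' + 1), hj =>
      have hj' : j' ≤ k := by omega
      rcases le_or_gt d k with h | h
      · have := Finset.add_mem_add (ih j' d hj' h) hm1
        have he : (j' + 1) * (m - 1) + d = j' * (m - 1) + d + (m - 1) := by
          rw [Nat.succ_mul]; ring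
        rw [he]
        exact this
      · have hd' : d = k + 1 := by omega
        have := Finset.add_mem_add (ih j' k hj' le_rfl) hmm
        have he : (j' + 1) * (m - 1) + d = j' * (m - 1) + k + m := by
          rw [Nat.succ_mul]
          omega
        rw [he]
        exact this

lemma cover (m k t : ℕ) (hm : 2 ≤ m) (hk : m ≤ k) (ht : t ≤ k * m) :
    ∃ j d : ℕ, j ≤ k ∧ d ≤ k ∧ t = j * (m - 1) + d := by
  rcases le_or_gt (t / (m - 1)) k with h | h
  · refine ⟨t / (m - 1), t % (m - 1), h, ?_, ?_⟩
    · have := Nat.mod_lt t (show 0 < m - 1 by omega)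
      omega
    · have h1 := Nat.div_add_mod t (m - 1)
      have h2 : t / (m - 1) * (m - 1) = (m - 1) * (t / (m - 1)) := Nat.mul_comm _ _
      omega
  · refine ⟨k, t - k * (m - 1), le_rfl, ?_, ?_⟩
    · have h2 : k * m = k * (m - 1) + k := by
        have hm' : m = (m - 1) + 1 := by omega
        calc k * m = k * ((m - 1) + 1) := by rw [← hm']
        _ = k * (m - 1) + k := by ring
      omega
    · have h3 : (k + 1) * (m - 1) ≤ t := by
        calc (k + 1) * (m - 1) ≤ t / (m - 1) * (m - 1) :=
          Nat.mul_le_mul_right _ (by omega)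
        _ ≤ t := Nat.div_mul_le_self t (m - 1)
      have h4 : (k + 1) * (m - 1) = k * (m - 1) + (m - 1) := by ring
      omega

lemma smul_subset_Iic (C : Finset ℕ) : ∀ k : ℕ, ∀ x ∈ k • C, x ≤ k * C.sup id := by
  intro k
  induction k with
  | zero =>
    intro x hx
    simp [zero_nsmul, Finset.mem_zero] at hx
    simp [hx]
  | succ k ih =>
    intro x hx
    rw [succ_nsmul, Finset.mem_add] at hx
    obtain ⟨a, ha, b, hb, rfl⟩ := hx
    have h1 := ih a ha
    have h2 : b ≤ C.sup id := Finset.le_sup (f := id) hb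
    have h3 : (k + 1) * C.sup id = k * C.sup id + C.sup id := by ring
    omega

lemma smul_eq_Iic (C : Finset ℕ) (m : ℕ) (hm : C.sup id = m) (h0 : 0 ∈ C) (h1 : 1 ∈ C)
    (hm1 : m - 1 ∈ C) (k : ℕ) (hk : m ≤ k) : k • C = Finset.Iic (k * m) := by
  have hm1' : 1 ≤ m := hm ▸ Finset.le_sup (f := id) h1
  have hmm : m ∈ C := hm ▸ sup_mem' C ⟨0, h0⟩
  apply Finset.Subset.antisymm
  · intro x hx
    rw [Finset.mem_Iic]
    have := smul_subset_Iic C k x hx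
    rw [hm] at this
    exact this
  · intro t ht
    rw [Finset.mem_Iic] at ht
    rcases Nat.lt_or_ge m 2 with h | h
    · -- m = 1
      have hm1'' : m = 1 := by omega
      subst hm1''
      have := smul_mem_L C 1 le_rfl h0 h1 hm1 hmm k 0 t (by omega) (by omega)
      simpa using this
    · obtain ⟨j, d, hj, hd, he⟩ := cover m k t h hk ht
      have := smul_mem_L C m hm1' h0 h1 hm1 hmm k j d hj hd
      rwa [he]

lemma smul_mem_H (H : Set (Finset ℕ)) (hH : IsDCS H) (C : Finset ℕ) (hC : C ∈ H) :
    ∀ k : ℕ, k • C ∈ H := by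
  intro k
  induction k with
  | zero =>
    have : (0 : ℕ) • C = ({0} : Finset ℕ) := by
      rw [zero_nsmul]
      rfl
    rw [this]
    exact hH.2.1
  | succ k ih =>
    rw [succ_nsmul]
    exact hH.2.2.1 _ ih _ hC

/-- The key lemma: if a DCS contains a set with `1` and a set whose reversal contains `1`,
then it is everything. -/
lemma full_of_both (H : Set (Finset ℕ)) (hH : IsDCS H) (A B : Finset ℕ)
    (hA : A ∈ H) (hB : B ∈ H) (h1A : 1 ∈ A) (h1B : 1 ∈ rev B) :
    H = {B : Finset ℕ | 0 ∈ B} := by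
  have h0A := hH.1 A hA
  have h0B := hH.1 B hB
  obtain ⟨b, hb, hbe⟩ := (one_mem_rev B).mp h1B
  have hC : A + B ∈ H := hH.2.2.1 A hA B hB
  set C := A + B with hCdef
  set m := C.sup id with hmdef
  have hsup : m = A.sup id + B.sup id := sup_add' A B h0A h0B
  have h0C : 0 ∈ C := by
    have := Finset.add_mem_add h0A h0B
    simpa using this
  have h1C : 1 ∈ C := by
    have := Finset.add_mem_add h1A h0B
    simpa using this
  have hm1C : m - 1 ∈ C := by
    have hAs : A.sup id ∈ A := sup_mem' A ⟨0, h0A⟩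
    have hmem := Finset.add_mem_add hAs hb
    have h' : A.sup id + b = m - 1 := by omega
    rwa [h'] at hmem
  have hm1 : 1 ≤ m := Finset.le_sup (f := id) h1C
  ext X
  simp only [Set.mem_setOf_eq]
  constructor
  · exact hH.1 X
  · intro h0X
    set s := X.sup id with hsdef
    set k := max m (2 * s) with hkdef
    have hkm : m ≤ k := le_max_left _ _
    have hks : 2 * s ≤ k := le_max_right _ _
    have hIic : Finset.Iic (k * m) ∈ H := by
      rw [← smul_eq_Iic C m rfl h0C h1C hm1C k hkm]
      exact smul_mem_H H hH C hC k
    have hbig : 2 * s ≤ k * m := by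
      calc 2 * s ≤ k := hks
      _ = k * 1 := (Nat.mul_one k).symm
      _ ≤ k * m := Nat.mul_le_mul_left k hm1
    exact hH.2.2.2 _ hIic X h0X (dvd0_Iic X h0X _ hbig)

lemma IsDCS_H1 : IsDCS {B : Finset ℕ | 0 ∈ B ∧ 1 ∉ B} := by
  refine ⟨fun A hA => hA.1, ⟨by simp, by simp⟩, ?_, ?_⟩
  · rintro A ⟨h0A, h1A⟩ B ⟨h0B, h1B⟩
    constructor
    · have := Finset.add_mem_add h0A h0B
      simpa using this
    · intro h
      rw [Finset.mem_add] at h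
      obtain ⟨a, ha, b, hb, hab⟩ := h
      rcases (by omega : a = 1 ∧ b = 0 ∨ a = 0 ∧ b = 1) with ⟨rfl, rfl⟩ | ⟨rfl, rfl⟩
      · exact h1A ha
      · exact h1B hb
  · rintro A ⟨h0A, h1A⟩ B h0B ⟨C, h0C, rfl⟩
    refine ⟨h0B, fun h1B => h1A ?_⟩
    have := Finset.add_mem_add h1B h0C
    simpa using this

lemma IsDCS_H2 : IsDCS {B : Finset ℕ | 0 ∈ B ∧ 1 ∉ rev B} := by
  refine ⟨fun A hA => hA.1, ⟨by simp, by decide⟩, ?_, ?_⟩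
  · rintro A ⟨h0A, h1A⟩ B ⟨h0B, h1B⟩
    constructor
    · have := Finset.add_mem_add h0A h0B
      simpa using this
    · intro h
      obtain ⟨x, hx, hxe⟩ := (one_mem_rev _).mp h
      rw [sup_add' A B h0A h0B] at hxe
      rw [Finset.mem_add] at hx
      obtain ⟨a, ha, b, hb, rfl⟩ := hx
      have haA : a ≤ A.sup id := Finset.le_sup (f := id) ha
      have hbB : b ≤ B.sup id := Finset.le_sup (f := id) hb
      rcases (by omega : a + 1 = A.sup id ∨ b + 1 = B.sup id) with h' | h'
      · exact h1A ((one_mem_rev A).mpr ⟨a, ha, h'⟩)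
      · exact h1B ((one_mem_rev B).mpr ⟨b, hb, h'⟩)
  · rintro A ⟨h0A, h1A⟩ B h0B ⟨C, h0C, rfl⟩
    refine ⟨h0B, fun h1B => h1A ?_⟩
    obtain ⟨b, hb, hbe⟩ := (one_mem_rev B).mp h1B
    have hsC : C.sup id ∈ C := sup_mem' C ⟨0, h0C⟩
    refine (one_mem_rev _).mpr ⟨b + C.sup id, Finset.add_mem_add hb hsC, ?_⟩
    rw [sup_add' B C h0B h0C]
    omega

/-- The maximal divisor-closed submonoids of `P_fin,0(ℕ)` are precisely
`H₁ = {B : 1 ∉ B}` and its image `H₂ = {B : 1 ∉ rev B}` under reversal. -/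
theorem maximal_divisor_closed_submonoids (H : Set (Finset ℕ)) (hH : IsDCS H)
    (hproper : H ≠ {B : Finset ℕ | 0 ∈ B}) :
    ((∀ K : Set (Finset ℕ), IsDCS K → H ⊆ K →
        K = H ∨ K = {B : Finset ℕ | 0 ∈ B}) ↔
      (H = {B : Finset ℕ | 0 ∈ B ∧ 1 ∉ B} ∨
        H = {B : Finset ℕ | 0 ∈ B ∧ 1 ∉ rev B})) := by
  constructor
  · intro hmax
    by_cases h1 : H ⊆ {B : Finset ℕ | 0 ∈ B ∧ 1 ∉ B}
    · left
      rcases hmax _ IsDCS_H1 h1 with h | h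
      · exact h.symm
      · exfalso
        have : ({0, 1} : Finset ℕ) ∈ {B : Finset ℕ | 0 ∈ B ∧ 1 ∉ B} := by
          rw [h]; simp
        exact this.2 (by decide)
    · by_cases h2 : H ⊆ {B : Finset ℕ | 0 ∈ B ∧ 1 ∉ rev B}
      · right
        rcases hmax _ IsDCS_H2 h2 with h | h
        · exact h.symm
        · exfalso
          have : ({0, 1} : Finset ℕ) ∈ {B : Finset ℕ | 0 ∈ B ∧ 1 ∉ rev B} := by
            rw [h]; simp
          exact this.2 (by decide)
      · exfalso
        apply hproper
        obtain ⟨A, hA, hA'⟩ := Set.not_subset.mp h1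
        obtain ⟨B, hB, hB'⟩ := Set.not_subset.mp h2
        have h1A : 1 ∈ A := by
          by_contra h
          exact hA' ⟨hH.1 A hA, h⟩
        have h1B : 1 ∈ rev B := by
          by_contra h
          exact hB' ⟨hH.1 B hB, h⟩
        exact full_of_both H hH A B hA hB h1A h1B
  · rintro (rfl | rfl) <;> intro K hK hsub
    · by_cases h : K ⊆ {B : Finset ℕ | 0 ∈ B ∧ 1 ∉ B}
      · left
        exact Set.Subset.antisymm h hsub
      · right
        obtain ⟨A, hA, hA'⟩ := Set.not_subset.mp h
        have h1A : 1 ∈ A := by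
          by_contra hh
          exact hA' ⟨hK.1 A hA, hh⟩
        have hB0 : ({0, 2, 3} : Finset ℕ) ∈ K := hsub ⟨by decide, by decide⟩
        exact full_of_both K hK A _ hA hB0 h1A (by decide)
    · by_cases h : K ⊆ {B : Finset ℕ | 0 ∈ B ∧ 1 ∉ rev B}
      · left
        exact Set.Subset.antisymm h hsub
      · right
        obtain ⟨B, hB, hB'⟩ := Set.not_subset.mp h
        have h1B : 1 ∈ rev B := by
          by_contra hh
          exact hB' ⟨hK.1 B hB, hh⟩
        have hA0 : ({0, 1, 3} : Finset ℕ) ∈ K := hsub ⟨by decide, by decide⟩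
        exact full_of_both K hK _ B hA0 hB (by decide) h1B
end

section
/- Every ascending chain of divisor-closed submonoids of P_fin,0(ℕ) becomes stationary: if H₁ ⊆ H₂ ⊆ H₃ ⊆ ⋯ is a chain of divisor-closed submonoids of P_fin,0(ℕ), then there exists n such that H_m = H_n for all m ≥ n. -/
/-!
For a divisor-closed submonoid `H` of `P_fin,0(ℕ)` consider the two numerical monoids
generated by the members `A ∈ H` and by their mirrors `max A - A`. They determine `H`: by
Nathanson's structure theorem, for large `n` the sumset `n • A` consists of exactly those
`x ≤ n * max A` with `x ∈ ⟨A⟩` and `n * max A - x ∈ ⟨max A - A⟩`, so every `B ∋ 0` with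
`B ⊆ ⟨A⟩` and `max B - B ⊆ ⟨max A - A⟩` divides `n • A`, and `A` can be taken in `H` because
`H` is closed under sums. Submonoids of `ℕ` are finitely generated, so both chains of
numerical monoids attached to `H₁ ⊆ H₂ ⊆ ⋯` stabilize, and then so does the chain itself.
-/

open Pointwise

namespace Finset

variable {A B : Finset ℕ} {n x : ℕ}

lemma sup_id_mem (hA : A.Nonempty) : A.sup id ∈ A := by
  obtain ⟨a, ha, h⟩ := A.exists_mem_eq_sup hA id
  exact h ▸ ha

lemma sup_id_add (hA : A.Nonempty) (hB : B.Nonempty) :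
    (A + B).sup id = A.sup id + B.sup id := by
  refine le_antisymm (Finset.sup_le fun x hx => ?_) ?_
  · obtain ⟨a, ha, b, hb, rfl⟩ := mem_add.mp hx
    exact add_le_add (le_sup (f := id) ha) (le_sup (f := id) hb)
  · exact le_sup (f := id) (add_mem_add (sup_id_mem hA) (sup_id_mem hB))

lemma sup_id_nsmul (hA : A.Nonempty) (n : ℕ) : (n • A).sup id = n * A.sup id := by
  induction n with
  | zero => simp
  | succ n ih => rw [succ_nsmul, sup_id_add (hA.nsmul) hA, ih, Nat.succ_mul]

lemma nsmul_subset_closure (A : Finset ℕ) (n : ℕ) :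
    (↑(n • A) : Set ℕ) ⊆ AddSubmonoid.closure (A : Set ℕ) := by
  rw [coe_nsmul]
  exact fun x hx => AddSubmonoid.closure_nsmul_le (AddSubmonoid.subset_closure hx)

lemma mem_nsmul_self_of_mem_closure (h0 : 0 ∈ A)
    (hx : x ∈ AddSubmonoid.closure (A : Set ℕ)) : x ∈ x • A := by
  induction hx using AddSubmonoid.closure_induction with
  | mem a ha =>
    rcases Nat.eq_zero_or_pos a with rfl | hpos
    · exact zero_mem_nsmul h0
    · exact subset_nsmul h0 hpos.ne' ha
  | zero => exact zero_mem_nsmul h0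
  | add y z _ _ hy hz => exact add_nsmul A y z ▸ add_mem_add hy hz

lemma mem_nsmul_of_mem_closure (h0 : 0 ∈ A) (hx : x ∈ AddSubmonoid.closure (A : Set ℕ))
    (hxn : x ≤ n) : x ∈ n • A :=
  Finset.nsmul_right_monotone h0 hxn (mem_nsmul_self_of_mem_closure h0 hx)

end Finset

-- `max A - A`, with `A.sup id` standing for `max A` (it is `0` when `A = ∅`)
def mirror (A : Finset ℕ) : Finset ℕ := A.image (A.sup id - ·)

section Mirror

variable {A B : Finset ℕ} {x : ℕ}

open Finset

lemma mem_mirror : x ∈ mirror A ↔ x ≤ A.sup id ∧ A.sup id - x ∈ A := by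
  constructor
  · intro hx
    obtain ⟨a, ha, rfl⟩ := mem_image.mp hx
    have : a ≤ A.sup id := le_sup (f := id) ha
    exact ⟨Nat.sub_le _ _, by rwa [Nat.sub_sub_self this]⟩
  · rintro ⟨hx, hxA⟩
    exact mem_image.mpr ⟨_, hxA, Nat.sub_sub_self hx⟩

lemma sub_mem_mirror {a : ℕ} (ha : a ∈ A) : A.sup id - a ∈ mirror A :=
  mem_image_of_mem _ ha

lemma zero_mem_mirror (hA : A.Nonempty) : 0 ∈ mirror A :=
  mem_mirror.mpr ⟨Nat.zero_le _, by simpa using sup_id_mem hA⟩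

lemma mirror_add (hA : A.Nonempty) (hB : B.Nonempty) :
    mirror (A + B) = mirror A + mirror B := by
  ext x
  simp only [mem_add, mem_mirror, sup_id_add hA hB]
  constructor
  · rintro ⟨hx, a, ha, b, hb, hab⟩
    have : a ≤ A.sup id := le_sup (f := id) ha
    have : b ≤ B.sup id := le_sup (f := id) hb
    exact ⟨A.sup id - a, ⟨by omega, by rwa [Nat.sub_sub_self ‹a ≤ _›]⟩,
      B.sup id - b, ⟨by omega, by rwa [Nat.sub_sub_self ‹b ≤ _›]⟩, by omega⟩
  · rintro ⟨u, ⟨hu, hua⟩, v, ⟨hv, hvb⟩, rfl⟩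
    exact ⟨by omega, _, hua, _, hvb, by omega⟩

lemma mirror_nsmul (hA : A.Nonempty) (n : ℕ) : mirror (n • A) = n • mirror A := by
  induction n with
  | zero => rfl
  | succ n ih => rw [succ_nsmul, succ_nsmul, mirror_add hA.nsmul hA, ih]

lemma mirror_subset_mirror_add (hA : A.Nonempty) (hB : B.Nonempty) :
    mirror A ⊆ mirror (A + B) := by
  rw [mirror_add hA hB]
  exact subset_add_left _ (zero_mem_mirror hB)

lemma setGcd_mirror_dvd (h0 : 0 ∈ A) : Nat.setGcd (mirror A) ∣ Nat.setGcd A := by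
  refine Nat.dvd_setGcd_iff.mpr fun a ha => ?_
  have ha' : a ≤ A.sup id := le_sup (f := id) ha
  have hsup : A.sup id ∈ mirror A := mem_mirror.mpr ⟨le_rfl, by simpa using h0⟩
  rw [← Nat.sub_sub_self ha']
  exact Nat.dvd_sub (Nat.setGcd_dvd_of_mem (mem_coe.mpr hsup))
    (Nat.setGcd_dvd_of_mem (mem_coe.mpr (sub_mem_mirror ha)))

end Mirror

section Structure

variable {A : Finset ℕ} {x : ℕ}

open Finset Filter

lemma mem_nsmul_of_mem_closure_of_frobenius (h0 : 0 ∈ A) {F k : ℕ}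
    (hF : ∀ y ≥ F, Nat.setGcd A ∣ y → y ∈ AddSubmonoid.closure (A : Set ℕ))
    (hx : x ∈ AddSubmonoid.closure (A : Set ℕ))
    (hk : x + (F + A.sup id) * A.sup id ≤ k * A.sup id) : x ∈ k • A := by
  set M := A.sup id
  rcases Nat.eq_zero_or_pos M with hM | hM
  · obtain rfl : x = 0 := by simpa [hM] using hk
    exact zero_mem_nsmul h0
  have hFk : F + M ≤ k := Nat.le_of_mul_le_mul_right (by omega) hM
  by_cases hxF : x < F
  · exact mem_nsmul_of_mem_closure h0 hx (by omega)
  -- `x = q * M + r` with `F ≤ r < F + M`: `q` copies of `M ∈ A`, and `r ∈ ⟨A⟩` is a sum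
  -- of at most `r` elements of `A`.
  set q := (x - F) / M
  have hdiv : q * M + (x - F) % M = x - F := Nat.div_add_mod' _ _
  have hmod : (x - F) % M < M := Nat.mod_lt _ hM
  have hMA : M ∈ A := sup_id_mem ⟨0, h0⟩
  have hr : x - q * M ∈ AddSubmonoid.closure (A : Set ℕ) :=
    hF _ (by omega) (Nat.dvd_sub (Nat.setGcd_dvd_of_mem_closure hx)
      (Dvd.dvd.mul_left (Nat.setGcd_dvd_of_mem (mem_coe.mpr hMA)) q))
  have hsum : x ∈ q • A + (F + M) • A := mem_add.mpr
    ⟨q * M, by simpa using nsmul_mem_nsmul (n := q) hMA,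
      x - q * M, mem_nsmul_of_mem_closure h0 hr (by omega), by omega⟩
  have hq : q + (F + M) ≤ k :=
    Nat.le_of_mul_le_mul_right (by rw [add_mul]; omega) hM
  rw [← add_nsmul] at hsum
  exact Finset.nsmul_right_monotone h0 hq hsum

lemma le_and_mem_closure_of_mem_nsmul (hA : A.Nonempty) {n : ℕ} (hx : x ∈ n • A) :
    x ≤ n * A.sup id ∧ x ∈ AddSubmonoid.closure (A : Set ℕ) ∧
      n * A.sup id - x ∈ AddSubmonoid.closure (mirror A : Set ℕ) := by
  have hle : x ≤ n * A.sup id := sup_id_nsmul hA n ▸ le_sup (f := id) hx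
  have hmir : n * A.sup id - x ∈ n • mirror A := by
    rw [← mirror_nsmul hA, mem_mirror, sup_id_nsmul hA, Nat.sub_sub_self hle]
    exact ⟨Nat.sub_le _ _, hx⟩
  exact ⟨hle, nsmul_subset_closure A n hx, nsmul_subset_closure _ n hmir⟩

lemma mem_nsmul_of_mem_closure_mirror (h0 : 0 ∈ A) {F n : ℕ}
    (hF : ∀ y ≥ F, Nat.setGcd A ∣ y → y ∈ AddSubmonoid.closure (A : Set ℕ))
    (hn : (F + A.sup id) * A.sup id ≤ n) (hx : x ≤ n * A.sup id)
    (hxA : x ∈ AddSubmonoid.closure (A : Set ℕ))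
    (hxA' : n * A.sup id - x ∈ AddSubmonoid.closure (mirror A : Set ℕ)) : x ∈ n • A := by
  have hA : A.Nonempty := ⟨0, h0⟩
  by_cases hnx : n * A.sup id - x ≤ n
  · have hmir := mem_nsmul_of_mem_closure (zero_mem_mirror hA) hxA' hnx
    rw [← mirror_nsmul hA, mem_mirror, sup_id_nsmul hA, Nat.sub_sub_self hx] at hmir
    exact hmir.2
  · exact mem_nsmul_of_mem_closure_of_frobenius h0 hF hxA (by omega)

theorem eventually_mem_nsmul_iff (h0 : 0 ∈ A) :
    ∀ᶠ n in atTop, ∀ x, x ∈ n • A ↔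
      x ≤ n * A.sup id ∧ x ∈ AddSubmonoid.closure (A : Set ℕ) ∧
      n * A.sup id - x ∈ AddSubmonoid.closure (mirror A : Set ℕ) := by
  obtain ⟨F, hF⟩ := Nat.exists_mem_closure_of_ge (A : Set ℕ)
  filter_upwards [eventually_ge_atTop ((F + A.sup id) * A.sup id)] with n hn x
  exact ⟨le_and_mem_closure_of_mem_nsmul ⟨0, h0⟩, fun ⟨hx, hxA, hxA'⟩ =>
    mem_nsmul_of_mem_closure_mirror h0 hF hn hx hxA hxA'⟩

end Structure

section Divisibility

variable {A B : Finset ℕ}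

open Finset Filter

open Classical in
noncomputable def cofactor (A : Finset ℕ) (m : ℕ) : Finset ℕ :=
  (range (m + 1)).filter fun c => c ∈ AddSubmonoid.closure (A : Set ℕ) ∧
    m - c ∈ AddSubmonoid.closure (mirror A : Set ℕ)

lemma mem_cofactor {m c : ℕ} :
    c ∈ cofactor A m ↔ c ≤ m ∧ c ∈ AddSubmonoid.closure (A : Set ℕ) ∧
      m - c ∈ AddSubmonoid.closure (mirror A : Set ℕ) := by
  simp only [cofactor, mem_filter, mem_range, Order.lt_add_one_iff]

lemma eq_singleton_zero_of_subset_closure (hA : A.sup id = 0) (h0B : 0 ∈ B)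
    (hB : (B : Set ℕ) ⊆ AddSubmonoid.closure (A : Set ℕ)) : B = {0} := by
  have hg : Nat.setGcd (A : Set ℕ) = 0 :=
    Nat.setGcd_eq_zero_iff.mpr fun a ha => (Finset.sup_eq_bot_iff id A).mp hA a ha
  exact eq_singleton_iff_unique_mem.mpr ⟨h0B, fun b hb =>
    Nat.eq_zero_of_zero_dvd (hg ▸ Nat.setGcd_dvd_of_mem_closure (hB hb))⟩

theorem exists_dvd0_nsmul (h0A : 0 ∈ A) (h0B : 0 ∈ B)
    (hB : (B : Set ℕ) ⊆ AddSubmonoid.closure (A : Set ℕ))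
    (hB' : (mirror B : Set ℕ) ⊆ AddSubmonoid.closure (mirror A : Set ℕ)) :
    ∃ n : ℕ, Dvd0 B (n • A) := by
  rcases Nat.eq_zero_or_pos (A.sup id) with hM | hM
  · refine ⟨0, {0}, mem_singleton_self 0, ?_⟩
    rw [eq_singleton_zero_of_subset_closure hM h0B hB, zero_nsmul]
    rfl
  set β := B.sup id
  obtain ⟨F, hF⟩ := Nat.exists_mem_closure_of_ge (A : Set ℕ)
  obtain ⟨F', hF'⟩ := Nat.exists_mem_closure_of_ge (mirror A : Set ℕ)
  obtain ⟨n, hnA, hn⟩ :=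
    ((eventually_mem_nsmul_iff h0A).and (eventually_ge_atTop (2 * β + F + F'))).exists
  set M := A.sup id
  have hnM : n ≤ n * M := Nat.le_mul_of_pos_right n hM
  have hβ : β ∈ B := sup_id_mem ⟨0, h0B⟩
  have hgβ : Nat.setGcd A ∣ β := Nat.setGcd_dvd_of_mem_closure (hB hβ)
  have hgM : Nat.setGcd A ∣ M := Nat.setGcd_dvd_of_mem (mem_coe.mpr (sup_id_mem ⟨0, h0A⟩))
  have hg' : Nat.setGcd (mirror A) ∣ n * M - β :=
    (setGcd_mirror_dvd h0A).trans (Nat.dvd_sub (hgM.mul_left n) hgβ)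
  refine ⟨n, cofactor A (n * M - β),
    mem_cofactor.mpr ⟨Nat.zero_le _, zero_mem _, hF' _ (by omega) hg'⟩, ?_⟩
  ext x
  rw [hnA, Finset.mem_add]
  constructor
  · rintro ⟨hx, hxA, hxA'⟩
    have hgx : Nat.setGcd A ∣ x := Nat.setGcd_dvd_of_mem_closure hxA
    by_cases hxβ : β + F ≤ x
    · refine ⟨β, hβ, x - β, mem_cofactor.mpr
        ⟨by omega, hF _ (by omega) (Nat.dvd_sub hgx hgβ), ?_⟩, by omega⟩
      rwa [show n * M - β - (x - β) = n * M - x by omega]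
    · refine ⟨0, h0B, x, mem_cofactor.mpr ⟨by omega, hxA, hF' _ (by omega) ?_⟩, zero_add x⟩
      exact Nat.dvd_sub hg' ((setGcd_mirror_dvd h0A).trans hgx)
  · rintro ⟨b, hb, c, hc, rfl⟩
    obtain ⟨hcle, hcA, hcA'⟩ := mem_cofactor.mp hc
    have hbβ : b ≤ β := le_sup (f := id) hb
    refine ⟨by omega, add_mem (hB hb) hcA, ?_⟩
    rw [show n * M - (b + c) = (β - b) + (n * M - β - c) by omega]
    exact add_mem (hB' (sub_mem_mirror hb)) hcA'

end Divisibility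

def unionClosure (f : Finset ℕ → Finset ℕ) (H : Set (Finset ℕ)) : AddSubmonoid ℕ :=
  AddSubmonoid.closure (⋃ A ∈ H, (f A : Set ℕ))

section UnionClosure

variable {f : Finset ℕ → Finset ℕ} {H : Set (Finset ℕ)} {A B : Finset ℕ}

lemma unionClosure_mono (f : Finset ℕ → Finset ℕ) : Monotone (unionClosure f) :=
  fun _ _ h => AddSubmonoid.closure_mono (Set.biUnion_subset_biUnion_left h)

lemma subset_unionClosure (hA : A ∈ H) : (f A : Set ℕ) ⊆ unionClosure f H :=
  fun _ hx => AddSubmonoid.subset_closure (Set.mem_biUnion hA hx)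

lemma exists_subset_closure_of_subset_unionClosure (hne : H.Nonempty)
    (hdir : DirectedOn (fun A A' => f A ⊆ f A') H) (hB : (B : Set ℕ) ⊆ unionClosure f H) :
    ∃ A ∈ H, (B : Set ℕ) ⊆ AddSubmonoid.closure (f A : Set ℕ) := by
  have hdir' : DirectedOn (fun A A' => (AddSubmonoid.closure (f A : Set ℕ) : Set ℕ) ⊆
      AddSubmonoid.closure (f A' : Set ℕ)) H :=
    hdir.mono fun _ _ h => AddSubmonoid.closure_mono (Finset.coe_subset.mpr h)
  refine hdir'.exists_mem_subset_of_finset_subset_biUnion hne (hB.trans fun x hx => ?_)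
  induction hx using AddSubmonoid.closure_induction with
  | mem y hy =>
    obtain ⟨A, hA, hyA⟩ := Set.mem_iUnion₂.mp hy
    exact Set.mem_iUnion₂.mpr ⟨A, hA, AddSubmonoid.subset_closure hyA⟩
  | zero =>
    obtain ⟨A, hA⟩ := hne
    exact Set.mem_iUnion₂.mpr ⟨A, hA, zero_mem _⟩
  | add y z _ _ hy hz =>
    obtain ⟨A, hA, hyA⟩ := Set.mem_iUnion₂.mp hy
    obtain ⟨A', hA', hzA'⟩ := Set.mem_iUnion₂.mp hz
    obtain ⟨C, hC, hAC, hA'C⟩ := hdir' A hA A' hA'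
    exact Set.mem_iUnion₂.mpr ⟨C, hC, add_mem (hAC hyA) (hA'C hzA')⟩

end UnionClosure

namespace IsDCS

variable {H H' : Set (Finset ℕ)}

lemma nsmul_mem (hH : IsDCS H) {A : Finset ℕ} (hA : A ∈ H) (n : ℕ) : n • A ∈ H := by
  induction n with
  | zero => exact hH.2.1
  | succ n ih => exact succ_nsmul A n ▸ hH.2.2.1 _ ih _ hA

lemma directedOn_subset (hH : IsDCS H) : DirectedOn (fun A A' => id A ⊆ id A') H :=
  fun A hA A' hA' => ⟨A + A', hH.2.2.1 A hA A' hA', Finset.subset_add_left A (hH.1 A' hA'),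
    Finset.subset_add_right A' (hH.1 A hA)⟩

lemma directedOn_mirror_subset (hH : IsDCS H) :
    DirectedOn (fun A A' => mirror A ⊆ mirror A') H := fun A hA A' hA' =>
  have hne : ∀ A ∈ H, A.Nonempty := fun A hA => ⟨0, hH.1 A hA⟩
  ⟨A + A', hH.2.2.1 A hA A' hA', mirror_subset_mirror_add (hne A hA) (hne A' hA'),
    add_comm A' A ▸ mirror_subset_mirror_add (hne A' hA') (hne A hA)⟩

theorem subset_of_unionClosure_le (hH : IsDCS H) (hH' : IsDCS H')
    (hid : unionClosure id H' ≤ unionClosure id H)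
    (hmirror : unionClosure mirror H' ≤ unionClosure mirror H) : H' ⊆ H := by
  intro B hB
  have h0B : 0 ∈ B := hH'.1 B hB
  obtain ⟨A₁, hA₁, hBA₁⟩ := exists_subset_closure_of_subset_unionClosure ⟨_, hH.2.1⟩
    hH.directedOn_subset ((subset_unionClosure (f := id) hB).trans hid)
  obtain ⟨A₂, hA₂, hBA₂⟩ := exists_subset_closure_of_subset_unionClosure ⟨_, hH.2.1⟩
    hH.directedOn_mirror_subset ((subset_unionClosure (f := mirror) hB).trans hmirror)
  have h0A₁ := hH.1 A₁ hA₁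
  have h0A₂ := hH.1 A₂ hA₂
  have hA₁sub : A₁ ⊆ A₁ + A₂ := Finset.subset_add_left A₁ h0A₂
  have hA₂sub : mirror A₂ ⊆ mirror (A₁ + A₂) :=
    add_comm A₁ A₂ ▸ mirror_subset_mirror_add ⟨0, h0A₂⟩ ⟨0, h0A₁⟩
  obtain ⟨n, hn⟩ := exists_dvd0_nsmul (by simpa using Finset.add_mem_add h0A₁ h0A₂) h0B
    (hBA₁.trans (AddSubmonoid.closure_mono (Finset.coe_subset.mpr hA₁sub)))
    (hBA₂.trans (AddSubmonoid.closure_mono (Finset.coe_subset.mpr hA₂sub)))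
  exact hH.2.2.2 _ (hH.nsmul_mem (hH.2.2.1 _ hA₁ _ hA₂) n) B h0B hn

end IsDCS

-- `ℕ` is a Noetherian semiring, and its submodules are its additive submonoids.
instance AddSubmonoid.nat_wellFoundedGT : WellFoundedGT (AddSubmonoid ℕ) :=
  AddSubmonoid.toNatSubmodule.strictMono.wellFoundedGT

/-- Every ascending chain of divisor-closed submonoids of `P_fin,0(ℕ)`
becomes stationary. -/
theorem ascending_chain_condition (H : ℕ → Set (Finset ℕ))
    (hDCS : ∀ n, IsDCS (H n)) (hchain : ∀ n, H n ⊆ H (n + 1)) :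
    ∃ n : ℕ, ∀ m : ℕ, n ≤ m → H m = H n := by
  have hmono : Monotone H := monotone_nat_of_le_succ hchain
  let T : ℕ →o AddSubmonoid ℕ × AddSubmonoid ℕ :=
    ⟨fun n => (unionClosure id (H n), unionClosure mirror (H n)),
      fun _ _ h => ⟨unionClosure_mono id (hmono h), unionClosure_mono mirror (hmono h)⟩⟩
  obtain ⟨N, hN⟩ := WellFoundedGT.monotone_chain_condition T
  refine ⟨N, fun m hm => Set.Subset.antisymm ?_ (hmono hm)⟩
  obtain ⟨hid, hmirror⟩ := Prod.ext_iff.mp (hN m hm)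
  exact (hDCS N).subset_of_unionClosure_le (hDCS m) hid.ge hmirror.ge
end

section
/- Let S be a numerical monoid and let H be a divisor-closed submonoid of P_fin,0(S) with H ≠ {{0}}. Then H is not torsion-free: there exist A, B ∈ H with A ≠ B and A + A = B + B. -/
open Pointwise

/-- The restricted power monoid `P_fin,0(S)`: finite subsets of `S` containing `0`. -/
def Pfin0 (S : AddSubmonoid ℕ) : Set (Finset ℕ) :=
  {A | 0 ∈ A ∧ (A : Set ℕ) ⊆ (S : Set ℕ)}

/-- Divisibility in `P_fin,0(S)`: `B` divides `A` if `A = B + C` for some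
`C ∈ P_fin,0(S)`. -/
def Dvd0S (S : AddSubmonoid ℕ) (B A : Finset ℕ) : Prop := ∃ C ∈ Pfin0 S, A = B + C

/-- Divisor-closed submonoids of `P_fin,0(S)`. -/
def IsDCS0 (S : AddSubmonoid ℕ) (H : Set (Finset ℕ)) : Prop :=
  H ⊆ Pfin0 S ∧ ({0} : Finset ℕ) ∈ H ∧
    (∀ A ∈ H, ∀ B ∈ H, A + B ∈ H) ∧
    (∀ A ∈ H, ∀ B ∈ Pfin0 S, Dvd0S S B A → B ∈ H)

/-- Iterated sumset: `iterAdd X n = X + X + ⋯ + X` (n times), with `iterAdd X 0 = {0}`. -/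
def iterAdd (X : Finset ℕ) : ℕ → Finset ℕ
  | 0 => {0}
  | n + 1 => iterAdd X n + X

lemma mem_iterAdd {X : Finset ℕ} {n s : ℕ} :
    s ∈ iterAdd X n ↔
      ∃ M : Multiset ℕ, Multiset.card M = n ∧ (∀ x ∈ M, x ∈ X) ∧ M.sum = s := by
  induction n generalizing s with
  | zero =>
    simp only [iterAdd, Finset.mem_singleton]
    constructor
    · rintro rfl; exact ⟨0, by simp⟩
    · rintro ⟨M, hc, _, hs⟩
      rw [Multiset.card_eq_zero] at hc
      subst hc; simpa using hs.symm
  | succ n ih =>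
    simp only [iterAdd, Finset.mem_add]
    constructor
    · rintro ⟨t, ht, x, hx, rfl⟩
      obtain ⟨M, hc, hmem, hs⟩ := ih.1 ht
      refine ⟨x ::ₘ M, by simp [hc], ?_, by simp [hs, add_comm]⟩
      intro y hy
      rcases Multiset.mem_cons.1 hy with h | h
      · exact h ▸ hx
      · exact hmem y h
    · rintro ⟨M, hc, hmem, rfl⟩
      have hne : M ≠ 0 := by
        intro h; subst h; simp at hc
      obtain ⟨a, ha⟩ := Multiset.exists_mem_of_ne_zero hne
      obtain ⟨M', rfl⟩ := Multiset.exists_cons_of_mem ha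
      refine ⟨M'.sum, ih.2 ⟨M', by simpa using hc, fun y hy => hmem y (Multiset.mem_cons_of_mem hy), rfl⟩,
        a, hmem a (Multiset.mem_cons_self a M'), ?_⟩
      simp [add_comm]

lemma iterAdd_subset {X : Finset ℕ} (h0 : 0 ∈ X) {k n : ℕ} (h : k ≤ n) :
    iterAdd X k ⊆ iterAdd X n := by
  intro s hs
  obtain ⟨M, hc, hmem, hsum⟩ := mem_iterAdd.1 hs
  refine mem_iterAdd.2 ⟨M + Multiset.replicate (n - k) 0, by simp [hc]; omega, ?_, by simp [hsum]⟩
  intro y hy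
  rcases Multiset.mem_add.1 hy with h' | h'
  · exact hmem y h'
  · rw [Multiset.eq_of_mem_replicate h']; exact h0

lemma zero_mem_iterAdd {X : Finset ℕ} (h0 : 0 ∈ X) (n : ℕ) : 0 ∈ iterAdd X n :=
  mem_iterAdd.2 ⟨Multiset.replicate n 0, by simp, fun y hy => (Multiset.eq_of_mem_replicate hy) ▸ h0, by simp⟩

lemma key_s12 (X : Finset ℕ) (h0 : 0 ∈ X) {m : ℕ} (hm : m ∈ X)
    (hmax : ∀ x ∈ X, x ≤ m) (hmpos : 0 < m) :
    iterAdd X (m * X.card + 1) = iterAdd X (m * X.card) + ({0, m} : Finset ℕ) := by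
  set N := m * X.card with hN
  have hcard : 1 ≤ X.card := Finset.card_pos.2 ⟨0, h0⟩
  apply Finset.Subset.antisymm
  · intro s hs
    obtain ⟨M, hc, hmem, hsum⟩ := mem_iterAdd.1 hs
    by_cases hz : (0 : ℕ) ∈ M
    · obtain ⟨M', rfl⟩ := Multiset.exists_cons_of_mem hz
      have hs' : s ∈ iterAdd X N :=
        mem_iterAdd.2 ⟨M', by simpa using hc, fun y hy => hmem y (Multiset.mem_cons_of_mem hy),
          by simpa using hsum⟩
      have : s + 0 ∈ iterAdd X N + ({0, m} : Finset ℕ) :=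
        Finset.add_mem_add hs' (by simp)
      simpa using this
    by_cases hmM : m ∈ M
    · obtain ⟨M', rfl⟩ := Multiset.exists_cons_of_mem hmM
      have hs' : M'.sum ∈ iterAdd X N :=
        mem_iterAdd.2 ⟨M', by simpa using hc, fun y hy => hmem y (Multiset.mem_cons_of_mem hy), rfl⟩
      have : M'.sum + m ∈ iterAdd X N + ({0, m} : Finset ℕ) :=
        Finset.add_mem_add hs' (by simp)
      have hsum' : M'.sum + m = s := by
        rw [← hsum]; simp [add_comm]
      rwa [hsum'] at this
    -- all elements of M are strictly between 0 and m; pigeonhole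
    · have hpig : ∃ v, m ≤ M.count v := by
        by_contra hcon
        push_neg at hcon
        have htf : M.toFinset ⊆ X := fun y hy => hmem y (Multiset.mem_toFinset.1 hy)
        have h1 : Multiset.card M = ∑ a ∈ M.toFinset, M.count a :=
          (Multiset.toFinset_sum_count_eq M).symm
        have h2 : ∑ a ∈ M.toFinset, M.count a ≤ ∑ a ∈ M.toFinset, (m - 1) :=
          Finset.sum_le_sum (fun a _ => by have := hcon a; omega)
        have h3 : ∑ a ∈ M.toFinset, (m - 1) = M.toFinset.card * (m - 1) := by
          simp [Finset.sum_const, mul_comm]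
        have h4 : M.toFinset.card ≤ X.card := Finset.card_le_card htf
        have h5 : M.toFinset.card * (m - 1) ≤ X.card * (m - 1) :=
          Nat.mul_le_mul_right _ h4
        have : N + 1 ≤ X.card * (m - 1) := by omega
        have : X.card * (m - 1) < N + 1 := by
          have : X.card * (m - 1) ≤ X.card * m := Nat.mul_le_mul_left _ (by omega)
          have hNe : N = X.card * m := by rw [hN, mul_comm]
          omega
        omega
      obtain ⟨v, hv⟩ := hpig
      have hvM : v ∈ M := by
        apply Multiset.count_pos.1; omega
      have hvX : v ∈ X := hmem v hvM
      have hv0 : v ≠ 0 := fun h => hz (h ▸ hvM)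
      have hvm : v ≠ m := fun h => hmM (h ▸ hvM)
      have hvlt : v < m := lt_of_le_of_ne (hmax v hvX) hvm
      have hrep : Multiset.replicate m v ≤ M := Multiset.le_count_iff_replicate_le.1 hv
      obtain ⟨M'', hM''⟩ := Multiset.le_iff_exists_add.1 hrep
      -- new multiset: M'' + replicate v m
      have hcard'' : Multiset.card M'' = N + 1 - m := by
        have := congrArg Multiset.card hM''
        simp at this; omega
      have hmN : m ≤ N := by
        calc m = m * 1 := by ring
        _ ≤ m * X.card := Nat.mul_le_mul_left _ hcard
      have hk : Multiset.card (M'' + Multiset.replicate v m) ≤ N := by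
        simp [hcard'']; omega
      have hs' : s ∈ iterAdd X (Multiset.card (M'' + Multiset.replicate v m)) := by
        refine mem_iterAdd.2 ⟨M'' + Multiset.replicate v m, rfl, ?_, ?_⟩
        · intro y hy
          rcases Multiset.mem_add.1 hy with h' | h'
          · exact hmem y (hM'' ▸ (Multiset.mem_add.2 (Or.inr h')))
          · rw [Multiset.eq_of_mem_replicate h']; exact hm
        · have h1 : M.sum = m * v + M''.sum := by
            rw [hM'']; simp [Multiset.sum_replicate, mul_comm]
          have h2 : (M'' + Multiset.replicate v m).sum = M''.sum + v * m := by
            simp [Multiset.sum_replicate, mul_comm]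
          rw [h2, ← hsum, h1]; ring
      have hs'' : s ∈ iterAdd X N := iterAdd_subset h0 hk hs'
      have : s + 0 ∈ iterAdd X N + ({0, m} : Finset ℕ) :=
        Finset.add_mem_add hs'' (by simp)
      simpa using this
  · intro s hs
    obtain ⟨t, ht, x, hx, rfl⟩ := Finset.mem_add.1 hs
    show t + x ∈ iterAdd X N + X
    refine Finset.add_mem_add ht ?_
    rcases Finset.mem_insert.1 hx with h | h
    · exact h ▸ h0
    · exact (Finset.mem_singleton.1 h) ▸ hm

lemma Pfin0_add {S : AddSubmonoid ℕ} {A B : Finset ℕ} (hA : A ∈ Pfin0 S) (hB : B ∈ Pfin0 S) :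
    A + B ∈ Pfin0 S := by
  refine ⟨?_, ?_⟩
  · have := Finset.add_mem_add hA.1 hB.1
    simpa using this
  · intro x hx
    obtain ⟨a, ha, b, hb, rfl⟩ := Finset.mem_add.1 hx
    exact S.add_mem (hA.2 ha) (hB.2 hb)

lemma Pfin0_zero {S : AddSubmonoid ℕ} : ({0} : Finset ℕ) ∈ Pfin0 S := by
  refine ⟨Finset.mem_singleton_self 0, ?_⟩
  intro x hx
  simp at hx
  simpa [hx] using S.zero_mem

lemma iterAdd_mem_Pfin0 {S : AddSubmonoid ℕ} {X : Finset ℕ} (hX : X ∈ Pfin0 S) (n : ℕ) :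
    iterAdd X n ∈ Pfin0 S := by
  induction n with
  | zero => exact Pfin0_zero
  | succ n ih => exact Pfin0_add ih hX

lemma iterAdd_mem_H {S : AddSubmonoid ℕ} {H : Set (Finset ℕ)} (hH : IsDCS0 S H)
    {X : Finset ℕ} (hX : X ∈ H) (n : ℕ) : iterAdd X n ∈ H := by
  induction n with
  | zero => exact hH.2.1
  | succ n ih => exact hH.2.2.1 _ ih _ hX

/-- Every nontrivial divisor-closed submonoid of the restricted power monoid of a
numerical monoid fails to be torsion-free. -/
theorem not_torsion_free (S : AddSubmonoid ℕ) (hfin : ((S : Set ℕ)ᶜ).Finite)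
    (H : Set (Finset ℕ)) (hH : IsDCS0 S H) (hne : H ≠ {({0} : Finset ℕ)}) :
    ∃ A ∈ H, ∃ B ∈ H, A ≠ B ∧ A + A = B + B := by
  obtain ⟨hHP, h0H, hadd, hdvd⟩ := hH
  -- find a nontrivial element X of H
  have hX : ∃ X ∈ H, X ≠ ({0} : Finset ℕ) := by
    by_contra hcon
    push_neg at hcon
    exact hne (Set.eq_singleton_iff_unique_mem.2 ⟨h0H, hcon⟩)
  obtain ⟨X, hXH, hXne⟩ := hX
  have hXP : X ∈ Pfin0 S := hHP hXH
  have h0X : 0 ∈ X := hXP.1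
  -- find a nonzero element of X
  have hd : ∃ d ∈ X, d ≠ 0 := by
    by_contra hcon
    push_neg at hcon
    apply hXne
    apply Finset.Subset.antisymm
    · intro x hx; simpa using hcon x hx
    · simpa using h0X
  obtain ⟨d, hdX, hd0⟩ := hd
  -- the max of X
  have hXne' : X.Nonempty := ⟨0, h0X⟩
  set m := X.max' hXne' with hm
  have hmX : m ∈ X := X.max'_mem hXne'
  have hmax : ∀ x ∈ X, x ≤ m := fun x hx => X.le_max' x hx
  have hmpos : 0 < m := lt_of_lt_of_le (Nat.pos_of_ne_zero hd0) (hmax d hdX)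
  have hmS : m ∈ S := hXP.2 hmX
  have hkmS : ∀ k : ℕ, k * m ∈ S := by
    intro k
    have := S.nsmul_mem hmS k
    simpa [nsmul_eq_mul] using this
  -- {0, m} ∈ H, by divisor-closedness
  set P : Finset ℕ := {0, m} with hP
  have hPP : P ∈ Pfin0 S := by
    refine ⟨by simp [hP], ?_⟩
    intro x hx
    rcases Finset.mem_insert.1 hx with h | h
    · simpa [h] using S.zero_mem
    · rw [Finset.mem_singleton.1 h]; exact hmS
  have hPH : P ∈ H := by
    apply hdvd (iterAdd X (m * X.card + 1)) (iterAdd_mem_H ⟨hHP, h0H, hadd, hdvd⟩ hXH _) P hPP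
    exact ⟨iterAdd X (m * X.card), iterAdd_mem_Pfin0 hXP _,
      by rw [key_s12 X h0X hmX hmax hmpos, add_comm]⟩
  -- now build the torsion pair
  set A : Finset ℕ := {0, m, 2 * m, 3 * m, 4 * m} with hA
  set B : Finset ℕ := {0, m, 3 * m, 4 * m} with hB
  have e1 : P + P = ({0, m, 2 * m} : Finset ℕ) := by
    ext x
    simp only [hP, Finset.mem_add, Finset.mem_insert, Finset.mem_singleton]
    constructor
    · rintro ⟨a, ha, b, hb, rfl⟩; omega
    · intro h
      rcases h with h | h | h
      · exact ⟨0, Or.inl rfl, 0, Or.inl rfl, by omega⟩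
      · exact ⟨0, Or.inl rfl, m, Or.inr rfl, by omega⟩
      · exact ⟨m, Or.inr rfl, m, Or.inr rfl, by omega⟩
  have e2 : ({0, m, 2 * m} : Finset ℕ) + ({0, m, 2 * m} : Finset ℕ) = A := by
    ext x
    simp only [hA, Finset.mem_add, Finset.mem_insert, Finset.mem_singleton]
    constructor
    · rintro ⟨a, ha, b, hb, rfl⟩; omega
    · intro h
      rcases h with h | h | h | h | h
      · exact ⟨0, by omega, 0, by omega, by omega⟩
      · exact ⟨0, by omega, m, by omega, by omega⟩
      · exact ⟨0, by omega, 2 * m, by omega, by omega⟩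
      · exact ⟨m, by omega, 2 * m, by omega, by omega⟩
      · exact ⟨2 * m, by omega, 2 * m, by omega, by omega⟩
  have e3 : A + P = ({0, m, 2 * m, 3 * m, 4 * m, 5 * m} : Finset ℕ) := by
    ext x
    simp only [hA, hP, Finset.mem_add, Finset.mem_insert, Finset.mem_singleton]
    constructor
    · rintro ⟨a, ha, b, hb, rfl⟩; omega
    · intro h
      rcases h with h | h | h | h | h | h
      · exact ⟨0, by omega, 0, by omega, by omega⟩
      · exact ⟨m, by omega, 0, by omega, by omega⟩
      · exact ⟨2 * m, by omega, 0, by omega, by omega⟩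
      · exact ⟨3 * m, by omega, 0, by omega, by omega⟩
      · exact ⟨4 * m, by omega, 0, by omega, by omega⟩
      · exact ⟨4 * m, by omega, m, by omega, by omega⟩
  have e4 : B + P = ({0, m, 2 * m, 3 * m, 4 * m, 5 * m} : Finset ℕ) := by
    ext x
    simp only [hB, hP, Finset.mem_add, Finset.mem_insert, Finset.mem_singleton]
    constructor
    · rintro ⟨a, ha, b, hb, rfl⟩; omega
    · intro h
      rcases h with h | h | h | h | h | h
      · exact ⟨0, by omega, 0, by omega, by omega⟩
      · exact ⟨m, by omega, 0, by omega, by omega⟩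
      · exact ⟨m, by omega, m, by omega, by omega⟩
      · exact ⟨3 * m, by omega, 0, by omega, by omega⟩
      · exact ⟨4 * m, by omega, 0, by omega, by omega⟩
      · exact ⟨4 * m, by omega, m, by omega, by omega⟩
  have hAH : A ∈ H := by
    have h2 : P + P ∈ H := hadd _ hPH _ hPH
    rw [e1] at h2
    have h4 : ({0, m, 2*m} : Finset ℕ) + ({0, m, 2*m} : Finset ℕ) ∈ H := hadd _ h2 _ h2
    rwa [e2] at h4
  have hA5H : ({0, m, 2 * m, 3 * m, 4 * m, 5 * m} : Finset ℕ) ∈ H := by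
    have := hadd _ hAH _ hPH
    rwa [e3] at this
  have hBP : B ∈ Pfin0 S := by
    refine ⟨by simp [hB], ?_⟩
    intro x hx
    simp only [hB, Finset.coe_insert, Finset.coe_singleton, Set.mem_insert_iff,
      Set.mem_singleton_iff] at hx
    rcases hx with h | h | h | h
    · simpa [h] using S.zero_mem
    · rw [h]; exact hmS
    · rw [h]; exact hkmS 3
    · rw [h]; exact hkmS 4
  have hBH : B ∈ H := by
    apply hdvd _ hA5H B hBP
    exact ⟨P, hPP, e4.symm⟩
  have e5 : A + A = ({0, m, 2*m, 3*m, 4*m, 5*m, 6*m, 7*m, 8*m} : Finset ℕ) := by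
    ext x
    simp only [hA, Finset.mem_add, Finset.mem_insert, Finset.mem_singleton]
    constructor
    · rintro ⟨a, ha, b, hb, rfl⟩; omega
    · intro h
      rcases h with h|h|h|h|h|h|h|h|h
      · exact ⟨0, by omega, 0, by omega, by omega⟩
      · exact ⟨0, by omega, m, by omega, by omega⟩
      · exact ⟨m, by omega, m, by omega, by omega⟩
      · exact ⟨m, by omega, 2*m, by omega, by omega⟩
      · exact ⟨2*m, by omega, 2*m, by omega, by omega⟩
      · exact ⟨m, by omega, 4*m, by omega, by omega⟩
      · exact ⟨2*m, by omega, 4*m, by omega, by omega⟩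
      · exact ⟨3*m, by omega, 4*m, by omega, by omega⟩
      · exact ⟨4*m, by omega, 4*m, by omega, by omega⟩
  have e6 : B + B = ({0, m, 2*m, 3*m, 4*m, 5*m, 6*m, 7*m, 8*m} : Finset ℕ) := by
    ext x
    simp only [hB, Finset.mem_add, Finset.mem_insert, Finset.mem_singleton]
    constructor
    · rintro ⟨a, ha, b, hb, rfl⟩; omega
    · intro h
      rcases h with h|h|h|h|h|h|h|h|h
      · exact ⟨0, by omega, 0, by omega, by omega⟩
      · exact ⟨0, by omega, m, by omega, by omega⟩
      · exact ⟨m, by omega, m, by omega, by omega⟩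
      · exact ⟨0, by omega, 3*m, by omega, by omega⟩
      · exact ⟨m, by omega, 3*m, by omega, by omega⟩
      · exact ⟨m, by omega, 4*m, by omega, by omega⟩
      · exact ⟨3*m, by omega, 3*m, by omega, by omega⟩
      · exact ⟨3*m, by omega, 4*m, by omega, by omega⟩
      · exact ⟨4*m, by omega, 4*m, by omega, by omega⟩
  refine ⟨A, hAH, B, hBH, ?_, e5.trans e6.symm⟩
  intro h
  have h2m : 2 * m ∈ A := by simp [hA]
  rw [h] at h2m
  simp only [hB, Finset.mem_insert, Finset.mem_singleton] at h2m
  omega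
end

section
/- Let S and S' be numerical monoids such that the restricted power monoids P_fin,0(S) and P_fin,0(S') are isomorphic as additive monoids. Then S and S' have the same number of atoms, |A(S)| = |A(S')|, and m(S) = m(S'), where m(T) denotes the smallest integer m ≥ max A(T) such that both m and m − 1 lie in T. -/
open Pointwise

/-- The set of atoms of a numerical monoid `S`: nonzero elements of `S` that are
not the sum of two nonzero elements of `S`. -/
def natAtoms (S : AddSubmonoid ℕ) : Set ℕ :=
  {a | a ∈ S ∧ a ≠ 0 ∧ ∀ b ∈ S, ∀ c ∈ S, b ≠ 0 → c ≠ 0 → a ≠ b + c}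

/-- `m(S)`: the smallest `m ≥ max A(S)` with `m ∈ S` and `m - 1 ∈ S`. -/
noncomputable def mval (S : AddSubmonoid ℕ) : ℕ :=
  sInf {m : ℕ | sSup (natAtoms S) ≤ m ∧ m ∈ S ∧ m - 1 ∈ S}

namespace IsoAux

/-- The maximum of a finset of naturals. -/
def M (A : Finset ℕ) : ℕ := A.sup id

lemma le_M {A : Finset ℕ} {a : ℕ} (h : a ∈ A) : a ≤ M A := Finset.le_sup (f := id) h

lemma M_mem {A : Finset ℕ} (h : A.Nonempty) : M A ∈ A := by
  obtain ⟨b, hb, he⟩ := Finset.exists_mem_eq_sup A h id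
  rw [M, he]; exact hb

lemma M_add {A B : Finset ℕ} (hA : A.Nonempty) (hB : B.Nonempty) :
    M (A + B) = M A + M B := by
  apply le_antisymm
  · apply Finset.sup_le
    intro x hx
    rw [Finset.mem_add] at hx
    obtain ⟨a, ha, b, hb, rfl⟩ := hx
    exact add_le_add (le_M ha) (le_M hb)
  · exact le_M (Finset.add_mem_add (M_mem hA) (M_mem hB))

lemma M_pair (s : ℕ) : M (insert s ({0} : Finset ℕ)) = s := by
  simp [M]

lemma pair_mem {S : AddSubmonoid ℕ} {s : ℕ} (hs : s ∈ S) :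
    insert s ({0} : Finset ℕ) ∈ Pfin0 S := by
  constructor
  · simp
  · intro x hx
    simp only [Finset.coe_insert, Finset.coe_singleton, Set.mem_insert_iff,
      Set.mem_singleton_iff] at hx
    rcases hx with rfl | rfl
    · exact hs
    · exact S.zero_mem

lemma nonempty_of_mem {S : AddSubmonoid ℕ} {A : Finset ℕ} (h : A ∈ Pfin0 S) :
    A.Nonempty := ⟨0, h.1⟩

lemma add_mem_Pfin0 {S : AddSubmonoid ℕ} {A B : Finset ℕ}
    (hA : A ∈ Pfin0 S) (hB : B ∈ Pfin0 S) : A + B ∈ Pfin0 S := by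
  constructor
  · have := Finset.add_mem_add hA.1 hB.1
    simpa using this
  · intro x hx
    rw [Finset.mem_coe, Finset.mem_add] at hx
    obtain ⟨a, ha, b, hb, rfl⟩ := hx
    exact S.add_mem (hA.2 ha) (hB.2 hb)

lemma exists_conductor {S : AddSubmonoid ℕ} (h : ((S : Set ℕ)ᶜ).Finite) :
    ∃ c, ∀ n, c ≤ n → n ∈ S := by
  obtain ⟨c, hc⟩ := h.bddAbove
  refine ⟨c + 1, fun n hn => ?_⟩
  by_contra hns
  have : n ≤ c := hc (show n ∈ ((S : Set ℕ))ᶜ from hns)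
  omega

lemma exists_cancel {S : AddSubmonoid ℕ} {c : ℕ} (hc : ∀ n, c ≤ n → n ∈ S)
    {A B : Finset ℕ} (hA : A ∈ Pfin0 S) (hB : B ∈ Pfin0 S) (hM : M A = M B) :
    ∃ C ∈ Pfin0 S, A + C = B + C := by
  classical
  set m := M A with hm
  set N := c + m with hN
  set C : Finset ℕ := (Finset.range (N + 1)).filter (· ∈ S) with hCdef
  have hC : C ∈ Pfin0 S := by
    constructor
    · simp [hCdef, S.zero_mem]
    · intro x hx
      simp only [hCdef, Finset.coe_filter, Set.mem_setOf_eq, Finset.mem_range] at hx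
      exact hx.2
  have key : ∀ D : Finset ℕ, D ∈ Pfin0 S → M D = m →
      D + C = (Finset.range (N + m + 1)).filter (· ∈ S) := by
    intro D hD hMD
    ext x
    simp only [hCdef, Finset.mem_add, Finset.mem_filter, Finset.mem_range]
    constructor
    · rintro ⟨a, ha, s, ⟨hsr, hsS⟩, rfl⟩
      have h1 : a ≤ m := hMD ▸ le_M ha
      exact ⟨by omega, S.add_mem (hD.2 ha) hsS⟩
    · rintro ⟨hxlt, hxS⟩
      by_cases hxn : x ≤ N
      · exact ⟨0, hD.1, x, ⟨by omega, hxS⟩, by omega⟩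
      · refine ⟨m, ?_, x - m, ⟨by omega, hc _ (by omega)⟩, by omega⟩
        rw [← hMD]
        exact M_mem (nonempty_of_mem hD)
  exact ⟨C, hC, by rw [key A hA rfl, key B hB hM.symm]⟩

end IsoAux

open IsoAux in
/-- If the restricted power monoids of numerical monoids `S` and `S'` are
isomorphic as additive monoids, then `|A(S)| = |A(S')|` and `m(S) = m(S')`. -/
theorem iso_invariants (S S' : AddSubmonoid ℕ)
    (hfin : ((S : Set ℕ)ᶜ).Finite) (hfin' : ((S' : Set ℕ)ᶜ).Finite)
    (φ : Finset ℕ → Finset ℕ)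
    (hmap : ∀ A ∈ Pfin0 S, φ A ∈ Pfin0 S')
    (hinj : ∀ A ∈ Pfin0 S, ∀ B ∈ Pfin0 S, φ A = φ B → A = B)
    (hsurj : ∀ A' ∈ Pfin0 S', ∃ A ∈ Pfin0 S, φ A = A')
    (hadd : ∀ A ∈ Pfin0 S, ∀ B ∈ Pfin0 S, φ (A + B) = φ A + φ B) :
    (natAtoms S).ncard = (natAtoms S').ncard ∧ mval S = mval S' := by
  classical
  obtain ⟨c₁, hc₁⟩ := exists_conductor hfin
  obtain ⟨c₂, hc₂⟩ := exists_conductor hfin'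
  set c := max c₁ c₂ + 1 with hcdef
  have hcS : ∀ n, c ≤ n → n ∈ S := fun n hn => hc₁ n (by omega)
  have hcS' : ∀ n, c ≤ n → n ∈ S' := fun n hn => hc₂ n (by omega)
  have hcpos : 0 < c := by omega
  -- nonemptiness of images
  have hne : ∀ A ∈ Pfin0 S, (φ A).Nonempty := fun A hA => nonempty_of_mem (hmap A hA)
  -- transport of max-classes
  have trans1 : ∀ A ∈ Pfin0 S, ∀ B ∈ Pfin0 S, M A = M B → M (φ A) = M (φ B) := by
    intro A hA B hB h
    obtain ⟨C, hC, hEq⟩ := exists_cancel hcS hA hB h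
    have h2 : φ A + φ C = φ B + φ C := by
      rw [← hadd A hA C hC, ← hadd B hB C hC, hEq]
    have h3 := congrArg M h2
    rw [M_add (hne A hA) (hne C hC), M_add (hne B hB) (hne C hC)] at h3
    omega
  -- the induced map on elements
  set ψ : ℕ → ℕ := fun s => M (φ (insert s ({0} : Finset ℕ))) with hψdef
  have hψS' : ∀ s ∈ S, ψ s ∈ S' := by
    intro s hs
    have h := hmap _ (pair_mem hs)
    exact h.2 (M_mem (nonempty_of_mem h))
  have hψadd : ∀ x ∈ S, ∀ y ∈ S, ψ (x + y) = ψ x + ψ y := by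
    intro x hx y hy
    have hpx := pair_mem (S := S) hx
    have hpy := pair_mem (S := S) hy
    have hpxy := pair_mem (S.add_mem hx hy)
    have hsum := add_mem_Pfin0 hpx hpy
    have hMeq : M (insert (x + y) ({0} : Finset ℕ))
        = M (insert x ({0} : Finset ℕ) + insert y ({0} : Finset ℕ)) := by
      rw [M_pair, M_add (nonempty_of_mem hpx) (nonempty_of_mem hpy), M_pair, M_pair]
    have h := trans1 _ hpxy _ hsum hMeq
    rw [hadd _ hpx _ hpy, M_add (hne _ hpx) (hne _ hpy)] at h
    exact h
  have hψ0 : ψ 0 = 0 := by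
    have h := hψadd 0 S.zero_mem 0 S.zero_mem
    have h0 : (0 : ℕ) + 0 = 0 := rfl
    rw [h0] at h
    omega
  have hψmul : ∀ x ∈ S, ∀ n : ℕ, ψ (n * x) = n * ψ x := by
    intro x hx n
    induction n with
    | zero => simpa using hψ0
    | succ k ih =>
      have hkx : k * x ∈ S := by
        have := AddSubmonoid.nsmul_mem S hx k
        simpa [nsmul_eq_mul] using this
      have h1 : (k + 1) * x = k * x + x := by ring
      rw [h1, hψadd _ hkx _ hx, ih]
      ring
  have cross : ∀ x ∈ S, ∀ y ∈ S, y * ψ x = x * ψ y := by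
    intro x hx y hy
    have h1 := hψmul x hx y
    have h2 := hψmul y hy x
    rw [mul_comm x y] at h2
    rw [← h1]
    exact h2
  -- the value of ψ at the common conductor
  have hcmemS : c ∈ S := hcS c le_rfl
  have hc1memS : c + 1 ∈ S := hcS _ (by omega)
  have hcmemS' : c ∈ S' := hcS' c le_rfl
  have hc1memS' : c + 1 ∈ S' := hcS' _ (by omega)
  set u := ψ c with hudef
  -- c ∣ u
  have hudvd : ∃ t, u = c * t := by
    have h := cross (c + 1) hc1memS c hcmemS
    -- c * ψ (c+1) = (c+1) * ψ c = (c+1) * u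
    set p := ψ (c + 1) with hpdef
    have h' : c * p = c * u + u := by rw [h]; ring
    have hpu : u ≤ p := by
      by_contra hlt
      push_neg at hlt
      nlinarith
    refine ⟨p - u, ?_⟩
    have hp : p = u + (p - u) := by omega
    rw [hp, mul_add] at h'
    omega
  -- a preimage element w of the pair {0, c} in S', with ψ w = c
  obtain ⟨Ac, hAc, hφAc⟩ := hsurj (insert c ({0} : Finset ℕ)) (pair_mem hcmemS')
  set w := M Ac with hwdef
  have hwS : w ∈ S := hAc.2 (M_mem (nonempty_of_mem hAc))
  have hψw : ψ w = c := by
    have hpw := pair_mem (S := S) hwS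
    have hMeq : M (insert w ({0} : Finset ℕ)) = M Ac := by rw [M_pair]
    have h := trans1 _ hpw _ hAc hMeq
    rw [hφAc, M_pair] at h
    exact h
  -- a preimage element w' of {0, c+1}, with ψ w' = c+1
  obtain ⟨Ac1, hAc1, hφAc1⟩ := hsurj (insert (c + 1) ({0} : Finset ℕ)) (pair_mem hc1memS')
  set w' := M Ac1 with hw'def
  have hw'S : w' ∈ S := hAc1.2 (M_mem (nonempty_of_mem hAc1))
  have hψw' : ψ w' = c + 1 := by
    have hpw := pair_mem (S := S) hw'S
    have hMeq : M (insert w' ({0} : Finset ℕ)) = M Ac1 := by rw [M_pair]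
    have h := trans1 _ hpw _ hAc1 hMeq
    rw [hφAc1, M_pair] at h
    exact h
  -- c ∣ w
  have hwdvd : ∃ r, w = c * r := by
    have h := cross w hwS w' hw'S
    -- w' * ψ w = w * ψ w'
    rw [hψw, hψw'] at h
    -- w' * c = w * (c+1) = w*c + w
    have h' : w' * c = w * c + w := by rw [h]; ring
    have hww' : w ≤ w' := by
      by_contra hlt
      push_neg at hlt
      nlinarith
    refine ⟨w' - w, ?_⟩
    have hw' : w' = w + (w' - w) := by omega
    rw [hw', add_mul] at h'
    have : w + (c * (w' - w)) = w + w := by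
      have := h'
      nlinarith [h']
    nlinarith [h']
  -- u * w = c * c
  have huw : w * u = c * c := by
    have h := cross c hcmemS w hwS
    rw [hψw] at h
    rw [← hudef] at h
    exact h
  -- conclude u = c
  obtain ⟨t, ht⟩ := hudvd
  obtain ⟨r, hr⟩ := hwdvd
  have htr : r * t = 1 := by
    have : (c * r) * (c * t) = c * c := by rw [← ht, ← hr]; exact huw
    have h2 : c * c * (r * t) = c * c * 1 := by ring_nf; ring_nf at this; linarith
    exact Nat.eq_of_mul_eq_mul_left (by positivity) h2
  have ht1 : t = 1 := Nat.dvd_one.mp ⟨r, by rw [← htr]; ring⟩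
  have huc : u = c := by rw [ht, ht1, mul_one]
  -- ψ is the identity on S
  have hψid : ∀ y ∈ S, ψ y = y := by
    intro y hy
    have h := cross c hcmemS y hy
    rw [← hudef, huc] at h
    -- y * c = c * ψ y
    have : c * y = c * ψ y := by rw [← h]; ring
    exact (Nat.eq_of_mul_eq_mul_left hcpos this).symm
  -- S = S'
  have hSS' : S = S' := by
    ext n
    constructor
    · intro hn
      have := hψS' n hn
      rwa [hψid n hn] at this
    · intro hn
      obtain ⟨A, hA, hφA⟩ := hsurj (insert n ({0} : Finset ℕ)) (pair_mem hn)
      have hmS : M A ∈ S := hA.2 (M_mem (nonempty_of_mem hA))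
      have hψm : ψ (M A) = n := by
        have hpm := pair_mem (S := S) hmS
        have hMeq : M (insert (M A) ({0} : Finset ℕ)) = M A := M_pair _
        have h := trans1 _ hpm _ hA hMeq
        rw [hφA, M_pair] at h
        exact h
      rw [hψid _ hmS] at hψm
      rwa [← hψm]
  rw [hSS']
  exact ⟨rfl, rfl⟩
end

section
/- Let S be a numerical monoid and let A ∈ P_fin,0(S) with A ≠ {0}, and set d = gcd(A). For n ∈ ℕ let τ_S(nA) denote the number of B ∈ P_fin(S) that divide the n-fold sumset nA in P_fin(S). Then log₂(τ_S(nA))/n converges to max(A)/d as n → ∞. -/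
open Pointwise

/-- `τ_S(A)`: the number of divisors of `A` in `P_fin(S)`. -/
noncomputable def tauS (S : AddSubmonoid ℕ) (A : Finset ℕ) : ℕ :=
  {B : Finset ℕ | B ∈ Pfin S ∧ ∃ C ∈ Pfin S, A = B + C}.ncard

lemma nfold_zz (A : Finset ℕ) : nfold A 0 = {0} := rfl

lemma nfold_succ (A : Finset ℕ) (n : ℕ) : nfold A (n+1) = nfold A n + A := rfl



lemma nfold_zero_mem {A : Finset ℕ} (h0 : 0 ∈ A) : ∀ n, 0 ∈ nfold A n
  | 0 => by simp [nfold]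
  | n + 1 => by
      rw [nfold, Finset.mem_add]
      exact ⟨0, nfold_zero_mem h0 n, 0, h0, rfl⟩

lemma nfold_subset {A B : Finset ℕ} (h : A ⊆ B) : ∀ n, nfold A n ⊆ nfold B n
  | 0 => by simp [nfold]
  | n + 1 => by
      rw [nfold, nfold]
      exact Finset.add_subset_add (nfold_subset h n) h

lemma nfold_le {A : Finset ℕ} {n x : ℕ} (hx : x ∈ nfold A n) : x ≤ n * A.sup id := by
  induction n generalizing x with
  | zero => simp [nfold] at hx; omega
  | succ n ih =>
      rw [nfold, Finset.mem_add] at hx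
      obtain ⟨b, hb, c, hc, rfl⟩ := hx
      have h1 := ih hb
      have h2 : c ≤ A.sup id := Finset.le_sup (f := id) hc
      have : (n + 1) * A.sup id = n * A.sup id + A.sup id := by ring
      omega

lemma nfold_dvd {A : Finset ℕ} {d : ℕ} (hd : ∀ a ∈ A, d ∣ a) {n x : ℕ}
    (hx : x ∈ nfold A n) : d ∣ x := by
  induction n generalizing x with
  | zero => simp [nfold] at hx; simp [hx]
  | succ n ih =>
      rw [nfold, Finset.mem_add] at hx
      obtain ⟨b, hb, c, hc, rfl⟩ := hx
      exact Nat.dvd_add (ih hb) (hd c hc)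

lemma nfold_add_mem {A : Finset ℕ} {n k x y : ℕ} (hx : x ∈ nfold A n)
    (hy : y ∈ nfold A k) : x + y ∈ nfold A (n + k) := by
  induction k generalizing y with
  | zero => simp [nfold] at hy; subst hy; simpa using hx
  | succ k ih =>
      rw [nfold, Finset.mem_add] at hy
      obtain ⟨b, hb, c, hc, rfl⟩ := hy
      have := ih hb
      have : (x + b) + c ∈ nfold A (n + k) + A := by
        rw [Finset.mem_add]; exact ⟨x + b, this, c, hc, rfl⟩
      rw [show n + (k+1) = (n + k) + 1 from rfl, nfold]
      rw [show x + (b + c) = (x + b) + c by ring]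
      exact this

lemma nfold_mono {A : Finset ℕ} (h0 : 0 ∈ A) {n n' : ℕ} (h : n ≤ n') :
    nfold A n ⊆ nfold A n' := by
  intro x hx
  have := nfold_add_mem hx (nfold_zero_mem h0 (n' - n))
  rwa [Nat.add_sub_cancel' h, Nat.add_zero] at this

lemma mem_nfold_one {A : Finset ℕ} {a : ℕ} (ha : a ∈ A) : a ∈ nfold A 1 := by
  rw [nfold, Finset.mem_add]
  exact ⟨0, by simp [nfold], a, ha, by ring⟩

lemma nfold_mul_mem {A : Finset ℕ} {a : ℕ} (ha : a ∈ A) (k : ℕ) : k * a ∈ nfold A k := by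
  induction k with
  | zero => simp [nfold]
  | succ k ih =>
      have := nfold_add_mem ih (mem_nfold_one ha)
      simpa [Nat.succ_mul] using this

lemma nfold_scale {A : Finset ℕ} {x k : ℕ} (hx : x ∈ nfold A k) (t : ℕ) :
    t * x ∈ nfold A (t * k) := by
  induction t with
  | zero => simp [nfold]
  | succ t ih =>
      have := nfold_add_mem ih hx
      simpa [Nat.succ_mul] using this

lemma sup_mem {A : Finset ℕ} (h : A.Nonempty) : A.sup id ∈ A := by
  have := A.max'_mem h
  rwa [Finset.max'_eq_sup', Finset.sup'_eq_sup] at this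










lemma bezout_reach (A : Finset ℕ) :
    ∃ Q kQ kP, Q ∈ nfold A kQ ∧ Q + A.gcd id ∈ nfold A kP := by
  classical
  induction A using Finset.induction with
  | empty => exact ⟨0, 0, 0, by simp [nfold_zz], by simp [nfold_zz, Finset.gcd_empty]⟩
  | @insert a A' ha ih =>
      obtain ⟨Q', kQ', kP', hQ', hP'⟩ := ih
      set g' : ℕ := A'.gcd id with hg'def
      have hgins : (insert a A').gcd id = Nat.gcd a g' := by
        rw [Finset.gcd_insert]; rfl
      rcases Nat.eq_zero_or_pos g' with hg0 | hg1
      · refine ⟨0, 0, 1, by simp [nfold_zz], ?_⟩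
        rw [hgins, hg0, Nat.gcd_zero_right]
        simpa using mem_nfold_one (Finset.mem_insert_self a A')
      rcases Nat.eq_zero_or_pos a with ha0 | ha1
      · subst ha0
        refine ⟨Q', kQ', kP', nfold_subset (Finset.subset_insert 0 A') _ hQ', ?_⟩
        rw [hgins, Nat.gcd_zero_left]
        exact nfold_subset (Finset.subset_insert 0 A') _ hP'
      · -- main case
        set u : ℤ := Nat.gcdA a g'
        set v : ℤ := Nat.gcdB a g'
        have hBez : (Nat.gcd a g' : ℤ) = a * u + g' * v := Nat.gcd_eq_gcd_ab a g'
        set t : ℕ := u.natAbs + v.natAbs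
        have htg : (t:ℤ) ≤ t * g' := le_mul_of_one_le_right (by positivity) (by exact_mod_cast hg1)
        have hαnn : 0 ≤ u + t * g' := by omega
        have hβnn : 0 ≤ v + t * a := by
          have hta : (t:ℤ) ≤ t * a := le_mul_of_one_le_right (by positivity) (by exact_mod_cast ha1)
          omega
        set α : ℕ := (u + t * g').toNat
        set β : ℕ := (v + t * a).toNat
        have hα : (α : ℤ) = u + t * g' := Int.toNat_of_nonneg hαnn
        have hβ : (β : ℤ) = v + t * a := Int.toNat_of_nonneg hβnn
        have hZ : (α:ℤ) * a + β * g' = Nat.gcd a g' + 2 * t * a * g' := by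
          rw [hα, hβ]; linear_combination -hBez
        have hN : α * a + β * g' = Nat.gcd a g' + 2 * t * a * g' := by exact_mod_cast hZ
        set A : Finset ℕ := insert a A'
        have haA : a ∈ A := Finset.mem_insert_self a A'
        have hQ : Q' ∈ nfold A kQ' := nfold_subset (Finset.subset_insert a A') _ hQ'
        have hP : Q' + g' ∈ nfold A kP' := nfold_subset (Finset.subset_insert a A') _ hP'
        refine ⟨2 * t * g' * a + β * Q', 2 * t * g' + β * kQ', α + β * kP', ?_, ?_⟩
        · exact nfold_add_mem (nfold_mul_mem haA (2 * t * g')) (nfold_scale hQ β)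
        · have h1 : α * a + β * (Q' + g') ∈ nfold A (α + β * kP') :=
            nfold_add_mem (nfold_mul_mem haA α) (nfold_scale hP β)
          have h2 : 2 * t * g' * a + β * Q' + (insert a A').gcd id = α * a + β * (Q' + g') := by
            rw [hgins]
            have : β * (Q' + g') = β * Q' + β * g' := by ring
            have h3 : 2 * t * g' * a = 2 * t * a * g' := by ring
            omega
          rw [h2]; exact h1










lemma bottom_lemma (A : Finset ℕ) (h0 : 0 ∈ A) (hgcd : A.gcd id = 1)
    (hm : 1 ≤ A.sup id) :
    ∃ c₀ ℓ, ∀ n x, c₀ ≤ x → x + ℓ * A.sup id ≤ n * A.sup id → x ∈ nfold A n := by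
  classical
  set m := A.sup id with hmdef
  have hmA : m ∈ A := sup_mem ⟨0, h0⟩
  obtain ⟨Q, kQ, kP, hQ, hP⟩ := bezout_reach A
  rw [hgcd] at hP
  have hrep : ∀ y, Q * Q ≤ y → ∃ k, y ∈ nfold A k := by
    intro y hy
    rcases Nat.eq_zero_or_pos Q with hQ0 | hQ1
    · subst hQ0
      refine ⟨y * kP, ?_⟩
      have := nfold_scale hP y
      simpa using this
    · set b := y % Q with hb
      set q := y / Q with hq
      have h1 : Q * q + b = y := Nat.div_add_mod y Q
      have hbQ : b < Q := Nat.mod_lt y hQ1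
      have hqQ : Q ≤ q := by
        rw [hq, Nat.le_div_iff_mul_le hQ1]
        nlinarith
      refine ⟨b * kP + (q - b) * kQ, ?_⟩
      have hmem : b * (Q + 1) + (q - b) * Q ∈ nfold A (b * kP + (q - b) * kQ) :=
        nfold_add_mem (nfold_scale hP b) (nfold_scale hQ (q - b))
      have e1 : (q - b) * Q + b * Q = q * Q := by
        rw [← Nat.add_mul, Nat.sub_add_cancel (le_of_lt (lt_of_lt_of_le hbQ hqQ))]
      have e2 : b * (Q + 1) = b * Q + b := by ring
      have e3 : Q * q = q * Q := Nat.mul_comm Q q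
      have : b * (Q + 1) + (q - b) * Q = y := by omega
      rwa [this] at hmem
  -- bounded representation on a window
  set f : ℕ → ℕ := fun y => if h : ∃ k, y ∈ nfold A k then h.choose else 0 with hfdef
  have hf : ∀ y, Q * Q ≤ y → y ∈ nfold A (f y) := by
    intro y hy
    have h := hrep y hy
    simp only [hfdef, dif_pos h]
    exact h.choose_spec
  set ℓ := (Finset.Icc (Q * Q) (Q * Q + m)).sup f with hldef
  refine ⟨Q * Q + m, ℓ, ?_⟩
  intro n x hcx hxn
  set r := (x - Q * Q) % m with hr
  set q := (x - Q * Q) / m with hq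
  set y := Q * Q + r with hy
  have h1 : m * q + r = x - Q * Q := Nat.div_add_mod _ m
  have hrm : r < m := Nat.mod_lt _ hm
  have hyIcc : y ∈ Finset.Icc (Q * Q) (Q * Q + m) := by
    rw [Finset.mem_Icc]; omega
  have hfy : f y ≤ ℓ := Finset.le_sup hyIcc
  have hymem : y ∈ nfold A (f y) := hf y (by omega)
  have hqm : q * m ∈ nfold A q := nfold_mul_mem hmA q
  have hmem : y + q * m ∈ nfold A (f y + q) := nfold_add_mem hymem hqm
  have hxy : x = y + q * m := by
    have e3 : m * q = q * m := Nat.mul_comm m q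
    omega
  have hle : f y + q ≤ n := by
    have e : m * (f y + q) ≤ m * n := by
      have e1 : m * (f y + q) = m * f y + m * q := by ring
      have e2 : m * f y ≤ m * ℓ := Nat.mul_le_mul_left m hfy
      have e3 : ℓ * m = m * ℓ := Nat.mul_comm _ _
      have e4 : n * m = m * n := Nat.mul_comm _ _
      omega
    exact Nat.le_of_mul_le_mul_left e hm
  rw [hxy]
  exact nfold_mono h0 hle hmem







lemma nfold_reflect (A : Finset ℕ) (m : ℕ) (hub : ∀ a ∈ A, a ≤ m) :
    ∀ n x, x ∈ nfold A n → x ≤ n * m ∧ n * m - x ∈ nfold (A.image (m - ·)) n := by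
  intro n
  induction n with
  | zero => intro x hx; rw [nfold_zz] at hx ⊢; simp_all
  | succ n ih =>
      intro x hx
      rw [nfold_succ, Finset.mem_add] at hx
      obtain ⟨u, hu, a, ha, rfl⟩ := hx
      obtain ⟨hu1, hu2⟩ := ih u hu
      have ham := hub a ha
      constructor
      · have : (n+1) * m = n * m + m := by ring
        omega
      · rw [nfold_succ, Finset.mem_add]
        refine ⟨n * m - u, hu2, m - a, Finset.mem_image_of_mem _ ha, ?_⟩
        have : (n+1) * m = n * m + m := by ring
        omega

lemma reflect_involution (A : Finset ℕ) (m : ℕ) (hub : ∀ a ∈ A, a ≤ m) :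
    (A.image (m - ·)).image (m - ·) = A := by
  ext z
  simp only [Finset.mem_image]
  constructor
  · rintro ⟨y, ⟨a, ha, rfl⟩, rfl⟩
    have := hub a ha
    have : m - (m - a) = a := by omega
    rwa [this]
  · intro hz
    exact ⟨m - z, ⟨z, hz, rfl⟩, by have := hub z hz; omega⟩

lemma interval_lemma (A : Finset ℕ) (h0 : 0 ∈ A) (hgcd : A.gcd id = 1)
    (hm : 1 ≤ A.sup id) :
    ∃ c N, 1 ≤ c ∧ ∀ n x, N ≤ n → c ≤ x → x + c ≤ n * A.sup id → x ∈ nfold A n := by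
  classical
  set m := A.sup id with hmdef
  have hub : ∀ a ∈ A, a ≤ m := fun a ha => Finset.le_sup (f := id) ha
  have hmA : m ∈ A := sup_mem ⟨0, h0⟩
  set B := A.image (m - ·) with hBdef
  have h0B : 0 ∈ B := by
    rw [hBdef]
    exact Finset.mem_image.mpr ⟨m, hmA, Nat.sub_self m⟩
  have hubB : ∀ b ∈ B, b ≤ m := by
    rintro b hb
    rw [hBdef, Finset.mem_image] at hb
    obtain ⟨a, _, rfl⟩ := hb
    omega
  have hsupB : B.sup id = m := by
    apply le_antisymm
    · exact Finset.sup_le fun b hb => hubB b hb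
    · have : m ∈ B := Finset.mem_image.mpr ⟨0, h0, Nat.sub_zero m⟩
      exact Finset.le_sup (f := id) this
  have hgcdB : B.gcd id = 1 := by
    have h1 : B.gcd id ∣ m := Finset.gcd_dvd (Finset.mem_image.mpr ⟨0, h0, Nat.sub_zero m⟩)
    have h2 : B.gcd id ∣ A.gcd id := by
      apply Finset.dvd_gcd
      intro a ha
      have h3 : B.gcd id ∣ m - a := Finset.gcd_dvd (Finset.mem_image.mpr ⟨a, ha, rfl⟩)
      have h4 := Nat.dvd_sub h1 h3
      have : m - (m - a) = a := by have := hub a ha; omega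
      rwa [this] at h4
    rw [hgcd] at h2
    exact Nat.eq_one_of_dvd_one h2
  obtain ⟨c₁, ℓ, hbot⟩ := bottom_lemma A h0 hgcd hm
  obtain ⟨c2, l2, hbot'⟩ := bottom_lemma B h0B hgcdB (by rw [hsupB]; exact hm)
  rw [hsupB] at hbot'
  refine ⟨c₁ + c2 + (ℓ + l2 + 1) * m + 1, ℓ + l2, by omega, ?_⟩
  intro n x hN hcx hxn
  set c := c₁ + c2 + (ℓ + l2 + 1) * m + 1 with hcdef
  by_cases hcase : x + ℓ * m ≤ n * m
  · exact hbot n x (by omega) hcase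
  · -- top region
    push_neg at hcase
    have hx' : n * m - x ∈ nfold B n := by
      apply hbot' n (n * m - x)
      · omega
      · have h5 : (ℓ + l2 + 1) * m = ℓ * m + l2 * m + m := by ring
        have h6 : (ℓ + l2) * m ≤ n * m := Nat.mul_le_mul_right m hN
        omega
    have h8 := nfold_reflect B m hubB n (n * m - x) hx'
    rw [reflect_involution A m hub] at h8
    obtain ⟨_, h7⟩ := h8
    have e : n * m - (n * m - x) = x := by omega
    rwa [e] at h7






lemma reach_lemma (P : Finset ℕ) (h0 : 0 ∈ P) (g W : ℕ) (hg : 1 ≤ g)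
    (hgap : ∀ p ∈ P, p < W → ∃ q ∈ P, p < q ∧ q ≤ p + g) :
    ∀ y, y ≤ W → ∃ p ∈ P, p ≤ y ∧ y < p + g := by
  intro y
  induction y with
  | zero => intro _; exact ⟨0, h0, by omega, by omega⟩
  | succ y ih =>
      intro hy
      obtain ⟨p, hp, hp1, hp2⟩ := ih (by omega)
      by_cases hc : y + 1 < p + g
      · exact ⟨p, hp, by omega, hc⟩
      · obtain ⟨q, hq, hq1, hq2⟩ := hgap p hp (by omega)
        exact ⟨q, hq, by omega, by omega⟩

lemma count_lemma (A : Finset ℕ) (h0 : 0 ∈ A) (hgcd : A.gcd id = 1)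
    (hm : 1 ≤ A.sup id) :
    ∃ c, 1 ≤ c ∧ ∀ G, c ≤ G → ∃ N, ∀ n, N ≤ n →
      ∃ F : Finset (Finset ℕ),
        (∀ B ∈ F, B.Nonempty ∧ B ⊆ nfold A n ∧
          ∃ C : Finset ℕ, C.Nonempty ∧ C ⊆ nfold A n ∧ nfold A n = B + C) ∧
        2 ^ (n * A.sup id - (n * A.sup id) / (2 * G) - (2 * G + 4 * c + 4)) ≤ F.card := by
  classical
  obtain ⟨c, N₀, hc1, hint⟩ := interval_lemma A h0 hgcd hm
  set m := A.sup id with hmdef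
  refine ⟨c, hc1, ?_⟩
  intro G hG
  have hGpos : 1 ≤ G := le_trans hc1 hG
  refine ⟨N₀ + 2 * G + 5 * c + 2, ?_⟩
  intro n hn
  set M := n * m with hMdef
  have hnM : n ≤ M := Nat.le_mul_of_pos_right n hm
  set K := 2 * G + c - 1 with hKdef
  have hKc : c ≤ K := by omega
  have hMK : K + 4 * c ≤ M := by omega
  set W := M - K - c with hWdef
  have hW : W + K + c = M := by omega
  have hW2c : 3 * c ≤ W := by omega
  set T := nfold A n with hTdef
  have hT_int : ∀ x, c ≤ x → x + c ≤ M → x ∈ T := fun x hx1 hx2 =>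
    hint n x (by omega) hx1 hx2
  have hT0 : 0 ∈ T := nfold_zero_mem h0 n
  have hTub : ∀ x ∈ T, x ≤ M := fun x hx => nfold_le hx
  set s := (W - 2 * c) / (2 * G) with hsdef
  have hdm : 2 * G * s + (W - 2 * c) % (2 * G) = W - 2 * c := by
    rw [hsdef]; exact Nat.div_add_mod _ _
  have hmod := Nat.mod_lt (W - 2 * c) (y := 2 * G) (by omega)
  have hs1 : 2 * G * s ≤ W - 2 * c := by omega
  have hs2 : W - 2 * c < 2 * G * s + 2 * G := by omega
  set Anc := (Finset.range (s + 1)).image (fun j => c + 2 * G * j) with hAncdef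
  set B₀ := insert 0 (insert W (insert (W - c) Anc)) with hB0def
  set free := (Finset.Icc c (W - c)) \ B₀ with hfreedef
  set C := T.filter (· ≤ K) ∪ (T.filter (fun t => M - c ≤ t)).image (· - W) with hCdef
  have hAncmem : ∀ b ∈ Anc, c ≤ b ∧ b ≤ W - c := by
    intro b hb
    rw [hAncdef, Finset.mem_image] at hb
    obtain ⟨j, hj, rfl⟩ := hb
    rw [Finset.mem_range] at hj
    have : 2 * G * j ≤ 2 * G * s := Nat.mul_le_mul_left _ (by omega)
    omega
  have hB0mem : ∀ b ∈ B₀, b = 0 ∨ (c ≤ b ∧ b ≤ W - c) ∨ b = W := by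
    intro b hb
    rw [hB0def] at hb
    simp only [Finset.mem_insert] at hb
    rcases hb with rfl | rfl | rfl | hb
    · left; rfl
    · right; right; rfl
    · right; left; omega
    · right; left; exact hAncmem b hb
  have h0B₀ : 0 ∈ B₀ := by rw [hB0def]; simp
  have hWB₀ : W ∈ B₀ := by rw [hB0def]; simp
  have hcAnc : c ∈ B₀ := by
    rw [hB0def, hAncdef]
    simp only [Finset.mem_insert, Finset.mem_image, Finset.mem_range]
    right; right; right
    exact ⟨0, Nat.succ_pos s, by simp⟩
  have hWcB₀ : W - c ∈ B₀ := by rw [hB0def]; simp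
  -- gap property of B₀
  have hgap : ∀ p, p < W → ∃ q ∈ B₀, p < q ∧ q ≤ p + 2 * G := by
    intro p hp
    by_cases h1 : p < c
    · exact ⟨c, hcAnc, h1, by omega⟩
    · push_neg at h1
      by_cases h2 : W - c ≤ p
      · exact ⟨W, hWB₀, by omega, by omega⟩
      · push_neg at h2
        have hdm2 := Nat.div_add_mod (p - c) (2 * G)
        have hmod2 := Nat.mod_lt (p - c) (y := 2 * G) (by omega)
        set D := (p - c) / (2 * G) with hDdef
        by_cases h3 : D + 1 ≤ s
        · refine ⟨c + 2 * G * (D + 1), ?_, ?_, ?_⟩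
          · rw [hB0def, hAncdef]
            simp only [Finset.mem_insert, Finset.mem_image, Finset.mem_range]
            right; right; right
            exact ⟨D + 1, by omega, rfl⟩
          · have : 2 * G * (D + 1) = 2 * G * D + 2 * G := by ring
            omega
          · have : 2 * G * (D + 1) = 2 * G * D + 2 * G := by ring
            omega
        · push_neg at h3
          have hsD : s ≤ D := by omega
          have : 2 * G * s ≤ 2 * G * D := Nat.mul_le_mul_left _ hsD
          exact ⟨W - c, hWcB₀, by omega, by omega⟩
  -- now the family
  refine ⟨free.powerset.image (fun Z => B₀ ∪ Z), ?_, ?_⟩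
  · intro B hB
    rw [Finset.mem_image] at hB
    obtain ⟨Z, hZ, rfl⟩ := hB
    rw [Finset.mem_powerset] at hZ
    have hZmem : ∀ b ∈ Z, c ≤ b ∧ b ≤ W - c := by
      intro b hb
      have := hZ hb
      rw [hfreedef, Finset.mem_sdiff, Finset.mem_Icc] at this
      exact this.1
    have hBmem : ∀ b ∈ B₀ ∪ Z, b = 0 ∨ (c ≤ b ∧ b ≤ W - c) ∨ b = W := by
      intro b hb
      rw [Finset.mem_union] at hb
      rcases hb with hb | hb
      · exact hB0mem b hb
      · right; left; exact hZmem b hb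
    have hBT : B₀ ∪ Z ⊆ T := by
      intro b hb
      rcases hBmem b hb with rfl | ⟨hb1, hb2⟩ | rfl
      · exact hT0
      · exact hT_int b hb1 (by omega)
      · exact hT_int W (by omega) (by omega)
    have hCT : C ⊆ T := by
      intro x hx
      rw [hCdef, Finset.mem_union] at hx
      rcases hx with hx | hx
      · exact (Finset.mem_filter.mp hx).1
      · rw [Finset.mem_image] at hx
        obtain ⟨t, ht, rfl⟩ := hx
        rw [Finset.mem_filter] at ht
        have htM := hTub t ht.1
        exact hT_int (t - W) (by omega) (by omega)
    have hreach := reach_lemma (B₀ ∪ Z) (Finset.mem_union_left _ h0B₀) (2 * G) W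
      (by omega)
      (fun p _ hpW => by
        obtain ⟨q, hq, h1, h2⟩ := hgap p hpW
        exact ⟨q, Finset.mem_union_left _ hq, h1, h2⟩)
    have hCfilter : ∀ x, x ∈ T → x ≤ K → x ∈ C := by
      intro x hx1 hx2
      rw [hCdef, Finset.mem_union]
      left; exact Finset.mem_filter.mpr ⟨hx1, hx2⟩
    refine ⟨⟨0, Finset.mem_union_left _ h0B₀⟩, hBT, C, ⟨0, hCfilter 0 hT0 (by omega)⟩, hCT, ?_⟩
    apply Finset.Subset.antisymm
    · -- T ⊆ B + C
      intro x hx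
      have hxM := hTub x hx
      rw [Finset.mem_add]
      by_cases h1 : x < c
      · exact ⟨0, Finset.mem_union_left _ h0B₀, x, hCfilter x hx (by omega), by omega⟩
      · push_neg at h1
        by_cases h2 : M - c < x
        · refine ⟨W, Finset.mem_union_left _ hWB₀, x - W, ?_, by omega⟩
          rw [hCdef, Finset.mem_union]
          right
          rw [Finset.mem_image]
          exact ⟨x, Finset.mem_filter.mpr ⟨hx, by omega⟩, rfl⟩
        · push_neg at h2
          by_cases h3 : x ≤ W + c
          · obtain ⟨p, hp, hp1, hp2⟩ := hreach (x - c) (by omega)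
            refine ⟨p, hp, x - p, ?_, by omega⟩
            apply hCfilter
            · exact hT_int (x - p) (by omega) (by omega)
            · omega
          · push_neg at h3
            refine ⟨W, Finset.mem_union_left _ hWB₀, x - W, ?_, by omega⟩
            apply hCfilter
            · exact hT_int (x - W) (by omega) (by omega)
            · omega
    · -- B + C ⊆ T
      intro x hx
      rw [Finset.mem_add] at hx
      obtain ⟨b, hb, c', hc', rfl⟩ := hx
      have hc'C : c' ∈ C := hc'
      rw [hCdef, Finset.mem_union] at hc'C
      rcases hBmem b hb with rfl | ⟨hb1, hb2⟩ | rfl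
      · simpa using hCT hc'
      · rcases hc'C with hc1 | hc1
        · rw [Finset.mem_filter] at hc1
          exact hT_int (b + c') (by omega) (by omega)
        · rw [Finset.mem_image] at hc1
          obtain ⟨t, ht, rfl⟩ := hc1
          rw [Finset.mem_filter] at ht
          have htM := hTub t ht.1
          exact hT_int (b + (t - W)) (by omega) (by omega)
      · rcases hc'C with hc1 | hc1
        · rw [Finset.mem_filter] at hc1
          exact hT_int (W + c') (by omega) (by omega)
        · rw [Finset.mem_image] at hc1
          obtain ⟨t, ht, rfl⟩ := hc1
          rw [Finset.mem_filter] at ht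
          have htM := hTub t ht.1
          have : W + (t - W) = t := by omega
          rw [this]
          exact ht.1
  · -- cardinality
    have hinj : Set.InjOn (fun Z => B₀ ∪ Z) ↑free.powerset := by
      intro Z₁ h₁ Z₂ h₂ heq
      simp only [Finset.coe_powerset, Set.mem_preimage, Set.mem_powerset_iff] at h₁ h₂
      have key : ∀ Z : Finset ℕ, ↑Z ⊆ (↑free : Set ℕ) → (B₀ ∪ Z) ∩ free = Z := by
        intro Z hZf
        ext w
        simp only [Finset.mem_inter, Finset.mem_union]
        constructor
        · rintro ⟨hw1 | hw1, hw2⟩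
          · exfalso
            rw [hfreedef, Finset.mem_sdiff] at hw2
            exact hw2.2 hw1
          · exact hw1
        · intro hw
          exact ⟨Or.inr hw, by exact_mod_cast hZf hw⟩
      have heq' : B₀ ∪ Z₁ = B₀ ∪ Z₂ := heq
      have := key Z₁ h₁
      rw [heq', key Z₂ h₂] at this
      exact this.symm
    rw [Finset.card_image_of_injOn hinj, Finset.card_powerset]
    apply Nat.pow_le_pow_right (by omega)
    -- free.card lower bound
    have hIcc : (Finset.Icc c (W - c)).card = W - c + 1 - c := Nat.card_Icc c (W - c)
    have hAncCard : Anc.card ≤ s + 1 := by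
      rw [hAncdef]
      exact le_trans (Finset.card_image_le) (by simp)
    have hB0Card : B₀.card ≤ s + 4 := by
      rw [hB0def]
      calc (insert 0 (insert W (insert (W - c) Anc))).card
          ≤ (insert W (insert (W - c) Anc)).card + 1 := Finset.card_insert_le _ _
        _ ≤ (insert (W - c) Anc).card + 2 := by
            have := Finset.card_insert_le W (insert (W - c) Anc); omega
        _ ≤ Anc.card + 3 := by
            have := Finset.card_insert_le (W - c) Anc; omega
        _ ≤ s + 4 := by omega
    have hfreeCard : (Finset.Icc c (W - c)).card - B₀.card ≤ free.card := by
      rw [hfreedef]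
      exact Finset.le_card_sdiff _ _
    have hsM : s ≤ M / (2 * G) := by
      rw [hsdef]
      exact Nat.div_le_div_right (by omega)
    have hdivM : M / (2 * G) * (2 * G) ≤ M := Nat.div_mul_le_self M (2 * G)
    omega






lemma image_add_mul (d : ℕ) (X Y : Finset ℕ) :
    (X + Y).image (d * ·) = X.image (d * ·) + Y.image (d * ·) := by
  ext z
  simp only [Finset.mem_image, Finset.mem_add]
  constructor
  · rintro ⟨w, ⟨x, hx, y, hy, rfl⟩, rfl⟩
    exact ⟨d * x, ⟨x, hx, rfl⟩, d * y, ⟨y, hy, rfl⟩, by ring⟩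
  · rintro ⟨x', ⟨x, hx, rfl⟩, y', ⟨y, hy, rfl⟩, rfl⟩
    exact ⟨x + y, ⟨x, hx, y, hy, rfl⟩, by ring⟩

lemma nfold_image_mul (d : ℕ) (A : Finset ℕ) (n : ℕ) :
    nfold (A.image (d * ·)) n = (nfold A n).image (d * ·) := by
  induction n with
  | zero => rw [nfold_zz, nfold_zz]; simp
  | succ n ih => rw [nfold_succ, nfold_succ, ih, image_add_mul]

lemma gcd_pos_of_ne_singleton {A : Finset ℕ} (h0 : 0 ∈ A) (hne : A ≠ {0}) :
    1 ≤ A.gcd id := by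
  rcases Nat.eq_zero_or_pos (A.gcd id) with h | h
  · exfalso
    apply hne
    have hz : ∀ a ∈ A, a = 0 := by
      intro a ha
      simpa using Finset.gcd_eq_zero_iff.mp h a ha
    ext x
    simp only [Finset.mem_singleton]
    exact ⟨fun hx => hz x hx, fun hx => hx ▸ h0⟩
  · exact h

lemma reduction (A : Finset ℕ) (h0 : 0 ∈ A) (hne : A ≠ {0}) :
    ∃ A' : Finset ℕ, 0 ∈ A' ∧ A'.gcd id = 1 ∧ 1 ≤ A'.sup id ∧
      1 ≤ A.gcd id ∧ A.sup id = A.gcd id * A'.sup id ∧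
      A'.image (A.gcd id * ·) = A := by
  classical
  have hd1 : 1 ≤ A.gcd id := gcd_pos_of_ne_singleton h0 hne
  have himg : (A.image (· / A.gcd id)).image (A.gcd id * ·) = A := by
    ext x
    simp only [Finset.mem_image]
    constructor
    · rintro ⟨y, ⟨a, ha, rfl⟩, rfl⟩
      rwa [Nat.mul_div_cancel' (show A.gcd id ∣ a from Finset.gcd_dvd ha)]
    · intro hx
      exact ⟨x / A.gcd id, ⟨x, hx, rfl⟩,
        Nat.mul_div_cancel' (show A.gcd id ∣ x from Finset.gcd_dvd hx)⟩
  have h0' : 0 ∈ A.image (· / A.gcd id) := Finset.mem_image.mpr ⟨0, h0, by simp⟩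
  have hsupkey : A.sup id = A.gcd id * (A.image (· / A.gcd id)).sup id := by
    conv_lhs => rw [← himg]
    rw [Finset.sup_image]
    apply le_antisymm
    · apply Finset.sup_le
      intro b hb
      exact Nat.mul_le_mul_left _ (Finset.le_sup (f := id) hb)
    · have hmem := sup_mem ⟨0, h0'⟩
      exact Finset.le_sup (f := fun x => A.gcd id * id x) hmem
  have hgcdkey : (A.image (· / A.gcd id)).gcd id = 1 := by
    have h1 : A.gcd id = ((A.image (· / A.gcd id)).image (A.gcd id * ·)).gcd id := by
      rw [himg]
    rw [Finset.gcd_image] at h1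
    have h2 : (A.image (· / A.gcd id)).gcd (id ∘ (A.gcd id * ·)) =
        A.gcd id * (A.image (· / A.gcd id)).gcd id := by
      have := Finset.gcd_mul_left (s := A.image (· / A.gcd id)) (f := id) (a := A.gcd id)
      simpa using this
    rw [h2] at h1
    nth_rewrite 1 [show A.gcd id = A.gcd id * 1 by ring] at h1
    exact (Nat.eq_of_mul_eq_mul_left hd1 h1).symm
  have hsup1 : 1 ≤ (A.image (· / A.gcd id)).sup id := by
    have : ∃ a ∈ A, a ≠ 0 := by
      by_contra hcon
      push_neg at hcon
      apply hne
      ext x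
      simp only [Finset.mem_singleton]
      exact ⟨fun hx => hcon x hx, fun hx => hx ▸ h0⟩
    obtain ⟨a, ha, ha0⟩ := this
    have h3 : a ≤ A.sup id := Finset.le_sup (f := id) ha
    rcases Nat.eq_zero_or_pos ((A.image (· / A.gcd id)).sup id) with h | h
    · rw [h, Nat.mul_zero] at hsupkey; omega
    · exact h
  exact ⟨A.image (· / A.gcd id), h0', hgcdkey, hsup1, hd1, hsupkey, himg⟩















lemma nfold_subset_S (S : AddSubmonoid ℕ) (A : Finset ℕ)
    (hAS : (A : Set ℕ) ⊆ (S : Set ℕ)) : ∀ n, ∀ x ∈ nfold A n, x ∈ S := by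
  intro n
  induction n with
  | zero => intro x hx; rw [nfold_zz] at hx; simp at hx; subst hx; exact S.zero_mem
  | succ n ih =>
      intro x hx
      rw [nfold_succ, Finset.mem_add] at hx
      obtain ⟨b, hb, a, ha, rfl⟩ := hx
      exact S.add_mem (ih b hb) (hAS ha)

lemma cast_sub_ge (a b : ℕ) : (a:ℝ) - b ≤ ((a - b : ℕ):ℝ) := by
  rcases le_total b a with h | h
  · rw [Nat.cast_sub h]
  · have h1 : a - b = 0 := by omega
    rw [h1]
    have : (a:ℝ) ≤ (b:ℝ) := by exact_mod_cast h
    simp; linarith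

/-- For a numerical monoid `S` and `{0} ≠ A ∈ P_fin,0(S)` with `d = gcd(A)`,
`log₂ τ_S(nA) / n → max(A)/d` as `n → ∞`. -/
theorem log_tau_asymptotic (S : AddSubmonoid ℕ) (hfin : ((S : Set ℕ)ᶜ).Finite)
    (A : Finset ℕ) (h0 : 0 ∈ A) (hAS : (A : Set ℕ) ⊆ (S : Set ℕ)) (hne : A ≠ {0}) :
    Filter.Tendsto
      (fun n : ℕ => Real.logb 2 (tauS S (nfold A n)) / (n : ℝ))
      Filter.atTop
      (nhds (((A.sup id : ℕ) : ℝ) / ((A.gcd id : ℕ) : ℝ))) := by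
  classical
  obtain ⟨A', h0', hgcd', hm', hd1, hsupkey, himg⟩ := reduction A h0 hne
  have hkey : ∀ n, nfold A n = (nfold A' n).image (A.gcd id * ·) := by
    intro n; rw [← nfold_image_mul, himg]
  have htarget : ((A.sup id : ℕ) : ℝ) / ((A.gcd id : ℕ) : ℝ) = ((A'.sup id : ℕ) : ℝ) := by
    rw [hsupkey]
    push_cast
    rw [mul_div_assoc, mul_comm]
    field_simp
  rw [htarget]
  -- upper bound on tau
  have hnAS : ∀ n, ((nfold A n : Finset ℕ) : Set ℕ) ⊆ (S : Set ℕ) := by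
    intro n x hx
    exact nfold_subset_S S A hAS n x (by exact_mod_cast hx)
  have hDsub : ∀ n, {B : Finset ℕ | B ∈ Pfin S ∧ ∃ C ∈ Pfin S, nfold A n = B + C}
      ⊆ ↑((nfold A n).powerset) := by
    intro n B hB
    obtain ⟨hB1, C, hC1, heq⟩ := hB
    have h0C : 0 ∈ C := by
      have h0n : 0 ∈ nfold A n := nfold_zero_mem h0 n
      rw [heq, Finset.mem_add] at h0n
      obtain ⟨b, hb, cc, hcc, hbc⟩ := h0n
      have : cc = 0 := by omega
      rwa [this] at hcc
    have hsub : B ⊆ nfold A n := by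
      intro x hx
      rw [heq, Finset.mem_add]
      exact ⟨x, hx, 0, h0C, by ring⟩
    simpa [Finset.mem_powerset] using hsub
  have hDfin : ∀ n, {B : Finset ℕ | B ∈ Pfin S ∧ ∃ C ∈ Pfin S, nfold A n = B + C}.Finite :=
    fun n => Set.Finite.subset (Finset.finite_toSet _) (hDsub n)
  have hcardn : ∀ n, (nfold A n).card ≤ n * A'.sup id + 1 := by
    intro n
    rw [hkey n]
    calc ((nfold A' n).image (A.gcd id * ·)).card ≤ (nfold A' n).card :=
          Finset.card_image_le
      _ ≤ (Finset.range (n * A'.sup id + 1)).card := by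
          apply Finset.card_le_card
          intro x hx
          rw [Finset.mem_range]
          have := nfold_le hx
          omega
      _ = n * A'.sup id + 1 := Finset.card_range _
  have hub : ∀ n, tauS S (nfold A n) ≤ 2 ^ (n * A'.sup id + 1) := by
    intro n
    unfold tauS
    calc {B : Finset ℕ | B ∈ Pfin S ∧ ∃ C ∈ Pfin S, nfold A n = B + C}.ncard
        ≤ (↑((nfold A n).powerset) : Set (Finset ℕ)).ncard :=
          Set.ncard_le_ncard (hDsub n) (Finset.finite_toSet _)
      _ = ((nfold A n).powerset).card := Set.ncard_coe_finset _
      _ = 2 ^ (nfold A n).card := Finset.card_powerset _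
      _ ≤ 2 ^ (n * A'.sup id + 1) := Nat.pow_le_pow_right (by omega) (hcardn n)
  -- lower bound machinery
  obtain ⟨c, hc1, hcount⟩ := count_lemma A' h0' hgcd' hm'
  have hdinj : Function.Injective (A.gcd id * ·) := fun a b h => by
    simp only at h
    exact Nat.eq_of_mul_eq_mul_left hd1 h
  have hlb : ∀ G, c ≤ G → ∃ N, ∀ n, N ≤ n →
      2 ^ (n * A'.sup id - (n * A'.sup id) / (2 * G) - (2 * G + 4 * c + 4))
        ≤ tauS S (nfold A n) := by
    intro G hG
    obtain ⟨N, hN⟩ := hcount G hG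
    refine ⟨N, fun n hn => ?_⟩
    obtain ⟨F, hF, hFcard⟩ := hN n hn
    set F' := F.image (Finset.image (A.gcd id * ·)) with hF'def
    have hF'card : F'.card = F.card :=
      Finset.card_image_of_injective _ (Finset.image_injective hdinj)
    have hF'sub : (↑F' : Set (Finset ℕ)) ⊆
        {B : Finset ℕ | B ∈ Pfin S ∧ ∃ C ∈ Pfin S, nfold A n = B + C} := by
      intro B hB
      rw [Finset.mem_coe, hF'def, Finset.mem_image] at hB
      obtain ⟨B₁, hB₁, rfl⟩ := hB
      obtain ⟨hB₁ne, hB₁sub, C₁, hC₁ne, hC₁sub, heq₁⟩ := hF B₁ hB₁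
      have hsubS : ∀ X : Finset ℕ, X ⊆ nfold A' n →
          (↑(X.image (A.gcd id * ·)) : Set ℕ) ⊆ (S : Set ℕ) := by
        intro X hX x hx
        rw [Finset.coe_image] at hx
        obtain ⟨y, hy, rfl⟩ := hx
        have : A.gcd id * y ∈ nfold A n := by
          rw [hkey n, Finset.mem_image]
          exact ⟨y, hX (by exact_mod_cast hy), rfl⟩
        exact hnAS n (by exact_mod_cast this)
      refine ⟨⟨hB₁ne.image _, hsubS B₁ hB₁sub⟩,
        C₁.image (A.gcd id * ·), ⟨hC₁ne.image _, hsubS C₁ hC₁sub⟩, ?_⟩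
      rw [← image_add_mul, ← heq₁, hkey n]
    calc 2 ^ (n * A'.sup id - (n * A'.sup id) / (2 * G) - (2 * G + 4 * c + 4))
        ≤ F.card := hFcard
      _ = F'.card := hF'card.symm
      _ = (↑F' : Set (Finset ℕ)).ncard := (Set.ncard_coe_finset _).symm
      _ ≤ tauS S (nfold A n) := Set.ncard_le_ncard hF'sub (hDfin n)
  -- assemble the limit
  rw [Metric.tendsto_atTop]
  intro ε hε
  set m' := A'.sup id with hm'def
  set G := c + Nat.ceil ((m' : ℝ) / ε) + 1 with hGdef
  have hGc : c ≤ G := by omega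
  have hGeps : (m' : ℝ) / (2 * G) < ε / 2 := by
    have h1 : (m' : ℝ) / ε ≤ Nat.ceil ((m' : ℝ) / ε) := Nat.le_ceil _
    have h2 : (m' : ℝ) / ε < G := by
      have : ((Nat.ceil ((m' : ℝ) / ε) : ℕ) : ℝ) < G := by
        have : Nat.ceil ((m' : ℝ) / ε) < G := by omega
        exact_mod_cast this
      linarith
    have hG0 : (0:ℝ) < G := by positivity
    rw [div_lt_div_iff₀ (by positivity) (by norm_num)]
    rw [div_lt_iff₀ hε] at h2
    nlinarith
  obtain ⟨N₁, hN₁⟩ := hlb G hGc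
  set D : ℕ := 2 * G + 4 * c + 4 with hDdef
  set N := max (max N₁ 1) (Nat.ceil ((2 * (D:ℝ) + 2) / ε) + 1) with hNdef
  refine ⟨N, fun n hn => ?_⟩
  have hnN₁ : N₁ ≤ n := le_trans (le_trans (le_max_left _ _) (le_max_left _ _)) hn
  have hn1 : 1 ≤ n := le_trans (le_trans (le_max_right _ _) (le_max_left _ _)) hn
  have hnD : (2 * (D:ℝ) + 2) / ε < n := by
    have h1 : Nat.ceil ((2 * (D:ℝ) + 2) / ε) + 1 ≤ n :=
      le_trans (le_max_right _ _) hn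
    have h2 := Nat.le_ceil ((2 * (D:ℝ) + 2) / ε)
    have h3 : ((Nat.ceil ((2 * (D:ℝ) + 2) / ε) : ℕ) : ℝ) + 1 ≤ (n:ℝ) := by
      exact_mod_cast h1
    linarith
  have hnpos : (0:ℝ) < n := by exact_mod_cast hn1
  have hDn : (D:ℝ) / n < ε / 2 := by
    rw [div_lt_div_iff₀ hnpos (by norm_num)]
    rw [div_lt_iff₀ hε] at hnD
    nlinarith [hε.le]
  have h1n : (1:ℝ) / n < ε / 2 := by
    rw [div_lt_div_iff₀ hnpos (by norm_num)]
    rw [div_lt_iff₀ hε] at hnD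
    have hD0 : (0:ℝ) ≤ D := by positivity
    nlinarith [hε.le]
  -- the two bounds
  set τ := tauS S (nfold A n) with hτdef
  set E := n * m' - (n * m') / (2 * G) - D with hEdef
  have hlow : 2 ^ E ≤ τ := hN₁ n hnN₁
  have hup : τ ≤ 2 ^ (n * m' + 1) := hub n
  have hτpos : (0:ℝ) < τ := by
    have : 1 ≤ τ := le_trans (Nat.one_le_two_pow) hlow
    exact_mod_cast Nat.lt_of_lt_of_le Nat.zero_lt_one this
  have hlogub : Real.logb 2 τ ≤ ((n * m' + 1 : ℕ) : ℝ) := by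
    have h2 : (τ:ℝ) ≤ (2:ℝ) ^ (n * m' + 1 : ℕ) := by exact_mod_cast hup
    calc Real.logb 2 (τ:ℝ) ≤ Real.logb 2 ((2:ℝ) ^ (n * m' + 1 : ℕ)) :=
          Real.logb_le_logb_of_le one_lt_two hτpos h2
      _ = ((n * m' + 1 : ℕ) : ℝ) := by
          rw [Real.logb_pow, Real.logb_self_eq_one one_lt_two, mul_one]
  have hloglb : ((E : ℕ) : ℝ) ≤ Real.logb 2 τ := by
    have h2 : (2:ℝ) ^ (E:ℕ) ≤ (τ:ℝ) := by exact_mod_cast hlow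
    calc ((E:ℕ):ℝ) = Real.logb 2 ((2:ℝ) ^ (E:ℕ)) := by
          rw [Real.logb_pow, Real.logb_self_eq_one one_lt_two, mul_one]
      _ ≤ Real.logb 2 (τ:ℝ) := Real.logb_le_logb_of_le one_lt_two (by positivity) h2
  -- E lower bound in ℝ
  have hEreal : (n:ℝ) * m' - (n:ℝ) * m' / (2*G) - D ≤ ((E:ℕ):ℝ) := by
    have h1 : ((n * m' : ℕ):ℝ) - ((n * m' / (2 * G) : ℕ):ℝ) - ((D:ℕ):ℝ) ≤ ((E:ℕ):ℝ) := by
      calc ((n * m' : ℕ):ℝ) - ((n * m' / (2 * G) : ℕ):ℝ) - ((D:ℕ):ℝ)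
          ≤ ((n * m' - n * m' / (2 * G) : ℕ):ℝ) - ((D:ℕ):ℝ) := by
            have := cast_sub_ge (n * m') (n * m' / (2 * G))
            linarith
        _ ≤ ((n * m' - n * m' / (2 * G) - D : ℕ):ℝ) := cast_sub_ge _ _
    have h2 : ((n * m' / (2 * G) : ℕ):ℝ) ≤ ((n * m' : ℕ):ℝ) / ((2*G : ℕ):ℝ) :=
      Nat.cast_div_le
    have h3 : ((n * m' : ℕ):ℝ) = (n:ℝ) * m' := by push_cast; ring
    have h4 : ((2*G : ℕ):ℝ) = 2*(G:ℝ) := by push_cast; ring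
    rw [h3, h4] at h2
    rw [h3] at h1
    linarith
  -- final estimate
  have h5 : ((E : ℕ) : ℝ) / n ≤ Real.logb 2 τ / n := by gcongr
  have h7 : ((n:ℝ) * m' - (n:ℝ) * m' / (2*G) - D) / n ≤ ((E:ℕ):ℝ) / n := by gcongr
  have h8 : ((n:ℝ) * m' - (n:ℝ) * m' / (2*G) - D) / n
      = (m':ℝ) - (m':ℝ)/(2*G) - (D:ℝ)/n := by
    field_simp
  have e1 : ((n * m' + 1 : ℕ):ℝ) = (n:ℝ) * m' + 1 := by push_cast; ring
  have hA : Real.logb 2 τ / n ≤ (m':ℝ) + 1/n := by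
    rw [div_le_iff₀ hnpos]
    have e2 : ((m':ℝ) + 1/n) * n = (n:ℝ) * m' + 1 := by field_simp
    rw [e2]
    rw [e1] at hlogub
    linarith
  rw [Real.dist_eq, abs_sub_lt_iff]
  constructor
  · linarith
  · rw [h8] at h7
    linarith
end
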